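/- arXiv:2412.05588 — 7 statements merged into one kernel-verified Lean document; each statement's English description precedes it below -/
import Mathlib

section
/- Let R be a prime ring with involution * such that T(R) is not contained in the center Z(R). If there exists b ∈ R with b ∉ Z(R) such that b·(x + x*) = (x + x*)·b for all x ∈ R, then s·t ∈ Z(R) for all s, t ∈ T(R) (i.e., T(R)² ⊆ Z(R)). -/
/-!
Auxiliary machinery for the proof of Theorem A (iii) ⟹ (v).

Throughout, for an element `c` of a ring with involution, `KP c` says that `c`
commutes with all traces `u + u*`.  The proof splits into the case where the ring
has no 2-torsion (where the hypotheses turn out to be contradictory) and the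
case of characteristic 2, where one shows that the trace set `T(R)` is
commutative, analyzes the centralizer `K = C(T(R))` of the traces, and finally
kills `[pq, x]` for traces `p, q` by a chain of nilpotency arguments.
-/

section Stmt8Aux

set_option linter.unusedSectionVars false

variable {R : Type*} [NonUnitalRing R] [StarRing R]

/-- `KP c` : `c` commutes with all traces. -/
def KP (c : R) : Prop := ∀ u : R, c * (u + star u) = (u + star u) * c

lemma star_tr (u : R) : star (u + star u) = u + star u := by
  rw [star_add, star_star, add_comm]

lemma KP.neg' {c : R} (hc : KP c) : KP (-c) := fun u => by
  rw [neg_mul, hc u, mul_neg]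

lemma KP.mul' {c c' : R} (hc : KP c) (hc' : KP c') : KP (c * c') := fun u => by
  rw [mul_assoc, hc' u, ← mul_assoc, hc u, mul_assoc]

/-- For `c ∈ K`: `c x* - x* c = x c - c x`. -/
lemma KP.star_comm {c : R} (hc : KP c) (z : R) :
    c * star z - star z * c = z * c - c * z := by
  linear_combination (norm := noncomm_ring) hc z

/-- For `c ∈ K` and a trace `t`: `[c,z] t z* = z t [c,z]` (from `[c, z t z*] = 0`). -/
lemma KP.sandwich {c : R} (hc : KP c) (z u : R) :
    (c * z - z * c) * (u + star u) * star z = z * (u + star u) * (c * z - z * c) := by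
  have H1 : c * (z * (u + star u) * star z) = (z * (u + star u) * star z) * c := by
    have h := hc (z * u * star z)
    rw [star_mul, star_mul, star_star] at h
    have e : z * u * star z + z * (star u * star z) = z * (u + star u) * star z := by
      noncomm_ring
    rwa [e] at h
  linear_combination (norm := noncomm_ring)
    H1 - z * (hc u) * star z - z * (u + star u) * (hc.star_comm z)

/-- `K` is a Lie ideal: `[c, r] ∈ K` whenever `c ∈ K`. -/
lemma KP.lie {c : R} (hc : KP c) (r : R) : KP (c * r - r * c) := by
  intro u
  have H1 : c * ((u + star u) * r + star r * (u + star u))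
      = ((u + star u) * r + star r * (u + star u)) * c := by
    have h := hc ((u + star u) * r)
    rwa [star_mul, star_tr] at h
  linear_combination (norm := noncomm_ring)
    (-H1) + (hc u) * r + star r * (hc u) + (hc.star_comm r) * (u + star u)

/-- If `a` commutes with all `[c, z]`, then `[c,z][a,w] = -[a,z][c,w]`. -/
lemma pair_flip {a c : R} (h : ∀ z : R, a * (c * z - z * c) = (c * z - z * c) * a)
    (z w : R) :
    (c * z - z * c) * (a * w - w * a) + (a * z - z * a) * (c * w - w * c) = 0 := by
  linear_combination (norm := noncomm_ring) h (z * w) - (h z) * w - z * (h w)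

/-- Middle-extended version: `[c,z] w [a,y] = -[a,z] w [c,y]`. -/
lemma pair_flip2 {a c : R} (h : ∀ z : R, a * (c * z - z * c) = (c * z - z * c) * a)
    (z w y : R) :
    (c * z - z * c) * w * (a * y - y * a) + (a * z - z * a) * w * (c * y - y * c) = 0 := by
  linear_combination (norm := noncomm_ring) pair_flip h z (w * y) - (pair_flip h z w) * y

/-- Abstract nilpotent sandwich kill. -/
lemma sand1 {R' : Type*} [NonUnitalRing R'] {N M w : R'} (h1 : M * N = N * M) (h2 : N * N = 0)
    (h3 : M * (w * N - N * w) = (w * N - N * w) * M) (h4 : M * M = 0) :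
    N * M * w * (N * M) = 0 := by
  linear_combination (norm := noncomm_ring)
    N * h3 * M + N * h1 * (w * M) + h2 * (M * w * M) + (N * w * N - N * N * w) * h4

/-- Abstract final kill. -/
lemma final1 {R' : Type*} [NonUnitalRing R'] {N M x w : R'} (h1 : N * N = 0)
    (h2 : N * (w * N - N * w) = (w * N - N * w) * N)
    (h3 : (N * w - w * N) * N + (N * x - x * N) * M = 0)
    (h4 : N * M = 0)
    (h5 : N * (x * M - M * x) = (x * M - M * x) * N)
    (h6 : (M * x - x * M) * N = 0) :
    N * w * N = 0 := by
  linear_combination (norm := noncomm_ring)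
    h1 * w + h2 - h3 + h4 * x + h5 - h6 - x * h4

/-- Abstract core of identity E1 (char 2). -/
lemma E1core {R' : Type*} [NonUnitalRing R'] (h2 : ∀ A : R', A + A = 0) {m z z' p q : R'}
    (a1 : m * p * z' = z * p * m) (a2 : m * q * z' = z * q * m)
    (b1 : p * m = m * p) (b2 : q * m = m * q) (e : p * q = q * p)
    (g : p * z' * q + q * z' * p + ((p * q) * z' + z' * (p * q)) = 0)
    (n : (p * q) * z' - z' * (p * q) = z * (p * q) - (p * q) * z) :
    m * ((p * q) * z - z * (p * q)) = 0 := by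
  linear_combination (norm := noncomm_ring)
    a1 * q + a2 * p - z * p * b2 - z * q * b1 - z * e * m - m * g + m * n
      + h2 (m * z' * (p * q)) + h2 (z * p * q * m)

/-- Abstract core of the Γ identity (char 2). -/
lemma Gamcore {R' : Type*} [NonUnitalRing R'] (h2 : ∀ A : R', A + A = 0) {p q w : R'}
    (hk : p * (q * w - w * q) = (q * w - w * q) * p)
    (e : p * q = q * p) :
    p * w * q + q * w * p + ((p * q) * w + w * (p * q)) = 0 := by
  linear_combination (norm := noncomm_ring)
    (-hk) - w * e + h2 ((p * q) * w + w * (p * q))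

/-- The endgame: if the trace centralizer is commutative and E1 holds,
then `ad a = 0`. -/
lemma endgame (hprime : ∀ a b : R, (∀ x : R, a * x * b = 0) → a = 0 ∨ b = 0)
    {a : R} (hKa : KP a)
    (hKC : ∀ c c' : R, KP c → KP c' → c * c' = c' * c)
    (hE1 : ∀ c : R, KP c → ∀ z : R, (c * z - z * c) * (a * z - z * a) = 0) :
    ∀ z : R, a * z - z * a = 0 := by
  have hKN : ∀ z : R, KP (a * z - z * a) := fun z => hKa.lie z
  have hN2 : ∀ z : R, (a * z - z * a) * (a * z - z * a) = 0 := fun z => hE1 a hKa z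
  have hE1' : ∀ c : R, KP c → ∀ u v : R,
      (c * u - u * c) * (a * v - v * a) + (c * v - v * c) * (a * u - u * a) = 0 := by
    intro c hc u v
    linear_combination (norm := noncomm_ring)
      hE1 c hc (u + v) - hE1 c hc u - hE1 c hc v
  have hKflip : ∀ z w : R, KP (w * (a * z - z * a) - (a * z - z * a) * w) := by
    intro z w
    have h := ((hKN z).lie w).neg'
    rwa [neg_sub] at h
  have hρ : ∀ u v : R, (a * u - u * a) * (a * v - v * a) = 0 := by
    intro u v
    have hsand : ∀ w : R, (a * u - u * a) * (a * v - v * a) * w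
        * ((a * u - u * a) * (a * v - v * a)) = 0 := by
      intro w
      exact sand1 (hKC _ _ (hKN v) (hKN u)) (hN2 u)
        (hKC _ _ (hKN v) (hKflip u w)) (hN2 v)
    rcases hprime _ _ hsand with h | h
    · exact h
    · exact h
  intro z
  have hfin : ∀ w : R, (a * z - z * a) * w * (a * z - z * a) = 0 := by
    intro w
    exact final1 (hN2 z)
      (hKC _ _ (hKN z) (hKflip z w))
      (hE1' _ (hKN z) w z)
      (hρ z w)
      (hKC _ _ (hKN z) (hKflip w z))
      (hE1 _ (hKN w) z)
  rcases hprime _ _ hfin with h | h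
  · exact h
  · exact h

/-- The ♠-identity `[b,z] t s = s t [b,z]` for traces `s, t`. -/
lemma spade {b : R} (hKb : KP b) (z u v : R) :
    (b * z - z * b) * (u + star u) * (v + star v)
      = (v + star v) * (u + star u) * (b * z - z * b) := by
  have Hsum := hKb.sandwich (z + (v + star v)) u
  rw [star_add, star_tr] at Hsum
  linear_combination (norm := noncomm_ring)
    Hsum - hKb.sandwich z u
      - (hKb v) * ((u + star u) * (star z + (v + star v)))
      + ((z + (v + star v)) * (u + star u)) * (hKb v)

lemma dz_kill_comm {b : R} (hKb : KP b) (z u v : R) :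
    (b * z - z * b) * ((u + star u) * (v + star v) - (v + star v) * (u + star u)) = 0 := by
  linear_combination (norm := noncomm_ring)
    spade hKb z u v - (v + star v) * ((hKb.lie z) u) - ((hKb.lie z) v) * (u + star u)

/-- Traces commute with each other (given a noncentral trace-centralizing `b`). -/
lemma tr_comm (hprime : ∀ a b : R, (∀ x : R, a * x * b = 0) → a = 0 ∨ b = 0)
    {b : R} (hKb : KP b) {rb : R} (hrb : b * rb ≠ rb * b) (u v : R) :
    (u + star u) * (v + star v) = (v + star v) * (u + star u) := by
  have h2 : ∀ w : R, (b * rb - rb * b) * w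
      * ((u + star u) * (v + star v) - (v + star v) * (u + star u)) = 0 := by
    intro w
    linear_combination (norm := noncomm_ring)
      dz_kill_comm hKb (rb * w) u v - rb * dz_kill_comm hKb w u v
  rcases hprime _ _ h2 with h | h
  · exact absurd (sub_eq_zero.mp h) hrb
  · exact sub_eq_zero.mp h

/-- Torsion dichotomy in a prime ring. -/
lemma tor_dich (hprime : ∀ a b : R, (∀ x : R, a * x * b = 0) → a = 0 ∨ b = 0) :
    (∀ z : R, z + z = 0) ∨ (∀ z : R, z + z = 0 → z = 0) := by
  by_cases hex : ∃ z : R, z ≠ 0 ∧ z + z = 0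
  · obtain ⟨z₀, hz₀ne, hz₀⟩ := hex
    left
    intro w
    have h : ∀ v : R, z₀ * v * (w + w) = 0 := by
      intro v
      have e : z₀ * v * (w + w) = (z₀ + z₀) * v * w := by noncomm_ring
      rw [e, hz₀]
      noncomm_ring
    rcases hprime _ _ h with h' | h'
    · exact absurd h' hz₀ne
    · exact h'
  · right
    intro z hz
    by_contra h0
    exact hex ⟨z, h0, hz⟩

/-- Case of no 2-torsion: the hypotheses are contradictory. -/
lemma tf_case (hprime : ∀ a b : R, (∀ x : R, a * x * b = 0) → a = 0 ∨ b = 0)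
    (hTF : ∀ z : R, z + z = 0 → z = 0)
    {b : R} (hKb : KP b) {rb : R} (hrb : b * rb ≠ rb * b)
    {x₁ r₁ : R} (hx₁ : (x₁ + star x₁) * r₁ ≠ r₁ * (x₁ + star x₁)) : False := by
  have pf2 : ∀ u z w y : R,
      (b * z - z * b) * w * ((u + star u) * y - y * (u + star u))
        + ((u + star u) * z - z * (u + star u)) * w * (b * y - y * b) = 0 := by
    intro u z w y
    exact pair_flip2 (fun z' => ((hKb.lie z') u).symm) z w y
  have hTT : ∀ u z₁ w₁ z₂ w₂ v : R,
      (b * z₁ - z₁ * b) * w₁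
          * (((u + star u) * z₂ - z₂ * (u + star u)) * w₂
              * ((u + star u) * v - v * (u + star u)))
        + (b * z₁ - z₁ * b) * w₁
          * (((u + star u) * z₂ - z₂ * (u + star u)) * w₂
              * ((u + star u) * v - v * (u + star u))) = 0 := by
    intro u z₁ w₁ z₂ w₂ v
    linear_combination (norm := noncomm_ring)
      (pf2 u z₁ w₁ z₂) * (w₂ * ((u + star u) * v - v * (u + star u)))
        - ((u + star u) * z₁ - z₁ * (u + star u)) * w₁ * (pf2 u z₂ w₂ v)
        + pf2 u z₁ (w₁ * (((u + star u) * z₂ - z₂ * (u + star u)) * w₂)) v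
  have hT0 : ∀ u z₁ w₁ z₂ w₂ v : R,
      (b * z₁ - z₁ * b) * w₁
          * (((u + star u) * z₂ - z₂ * (u + star u)) * w₂
              * ((u + star u) * v - v * (u + star u))) = 0 :=
    fun u z₁ w₁ z₂ w₂ v => hTF _ (hTT u z₁ w₁ z₂ w₂ v)
  have hk1 : ∀ u z₂ w₂ v : R,
      ((u + star u) * z₂ - z₂ * (u + star u)) * w₂
        * ((u + star u) * v - v * (u + star u)) = 0 := by
    intro u z₂ w₂ v
    rcases hprime _ _ (fun w₁ => hT0 u rb w₁ z₂ w₂ v) with h | h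
    · exact absurd (sub_eq_zero.mp h) hrb
    · exact h
  have hk2 : ∀ u z : R, (u + star u) * z - z * (u + star u) = 0 := by
    intro u z
    rcases hprime _ _ (fun w => hk1 u z w z) with h | h
    · exact h
    · exact h
  exact hx₁ (sub_eq_zero.mp (hk2 x₁ r₁))

end Stmt8Aux

/-- Theorem A, (iii) ⟹ (v) (with `b ∈ R`): Let `R` be a prime ring with involution `*`
such that `T(R) ⊄ Z(R)`. If some noncentral `b ∈ R` centralizes `T(R)`, then
`T(R)² ⊆ Z(R)`. -/
theorem stmt_8 {R : Type*} [NonUnitalRing R] [StarRing R]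
    (hprime : ∀ a b : R, (∀ x : R, a * x * b = 0) → a = 0 ∨ b = 0)
    (hTnoncentral : ∃ x : R, ∃ r : R, (x + star x) * r ≠ r * (x + star x))
    (b : R) (hb : ∃ r : R, b * r ≠ r * b)
    (hcomm : ∀ x : R, b * (x + star x) = (x + star x) * b) :
    ∀ x y r : R, ((x + star x) * (y + star y)) * r = r * ((x + star x) * (y + star y)) := by
  obtain ⟨x₁, r₁, hx₁⟩ := hTnoncentral
  obtain ⟨rb, hrb⟩ := hb
  have hKb : KP b := fun u => hcomm u
  intro x y r
  rcases tor_dich hprime with h2 | hTF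
  · -- characteristic 2 case
    -- trace commutativity and K-facts
    have hStr : ∀ u v : R, (u + star u) * (v + star v) = (v + star v) * (u + star u) :=
      fun u v => tr_comm hprime hKb hrb u v
    have hKtr : ∀ v : R, KP (v + star v) := fun v u => hStr v u
    have hKp : KP (x + star x) := hKtr x
    have hKq : KP (y + star y) := hKtr y
    have hKpq : KP ((x + star x) * (y + star y)) := hKp.mul' hKq
    have hpq : (x + star x) * (y + star y) = (y + star y) * (x + star x) := hStr x y
    -- the Γ identity
    have hGam : ∀ w : R,
        (x + star x) * w * (y + star y) + (y + star y) * w * (x + star x)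
          + (((x + star x) * (y + star y)) * w + w * ((x + star x) * (y + star y))) = 0 := by
      intro w
      exact Gamcore h2 ((hKq.lie w) x).symm hpq
    -- identity E1 : [c,z]·[pq,z] = 0 for c ∈ K
    have hE1 : ∀ c : R, KP c → ∀ z : R,
        (c * z - z * c) * (((x + star x) * (y + star y)) * z
          - z * ((x + star x) * (y + star y))) = 0 := by
      intro c hc z
      exact E1core h2 (hc.sandwich z x) (hc.sandwich z y)
        ((hc.lie z) x).symm ((hc.lie z) y).symm hpq
        (hGam (star z)) (hKpq.star_comm z)
    by_cases hKC : ∀ c c' : R, KP c → KP c' → c * c' = c' * c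
    · -- K commutative: endgame
      have h := endgame hprime hKpq hKC hE1 r
      exact sub_eq_zero.mp h
    · -- K non-commutative: direct kill
      push_neg at hKC
      obtain ⟨c, c', hc, hc', hne⟩ := hKC
      have haC : ∀ c₀ : R, KP c₀ →
          ((x + star x) * (y + star y)) * c₀ = c₀ * ((x + star x) * (y + star y)) := by
        intro c₀ hc₀
        rw [mul_assoc, ← hc₀ y, ← mul_assoc, ← hc₀ x, mul_assoc]
      have hkill : ∀ w : R,
          (((x + star x) * (y + star y)) * r - r * ((x + star x) * (y + star y))) * w
            * (c * c' - c' * c) = 0 := by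
        intro w
        linear_combination (norm := noncomm_ring)
          pair_flip2 (a := (x + star x) * (y + star y)) (c := c)
              (fun z => haC _ (hc.lie z)) r w c'
            - (c * r - r * c) * w * (haC c' hc')
      rcases hprime _ _ hkill with h | h
      · exact sub_eq_zero.mp h
      · exact absurd (sub_eq_zero.mp h) hne
  · -- no 2-torsion: contradiction
    exact absurd (tf_case hprime hTF hKb hrb hx₁) (fun hF => hF)
end

section
/- Let R be a division ring with involution *, and let M be a subring of R with M* = M, M not contained in the center Z(R), and u·M·u⁻¹ ⊆ M for every nonzero u ∈ R. If (x + x*)·(y + y*) = (y + y*)·(x + x*) for all x, y ∈ M, then s·t ∈ Z(R) for all s, t ∈ T(R) (i.e., T(R)² ⊆ Z(R)). -/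
namespace Stmt12Aux

set_option linter.unusedSectionVars false
set_option maxHeartbeats 1000000

variable {R : Type*} [DivisionRing R] [StarRing R]


lemma inv_comm {y z : R} (h : z * y = y * z) : z * y⁻¹ = y⁻¹ * z := by
  have h' : Commute z y := h
  exact h'.inv_right₀

/-- Step 1: a fraction representation for elements not commuting with a fixed `a ∈ M`. -/
lemma frac (M : Subring R) (hMinv : ∀ u : R, u ≠ 0 → ∀ m ∈ M, u * m * u⁻¹ ∈ M)
    {a : R} (ha : a ∈ M) {x : R} (hx : ¬ x * a = a * x) :
    ∃ d e : R, d ∈ M ∧ e ∈ M ∧ d ≠ 0 ∧ d * x = e := by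
  have hx0 : x ≠ 0 := by rintro rfl; simp at hx
  have hx1 : (1 : R) + x ≠ 0 := by
    intro h1
    have hxe : x = -1 := eq_neg_of_add_eq_zero_right h1
    apply hx
    rw [hxe]; simp
  set p := x * a * x⁻¹ with hp
  have hpM : p ∈ M := hMinv x hx0 a ha
  set q := (1 + x) * a * (1 + x)⁻¹ with hqd
  have hqM : q ∈ M := hMinv _ hx1 a ha
  have hpx : p * x = x * a := by
    rw [hp, mul_assoc, inv_mul_cancel₀ hx0, mul_one]
  have hqx : q * (1 + x) = (1 + x) * a := by
    rw [hqd, mul_assoc, inv_mul_cancel₀ hx1, mul_one]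
  have e1 : q + q * x = a + x * a := by
    have h' := hqx
    rw [mul_add, mul_one, add_mul, one_mul] at h'
    exact h'
  have key : (p - q) * x = q - a := by
    have expand : (p - q) * x = p * x - q * x := by noncomm_ring
    rw [expand, hpx]
    have hq2 : q * x = a + x * a - q := eq_sub_of_add_eq' e1
    rw [hq2]; abel
  refine ⟨p - q, q - a, M.sub_mem hpM hqM, M.sub_mem hqM ha, ?_, key⟩
  intro h0
  rw [h0, zero_mul] at key
  have hqa : q = a := sub_eq_zero.mp key.symm
  have hpq : p = q := sub_eq_zero.mp h0
  apply hx
  rw [← hpx, hpq, hqa]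

/-- anything commuting with all of M commutes with all of R. -/
lemma central_of_comm_M (M : Subring R)
    (hMinv : ∀ u : R, u ≠ 0 → ∀ m ∈ M, u * m * u⁻¹ ∈ M)
    {a b : R} (ha : a ∈ M) (hab : ¬ b * a = a * b)
    {z : R} (hz : ∀ m ∈ M, z * m = m * z) : ∀ w : R, z * w = w * z := by
  have key : ∀ w : R, ¬ w * a = a * w → z * w = w * z := by
    intro w hw
    obtain ⟨d, e, hdM, heM, hd0, hde⟩ := frac M hMinv ha hw
    have h1 : d * (z * w) = d * (w * z) := by
      calc d * (z * w) = (d * z) * w := by rw [mul_assoc]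
        _ = (z * d) * w := by rw [hz d hdM]
        _ = z * (d * w) := by rw [mul_assoc]
        _ = z * e := by rw [hde]
        _ = e * z := by rw [hz e heM]
        _ = (d * w) * z := by rw [hde]
        _ = d * (w * z) := by rw [mul_assoc]
    exact mul_left_cancel₀ hd0 h1
  intro w
  by_cases hw : w * a = a * w
  · have hwb : ¬ (w + b) * a = a * (w + b) := by
      intro hcon
      apply hab
      rw [add_mul, mul_add, hw] at hcon
      exact add_left_cancel hcon
    have h1 := key _ hwb
    have h2 := key _ hab
    have h3 : z * w + z * b = w * z + b * z := by
      have := h1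
      rw [mul_add, add_mul] at this
      exact this
    rw [h2] at h3
    exact add_right_cancel h3
  · exact key w hw



/-- The fundamental identity: for t a trace of M, [t,[t,m]] = 0 for all m ∈ M. -/
lemma AM (M : Subring R)
    (hMstar : ∀ x ∈ M, star x ∈ M)
    (h : ∀ x ∈ M, ∀ y ∈ M,
      (x + star x) * (y + star y) = (y + star y) * (x + star x))
    {w m : R} (hw : w ∈ M) (hm : m ∈ M) :
    (w + star w) * ((w + star w) * m - m * (w + star w))
      = ((w + star w) * m - m * (w + star w)) * (w + star w) := by
  set t := w + star w with htd
  have hts : star t = t := by rw [htd, star_add, star_star, add_comm]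
  have htM : t ∈ M := M.add_mem hw (hMstar w hw)
  have htmM : t * m ∈ M := M.mul_mem htM hm
  have h1 : t * (m + star m) = (m + star m) * t := h w hw m hm
  have h2 : t * (t * m + star m * t) = (t * m + star m * t) * t := by
    have h2' := h w hw (t * m) htmM
    rwa [star_mul, hts] at h2'
  have key : t * (t * m - m * t) - (t * m - m * t) * t
      = (t * (t * m + star m * t) - (t * m + star m * t) * t)
        - (t * (m + star m) - (m + star m) * t) * t := by noncomm_ring
  rw [sub_eq_zero.mpr h1, sub_eq_zero.mpr h2, zero_mul, sub_zero] at key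
  exact sub_eq_zero.mp key

/-- Engel trick: if a trace of M fails to commute with some element of M, then char = 2. -/
lemma engel_two (M : Subring R)
    (hMstar : ∀ x ∈ M, star x ∈ M)
    (hMinv : ∀ u : R, u ≠ 0 → ∀ m ∈ M, u * m * u⁻¹ ∈ M)
    (h : ∀ x ∈ M, ∀ y ∈ M,
      (x + star x) * (y + star y) = (y + star y) * (x + star x))
    {w m₀ : R} (hw : w ∈ M) (hm₀ : m₀ ∈ M)
    (hne : ¬ (w + star w) * m₀ = m₀ * (w + star w)) : (2 : R) = 0 := by
  set t := w + star w with htd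
  set c := t * m₀ - m₀ * t with hcd
  have hc0 : c ≠ 0 := sub_ne_zero.mpr hne
  have hAM : ∀ m ∈ M, t * (t * m - m * t) = (t * m - m * t) * t :=
    fun m hm => AM M hMstar h hw hm
  have htc : t * c = c * t := by rw [hcd]; exact hAM m₀ hm₀
  have htci : t * c⁻¹ = c⁻¹ * t := inv_comm htc
  have hpull : ∀ Z : R, t * (c⁻¹ * Z) = c⁻¹ * (t * Z) := by
    intro Z; rw [← mul_assoc, htci, mul_assoc]
  set m₁ := c * m₀ * c⁻¹ with hm₁d
  have hm₁M : m₁ ∈ M := hMinv c hc0 m₀ hm₀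
  have hswap : m₀ * c⁻¹ = c⁻¹ * m₁ := by
    rw [hm₁d, ← mul_assoc, ← mul_assoc, inv_mul_cancel₀ hc0, one_mul]
  set X := m₁ * m₀ with hXd
  have hXM : X ∈ M := M.mul_mem hm₁M hm₀
  set v := c⁻¹ * m₀ with hvd
  have hdv : t * v - v * t = 1 := by
    calc t * (c⁻¹ * m₀) - c⁻¹ * m₀ * t = c⁻¹ * (t * m₀) - c⁻¹ * (m₀ * t) := by
          rw [hpull m₀, mul_assoc]
      _ = c⁻¹ * (t * m₀ - m₀ * t) := by rw [mul_sub]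
      _ = c⁻¹ * c := by rw [← hcd]
      _ = 1 := inv_mul_cancel₀ hc0
  have hvv : v * v = c⁻¹ * (c⁻¹ * X) := by
    calc (c⁻¹ * m₀) * (c⁻¹ * m₀) = c⁻¹ * ((m₀ * c⁻¹) * m₀) := by
          rw [mul_assoc, ← mul_assoc m₀ c⁻¹ m₀]
      _ = c⁻¹ * ((c⁻¹ * m₁) * m₀) := by rw [hswap]
      _ = c⁻¹ * (c⁻¹ * (m₁ * m₀)) := by rw [mul_assoc]
  have hd1 : t * (v * v) - (v * v) * t = v + v := by
    have key : t * (v * v) - (v * v) * t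
        = (t * v - v * t) * v + v * (t * v - v * t) := by noncomm_ring
    rw [hdv, one_mul, mul_one] at key
    exact key
  have hd2 : t * (v + v) - (v + v) * t = 2 := by
    have key : t * (v + v) - (v + v) * t = (t * v - v * t) + (t * v - v * t) := by noncomm_ring
    rw [hdv] at key
    rw [key]; norm_num
  have hdpull : ∀ Z : R, t * (c⁻¹ * (c⁻¹ * Z)) - c⁻¹ * (c⁻¹ * Z) * t
      = c⁻¹ * (c⁻¹ * (t * Z - Z * t)) := by
    intro Z
    calc t * (c⁻¹ * (c⁻¹ * Z)) - c⁻¹ * (c⁻¹ * Z) * t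
        = c⁻¹ * (c⁻¹ * (t * Z)) - c⁻¹ * (c⁻¹ * (Z * t)) := by
          rw [hpull, hpull, mul_assoc, mul_assoc]
      _ = c⁻¹ * (c⁻¹ * (t * Z - Z * t)) := by rw [mul_sub, mul_sub]
  have hzero : t * (v + v) - (v + v) * t = 0 := by
    rw [← hd1, hvv, hdpull X, hdpull (t * X - X * t), sub_eq_zero.mpr (hAM X hXM),
      mul_zero, mul_zero]
  rw [hzero] at hd2
  exact hd2.symm



/-- the sandwich formula for traces of fractions with symmetric denominator. -/
lemma sandwich {H e₁ x : R} (hH0 : H ≠ 0) (hHs : star H = H) (hHx : H * x = e₁) :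
    x + star x = H⁻¹ * (e₁ * H + star (e₁ * H)) * H⁻¹ := by
  have hx : x = H⁻¹ * e₁ := by rw [← hHx, inv_mul_cancel_left₀ hH0]
  have hsx : star x = star e₁ * H⁻¹ := by rw [hx, star_mul, star_inv₀, hHs]
  have hse : star (e₁ * H) = H * star e₁ := by rw [star_mul, hHs]
  rw [hse, hsx, hx, mul_add, add_mul]
  congr 1
  · symm
    calc H⁻¹ * (e₁ * H) * H⁻¹ = H⁻¹ * e₁ * (H * H⁻¹) := by noncomm_ring
      _ = H⁻¹ * e₁ := by rw [mul_inv_cancel₀ hH0, mul_one]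
  · symm
    calc H⁻¹ * (H * star e₁) * H⁻¹ = (H⁻¹ * H) * (star e₁ * H⁻¹) := by noncomm_ring
      _ = star e₁ * H⁻¹ := by rw [inv_mul_cancel₀ hH0, one_mul]

/-- a common symmetric denominator in `M` for two "good" elements. -/
lemma comden (M : Subring R)
    (hMstar : ∀ x ∈ M, star x ∈ M)
    (hMinv : ∀ u : R, u ≠ 0 → ∀ m ∈ M, u * m * u⁻¹ ∈ M)
    {a : R} (ha : a ∈ M) {x y : R}
    (hx : ¬ x * a = a * x) (hy : ¬ y * a = a * y) :
    ∃ H ex ey : R, H ∈ M ∧ star H = H ∧ H ≠ 0 ∧ ex ∈ M ∧ ey ∈ M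
      ∧ H * x = ex ∧ H * y = ey := by
  obtain ⟨d, e, hdM, heM, hd0, hde⟩ := frac M hMinv ha hx
  obtain ⟨f, g, hfM, hgM, hf0, hfg⟩ := frac M hMinv ha hy
  set D := d * f with hDd
  have hD0 : D ≠ 0 := mul_ne_zero hd0 hf0
  have hDM : D ∈ M := M.mul_mem hdM hfM
  have hDfact : D = (d * f * d⁻¹) * d := by
    rw [mul_assoc, inv_mul_cancel₀ hd0, mul_one]
  have hDx : D * x = (d * f * d⁻¹) * e := by
    rw [hDfact, mul_assoc, hde]
  have hDxM : (d * f * d⁻¹) * e ∈ M := M.mul_mem (hMinv d hd0 f hfM) heM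
  have hDy : D * y = d * g := by rw [hDd, mul_assoc, hfg]
  have hDyM : d * g ∈ M := M.mul_mem hdM hgM
  refine ⟨star D * D, star D * ((d * f * d⁻¹) * e), star D * (d * g),
    M.mul_mem (hMstar D hDM) hDM, ?_, ?_, M.mul_mem (hMstar D hDM) hDxM,
    M.mul_mem (hMstar D hDM) hDyM, ?_, ?_⟩
  · rw [star_mul, star_star]
  · exact mul_ne_zero (star_ne_zero.mpr hD0) hD0
  · rw [mul_assoc, hDx]
  · rw [mul_assoc, hDy]

/-- traces of M commute through H², H symmetric in M. -/
lemma key_comm2 (M : Subring R)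
    (hMstar : ∀ x ∈ M, star x ∈ M)
    (h : ∀ x ∈ M, ∀ y ∈ M,
      (x + star x) * (y + star y) = (y + star y) * (x + star x))
    {H : R} (hHM : H ∈ M) (hHs : star H = H) (hH0 : H ≠ 0)
    {m n : R} (hm : m ∈ M) (hn : n ∈ M) :
    (m + star m) * (H * H) * (n + star n) = (n + star n) * (H * H) * (m + star m) := by
  set t := m + star m with htd
  set u := n + star n with hud
  have e1 : H * m * H + star (H * m * H) = H * t * H := by
    have : star (H * m * H) = H * star m * H := by
      simp only [star_mul, hHs, mul_assoc]
    rw [this, htd]; noncomm_ring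
  have e2 : H * n * H + star (H * n * H) = H * u * H := by
    have : star (H * n * H) = H * star n * H := by
      simp only [star_mul, hHs, mul_assoc]
    rw [this, hud]; noncomm_ring
  have h1 := h (H * m * H) (M.mul_mem (M.mul_mem hHM hm) hHM)
    (H * n * H) (M.mul_mem (M.mul_mem hHM hn) hHM)
  rw [e1, e2] at h1
  have h2 : H * (t * (H * H) * u) * H = H * (u * (H * H) * t) * H := by
    calc H * (t * (H * H) * u) * H = (H * t * H) * (H * u * H) := by noncomm_ring
      _ = (H * u * H) * (H * t * H) := h1
      _ = H * (u * (H * H) * t) * H := by noncomm_ring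
  exact mul_left_cancel₀ hH0 (mul_right_cancel₀ hH0 h2)

/-- char 2: squares of traces of M are central. -/
lemma sq_central2 (M : Subring R)
    (hMstar : ∀ x ∈ M, star x ∈ M)
    (hMinv : ∀ u : R, u ≠ 0 → ∀ m ∈ M, u * m * u⁻¹ ∈ M)
    (h : ∀ x ∈ M, ∀ y ∈ M,
      (x + star x) * (y + star y) = (y + star y) * (x + star x))
    (h2 : (2 : R) = 0)
    {a b : R} (ha : a ∈ M) (hab : ¬ b * a = a * b)
    {m : R} (hm : m ∈ M) :
    ∀ v : R, ((m + star m) * (m + star m)) * v = v * ((m + star m) * (m + star m)) := by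
  set t := m + star m with htd
  have hz : ∀ n ∈ M, (t * t) * n = n * (t * t) := by
    intro n hn
    have h1 := AM M hMstar h hm hn
    have key : (t * t) * n - n * (t * t)
        = (t * (t * n - n * t) - (t * n - n * t) * t) + 2 * (t * n * t - n * (t * t)) := by
      noncomm_ring
    rw [sub_eq_zero.mpr h1, h2, zero_add, zero_mul] at key
    exact sub_eq_zero.mp key
  exact central_of_comm_M M hMinv ha hab hz

/-- char 2: traces of M commute through H⁻², H symmetric in M. -/
lemma key_comm2_inv (M : Subring R)
    (hMstar : ∀ x ∈ M, star x ∈ M)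
    (hMinv : ∀ u : R, u ≠ 0 → ∀ m ∈ M, u * m * u⁻¹ ∈ M)
    (h : ∀ x ∈ M, ∀ y ∈ M,
      (x + star x) * (y + star y) = (y + star y) * (x + star x))
    (h2 : (2 : R) = 0)
    {a b : R} (ha : a ∈ M) (hab : ¬ b * a = a * b)
    {H : R} (hHM : H ∈ M) (hHs : star H = H) (hH0 : H ≠ 0)
    {m n : R} (hm : m ∈ M) (hn : n ∈ M) :
    (m + star m) * (H⁻¹ * H⁻¹) * (n + star n)
      = (n + star n) * (H⁻¹ * H⁻¹) * (m + star m) := by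
  set t := m + star m with htd
  set u := n + star n with hud
  rcases eq_or_ne t 0 with ht0 | ht0
  · rw [ht0, zero_mul, zero_mul, mul_zero]
  rcases eq_or_ne u 0 with hu0 | hu0
  · rw [hu0, zero_mul, zero_mul, mul_zero]
  have hsqt : ∀ v : R, (t * t) * v = v * (t * t) :=
    sq_central2 M hMstar hMinv h h2 ha hab hm
  have hsqu : ∀ v : R, (u * u) * v = v * (u * u) :=
    sq_central2 M hMstar hMinv h h2 ha hab hn
  have htt0 : t * t ≠ 0 := mul_ne_zero ht0 ht0
  have huu0 : u * u ≠ 0 := mul_ne_zero hu0 hu0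
  have h1 : t * (H * H) * u = u * (H * H) * t := key_comm2 M hMstar h hHM hHs hH0 hm hn
  have hti : t⁻¹ = (t * t)⁻¹ * t := by
    refine (inv_eq_of_mul_eq_one_right ?_)
    have hcomm : t * (t * t)⁻¹ = (t * t)⁻¹ * t := inv_comm (hsqt t).symm
    calc t * ((t * t)⁻¹ * t) = (t * (t * t)⁻¹) * t := by rw [mul_assoc]
      _ = ((t * t)⁻¹ * t) * t := by rw [hcomm]
      _ = (t * t)⁻¹ * (t * t) := by rw [mul_assoc]
      _ = 1 := inv_mul_cancel₀ htt0
  have hui : u⁻¹ = (u * u)⁻¹ * u := by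
    refine (inv_eq_of_mul_eq_one_right ?_)
    have hcomm : u * (u * u)⁻¹ = (u * u)⁻¹ * u := inv_comm (hsqu u).symm
    calc u * ((u * u)⁻¹ * u) = (u * (u * u)⁻¹) * u := by rw [mul_assoc]
      _ = ((u * u)⁻¹ * u) * u := by rw [hcomm]
      _ = (u * u)⁻¹ * (u * u) := by rw [mul_assoc]
      _ = 1 := inv_mul_cancel₀ huu0
  have hzt : ∀ v : R, (t * t)⁻¹ * v = v * (t * t)⁻¹ := by
    intro v; exact (inv_comm (hsqt v).symm).symm
  have hzu : ∀ v : R, (u * u)⁻¹ * v = v * (u * u)⁻¹ := by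
    intro v; exact (inv_comm (hsqu v).symm).symm
  have h4 : (t * (H * H) * u)⁻¹ = (u * (H * H) * t)⁻¹ := by rw [h1]
  simp only [mul_inv_rev] at h4
  rw [hti, hui] at h4
  simp only [mul_assoc] at h4
  have hmove_t : ∀ w Z : R, w * ((t * t)⁻¹ * Z) = (t * t)⁻¹ * (w * Z) := by
    intro w Z; rw [← mul_assoc, ← hzt w, mul_assoc]
  have hmove_u : ∀ w Z : R, w * ((u * u)⁻¹ * Z) = (u * u)⁻¹ * (w * Z) := by
    intro w Z; rw [← mul_assoc, ← hzu w, mul_assoc]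
  simp only [hmove_t] at h4
  simp only [hmove_u] at h4
  have h5 := mul_left_cancel₀ (inv_ne_zero huu0) h4
  have h6 := mul_left_cancel₀ (inv_ne_zero htt0) h5
  simp only [mul_assoc]
  exact h6.symm

/-- char 2: traces of two good elements commute. -/
lemma comm_traces_good (M : Subring R)
    (hMstar : ∀ x ∈ M, star x ∈ M)
    (hMinv : ∀ u : R, u ≠ 0 → ∀ m ∈ M, u * m * u⁻¹ ∈ M)
    (h : ∀ x ∈ M, ∀ y ∈ M,
      (x + star x) * (y + star y) = (y + star y) * (x + star x))
    (h2 : (2 : R) = 0)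
    {a b : R} (ha : a ∈ M) (hab : ¬ b * a = a * b)
    {x y : R} (hx : ¬ x * a = a * x) (hy : ¬ y * a = a * y) :
    (x + star x) * (y + star y) = (y + star y) * (x + star x) := by
  obtain ⟨H, ex, ey, hHM, hHs, hH0, hexM, heyM, hHx, hHy⟩ := comden M hMstar hMinv ha hx hy
  have e1 := sandwich hH0 hHs hHx
  have e2 := sandwich hH0 hHs hHy
  have h3 := key_comm2_inv M hMstar hMinv h h2 ha hab hHM hHs hH0
      (M.mul_mem hexM hHM) (M.mul_mem heyM hHM)
  set t := ex * H + star (ex * H) with htd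
  set u := ey * H + star (ey * H) with hud
  rw [e1, e2]
  calc H⁻¹ * t * H⁻¹ * (H⁻¹ * u * H⁻¹)
      = H⁻¹ * (t * (H⁻¹ * H⁻¹) * u) * H⁻¹ := by noncomm_ring
    _ = H⁻¹ * (u * (H⁻¹ * H⁻¹) * t) * H⁻¹ := by rw [h3]
    _ = H⁻¹ * u * H⁻¹ * (H⁻¹ * t * H⁻¹) := by noncomm_ring

/-- char 2: all traces of R commute. -/
lemma trace_comm2 (M : Subring R)
    (hMstar : ∀ x ∈ M, star x ∈ M)
    (hMnc : ∃ m ∈ M, ∃ r : R, m * r ≠ r * m)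
    (hMinv : ∀ u : R, u ≠ 0 → ∀ m ∈ M, u * m * u⁻¹ ∈ M)
    (h : ∀ x ∈ M, ∀ y ∈ M,
      (x + star x) * (y + star y) = (y + star y) * (x + star x))
    (h2 : (2 : R) = 0) :
    ∀ x y : R, (x + star x) * (y + star y) = (y + star y) * (x + star x) := by
  obtain ⟨a, haM, b, hab⟩ := hMnc
  have hbgood : ¬ b * a = a * b := fun hh => hab hh.symm
  have hbad : ∀ x : R, (x * a = a * x) → ¬ (x + b) * a = a * (x + b) := by
    intro x hx hcon
    apply hbgood
    rw [add_mul, mul_add, hx] at hcon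
    exact add_left_cancel hcon
  have addself : ∀ z : R, z + z = 0 := by
    intro z
    calc z + z = 2 * z := (two_mul z).symm
      _ = 0 := by rw [h2, zero_mul]
  have tsum : ∀ x : R, x + star x = ((x + b) + star (x + b)) + (b + star b) := by
    intro x
    have e : ((x + b) + star (x + b)) + (b + star b)
        = (x + star x) + ((b + b) + (star b + star b)) := by
      rw [star_add]; abel
    rw [e, addself b, addself (star b), add_zero, add_zero]
  have key1 : ∀ x y : R, ¬ x * a = a * x →
      (x + star x) * (y + star y) = (y + star y) * (x + star x) := by
    intro x y hx
    by_cases hy : y * a = a * y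
    · have hA := comm_traces_good M hMstar hMinv h h2 haM hbgood hx (hbad y hy)
      have hB := comm_traces_good M hMstar hMinv h h2 haM hbgood hx hbgood
      rw [tsum y]
      calc (x + star x) * (y + b + star (y + b) + (b + star b))
          = (x + star x) * (y + b + star (y + b)) + (x + star x) * (b + star b) := by
            noncomm_ring
        _ = (y + b + star (y + b)) * (x + star x) + (b + star b) * (x + star x) := by
            rw [hA, hB]
        _ = (y + b + star (y + b) + (b + star b)) * (x + star x) := by noncomm_ring
    · exact comm_traces_good M hMstar hMinv h h2 haM hbgood hx hy
  intro x y
  by_cases hx : x * a = a * x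
  · rw [tsum x]
    calc (x + b + star (x + b) + (b + star b)) * (y + star y)
        = (x + b + star (x + b)) * (y + star y) + (b + star b) * (y + star y) := by
          noncomm_ring
      _ = (y + star y) * (x + b + star (x + b)) + (y + star y) * (b + star b) := by
          rw [key1 (x + b) y (hbad x hx), key1 b y hbgood]
      _ = (y + star y) * (x + b + star (x + b) + (b + star b)) := by noncomm_ring
  · exact key1 x y hx

lemma cen_mul {z w : R} (hz : ∀ v, z * v = v * z) (hw : ∀ v, w * v = v * w) :
    ∀ v, (z * w) * v = v * (z * w) := by
  intro v
  rw [mul_assoc, hw v, ← mul_assoc, hz v, mul_assoc]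

lemma cen_inv {z : R} (hz : ∀ v, z * v = v * z) : ∀ v, z⁻¹ * v = v * z⁻¹ := by
  intro v
  exact (inv_comm (hz v).symm).symm

/-- char ≠ 2: all traces of R are central. -/
lemma trace_central_ne2 (M : Subring R)
    (hMstar : ∀ x ∈ M, star x ∈ M)
    (hMnc : ∃ m ∈ M, ∃ r : R, m * r ≠ r * m)
    (hMinv : ∀ u : R, u ≠ 0 → ∀ m ∈ M, u * m * u⁻¹ ∈ M)
    (h : ∀ x ∈ M, ∀ y ∈ M,
      (x + star x) * (y + star y) = (y + star y) * (x + star x))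
    (h2 : (2 : R) ≠ 0) :
    ∀ x : R, ∀ v : R, (x + star x) * v = v * (x + star x) := by
  obtain ⟨a, haM, b, hab⟩ := hMnc
  have hbgood : ¬ b * a = a * b := fun hh => hab hh.symm
  have htr : ∀ w ∈ M, ∀ v : R, (w + star w) * v = v * (w + star w) := by
    intro w hw
    have hcomM : ∀ m ∈ M, (w + star w) * m = m * (w + star w) := by
      intro m hm
      by_contra hne
      exact h2 (engel_two M hMstar hMinv h hw hm hne)
    exact central_of_comm_M M hMinv haM hbgood hcomM
  have hsym : ∀ m ∈ M, star m = m → ∀ v : R, m * v = v * m := by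
    intro m hm hsm v
    have h1 := htr m hm v
    rw [hsm] at h1
    have h3 : (2 : R) * (m * v) = (2 : R) * (v * m) := by
      calc (2 : R) * (m * v) = (m + m) * v := by rw [← mul_assoc, two_mul]
        _ = v * (m + m) := h1
        _ = (2 : R) * (v * m) := by rw [mul_add, two_mul]
    exact mul_left_cancel₀ h2 h3
  have good : ∀ x : R, ¬ x * a = a * x → ∀ v : R, (x + star x) * v = v * (x + star x) := by
    intro x hx
    obtain ⟨d, e, hdM, heM, hd0, hde⟩ := frac M hMinv haM hx
    have hH0 : star d * d ≠ 0 := mul_ne_zero (star_ne_zero.mpr hd0) hd0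
    have hHs : star (star d * d) = star d * d := by rw [star_mul, star_star]
    have hHM : star d * d ∈ M := M.mul_mem (hMstar d hdM) hdM
    have hHx : (star d * d) * x = star d * e := by rw [mul_assoc, hde]
    have he₁M : star d * e ∈ M := M.mul_mem (hMstar d hdM) heM
    have hs := sandwich hH0 hHs hHx
    rw [hs]
    have c1 : ∀ v, (star d * e * (star d * d) + star (star d * e * (star d * d))) * v
        = v * (star d * e * (star d * d) + star (star d * e * (star d * d))) :=
      htr _ (M.mul_mem he₁M hHM)
    have c2 : ∀ v, (star d * d) * v = v * (star d * d) := hsym _ hHM hHs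
    have c2i := cen_inv c2
    exact cen_mul (cen_mul c2i c1) c2i
  intro x
  by_cases hx : x * a = a * x
  · have hbad : ¬ (x + b) * a = a * (x + b) := by
      intro hcon
      apply hbgood
      rw [add_mul, mul_add, hx] at hcon
      exact add_left_cancel hcon
    have e : x + star x = ((x + b) + star (x + b)) - (b + star b) := by
      rw [star_add]; abel
    intro v
    rw [e, sub_mul, mul_sub, good (x + b) hbad v, good b hbgood v]
  · exact good x hx

/-- char 2 main argument at the level of R. -/
lemma char2_main (h2 : (2 : R) = 0)
    (hT : ∀ x y : R, (x + star x) * (y + star y) = (y + star y) * (x + star x)) :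
    ∀ x y r : R, ((x + star x) * (y + star y)) * r = r * ((x + star x) * (y + star y)) := by
  have addself : ∀ z : R, z + z = 0 := by
    intro z
    calc z + z = 2 * z := (two_mul z).symm
      _ = 0 := by rw [h2, zero_mul]
  have negid : ∀ z : R, -z = z := fun z => neg_eq_of_add_eq_zero_left (addself z)
  have hstar : ∀ z : R, star (z + star z) = z + star z := by
    intro z; rw [star_add, star_star, add_comm]
  have f8 : ∀ w x z : R,
      (z + star z) * ((w + star w) * x - x * (w + star w))
        = ((w + star w) * x - x * (w + star w)) * (z + star z) := by
    intro w x z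
    have e : (w + star w) * x - x * (w + star w)
        = ((w + star w) * x + star ((w + star w) * x)) - (x + star x) * (w + star w) := by
      rw [star_mul, hstar w]; noncomm_ring
    have c1 := hT z ((w + star w) * x)
    have c2 : (z + star z) * ((x + star x) * (w + star w))
        = ((x + star x) * (w + star w)) * (z + star z) := by
      calc (z + star z) * ((x + star x) * (w + star w))
          = ((z + star z) * (x + star x)) * (w + star w) := (mul_assoc _ _ _).symm
        _ = ((x + star x) * (z + star z)) * (w + star w) := by rw [hT z x]
        _ = (x + star x) * ((z + star z) * (w + star w)) := mul_assoc _ _ _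
        _ = (x + star x) * ((w + star w) * (z + star z)) := by rw [hT z w]
        _ = ((x + star x) * (w + star w)) * (z + star z) := (mul_assoc _ _ _).symm
    rw [e, mul_sub, sub_mul, c1, c2]
  intro x y r
  by_contra hq0
  set s := x + star x with hsd
  set t := y + star y with htd
  set c := s * t with hcd
  set q := c * r - r * c with hqd
  have hq' : q ≠ 0 := sub_ne_zero.mpr hq0
  have hss : star s = s := by rw [hsd]; exact hstar x
  have hstt : star t = t := by rw [htd]; exact hstar y
  have hts : t * s = s * t := by rw [hsd, htd]; exact hT y x
  have czc : ∀ z : R, (z + star z) * c = c * (z + star z) := by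
    intro z
    rw [hcd, hsd, htd]
    calc (z + star z) * ((x + star x) * (y + star y))
        = ((z + star z) * (x + star x)) * (y + star y) := (mul_assoc _ _ _).symm
      _ = ((x + star x) * (z + star z)) * (y + star y) := by rw [hT z x]
      _ = (x + star x) * ((z + star z) * (y + star y)) := mul_assoc _ _ _
      _ = (x + star x) * ((y + star y) * (z + star z)) := by rw [hT z y]
      _ = ((x + star x) * (y + star y)) * (z + star z) := (mul_assoc _ _ _).symm
  have hnotall : ¬ (∀ z' v : R, (z' + star z') * v = v * (z' + star z')) := by
    intro hall
    apply hq0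
    have h1 : t * r = r * t := by rw [htd]; exact hall y r
    have h1' : s * r = r * s := by rw [hsd]; exact hall x r
    rw [hcd]
    calc s * t * r = s * (t * r) := mul_assoc _ _ _
      _ = s * (r * t) := by rw [h1]
      _ = (s * r) * t := (mul_assoc _ _ _).symm
      _ = (r * s) * t := by rw [h1']
      _ = r * (s * t) := mul_assoc _ _ _
  have f12 : ∀ w y' : R, (∀ z : R, (z + star z) * y' = y' * (z + star z)) →
      (w + star w) * y' = y' * (w + star w) := by
    intro w y' hy'
    by_contra hne
    have hg0 : (w + star w) * y' - y' * (w + star w) ≠ 0 := sub_ne_zero.mpr hne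
    apply hnotall
    intro z' v'
    have hgx : ∀ x' z : R,
        (z + star z) * (((w + star w) * y' - y' * (w + star w)) * x')
          = (((w + star w) * y' - y' * (w + star w)) * x') * (z + star z) := by
      intro x' z
      have e : ((w + star w) * y' - y' * (w + star w)) * x'
          = ((w + star w) * (y' * x') - (y' * x') * (w + star w))
            - y' * ((w + star w) * x' - x' * (w + star w)) := by noncomm_ring
      rw [e]
      have c1 := f8 w (y' * x') z
      have c2 : (z + star z) * (y' * ((w + star w) * x' - x' * (w + star w)))
          = (y' * ((w + star w) * x' - x' * (w + star w))) * (z + star z) := by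
        calc (z + star z) * (y' * ((w + star w) * x' - x' * (w + star w)))
            = ((z + star z) * y') * ((w + star w) * x' - x' * (w + star w)) :=
              (mul_assoc _ _ _).symm
          _ = (y' * (z + star z)) * ((w + star w) * x' - x' * (w + star w)) := by
              rw [hy' z]
          _ = y' * ((z + star z) * ((w + star w) * x' - x' * (w + star w))) :=
              mul_assoc _ _ _
          _ = y' * (((w + star w) * x' - x' * (w + star w)) * (z + star z)) := by
              rw [f8 w x' z]
          _ = (y' * ((w + star w) * x' - x' * (w + star w))) * (z + star z) :=
              (mul_assoc _ _ _).symm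
      rw [mul_sub, sub_mul, c1, c2]
    have hv' : v' = ((w + star w) * y' - y' * (w + star w))
        * (((w + star w) * y' - y' * (w + star w))⁻¹ * v') := by
      rw [← mul_assoc, mul_inv_cancel₀ hg0, one_mul]
    rw [hv']
    exact hgx _ z'
  have f14 : ∀ y' : R, (∀ z : R, (z + star z) * y' = y' * (z + star z)) →
      c * y' = y' * c := by
    intro y' hy'
    have h1 : t * y' = y' * t := by rw [htd]; exact f12 y y' hy'
    have h1' : s * y' = y' * s := by rw [hsd]; exact f12 x y' hy'
    rw [hcd]
    calc s * t * y' = s * (t * y') := mul_assoc _ _ _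
      _ = s * (y' * t) := by rw [h1]
      _ = (s * y') * t := (mul_assoc _ _ _).symm
      _ = (y' * s) * t := by rw [h1']
      _ = y' * (s * t) := mul_assoc _ _ _
  have f16 : ∀ X z : R, (z + star z) * (c * X - X * c) = (c * X - X * c) * (z + star z) := by
    intro X z
    have h5 : star (t * s * X) = star X * (s * t) := by
      rw [star_mul, star_mul, hss, hstt]
    have e : c * X - X * c = (t * s * X + star (t * s * X)) - (X + star X) * c := by
      rw [h5, hcd, hts]; noncomm_ring
    rw [e]
    have c1 := hT z (t * s * X)
    have c2 : (z + star z) * ((X + star X) * c) = ((X + star X) * c) * (z + star z) := by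
      calc (z + star z) * ((X + star X) * c)
          = ((z + star z) * (X + star X)) * c := (mul_assoc _ _ _).symm
        _ = ((X + star X) * (z + star z)) * c := by rw [hT z X]
        _ = (X + star X) * ((z + star z) * c) := mul_assoc _ _ _
        _ = (X + star X) * (c * (z + star z)) := by rw [czc z]
        _ = ((X + star X) * c) * (z + star z) := (mul_assoc _ _ _).symm
    rw [mul_sub, sub_mul, c1, c2]
  have cq : ∀ z : R, (z + star z) * q = q * (z + star z) := by
    intro z; rw [hqd]; exact f16 r z
  have hcq : c * q = q * c := f14 q cq
  set v := q⁻¹ * r with hvd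
  have f18 : c * v - v * c = 1 := by
    have h1 : c * q⁻¹ = q⁻¹ * c := inv_comm hcq
    have e1 : c * v = q⁻¹ * (c * r) := by rw [hvd, ← mul_assoc, h1, mul_assoc]
    have e2 : v * c = q⁻¹ * (r * c) := by rw [hvd, mul_assoc]
    rw [e1, e2, ← mul_sub, ← hqd]
    exact inv_mul_cancel₀ hq'
  have f19 : ∀ y' y'' : R, (∀ z : R, (z + star z) * y' = y' * (z + star z)) →
      (∀ z : R, (z + star z) * y'' = y'' * (z + star z)) → y' * y'' = y'' * y' := by
    intro y' y'' hy' hy''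
    have hcy' : c * y' = y' * c := f14 y' hy'
    have hrep : y' = c * (v * y') - (v * y') * c := by
      have e : c * (v * y') - (v * y') * c
          = (c * v - v * c) * y' + v * (c * y' - y' * c) := by noncomm_ring
      rw [f18, sub_eq_zero.mpr hcy', one_mul, mul_zero, add_zero] at e
      exact e.symm
    have hcx : (c * (v * y') - (v * y') * c) * y'' = y'' * (c * (v * y') - (v * y') * c) := by
      have h5 : star (t * s * (v * y')) = star (v * y') * (s * t) := by
        rw [star_mul (t * s) (v * y'), star_mul t s, hss, hstt]
      have e : c * (v * y') - (v * y') * c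
          = (t * s * (v * y') + star (t * s * (v * y'))) - ((v * y') + star (v * y')) * c := by
        rw [h5, hcd, hts]; noncomm_ring
      rw [e]
      have c1 : (t * s * (v * y') + star (t * s * (v * y'))) * y''
          = y'' * (t * s * (v * y') + star (t * s * (v * y'))) := hy'' (t * s * (v * y'))
      have c2 : (((v * y') + star (v * y')) * c) * y''
          = y'' * (((v * y') + star (v * y')) * c) := by
        have hcy'' : c * y'' = y'' * c := f14 y'' hy''
        calc (((v * y') + star (v * y')) * c) * y''
            = ((v * y') + star (v * y')) * (c * y'') := mul_assoc _ _ _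
          _ = ((v * y') + star (v * y')) * (y'' * c) := by rw [hcy'']
          _ = (((v * y') + star (v * y')) * y'') * c := (mul_assoc _ _ _).symm
          _ = (y'' * ((v * y') + star (v * y'))) * c := by rw [hy'' (v * y')]
          _ = y'' * (((v * y') + star (v * y')) * c) := mul_assoc _ _ _
      rw [sub_mul, mul_sub, c1, c2]
    calc y' * y'' = (c * (v * y') - (v * y') * c) * y'' := by rw [← hrep]
      _ = y'' * (c * (v * y') - (v * y') * c) := hcx
      _ = y'' * y' := by rw [← hrep]
  set k := v + star v with hkd
  have hk2 : k + v = star v := by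
    rw [hkd]
    calc (v + star v) + v = star v + (v + v) := by abel
      _ = star v + 0 := by rw [addself]
      _ = star v := add_zero _
  have ckT : ∀ z : R, (z + star z) * k = k * (z + star z) := by
    intro z; rw [hkd]; exact hT z v
  have czk : c * k = k * c := f14 k ckT
  have f23 : ∀ y' : R, c * y' = y' * c → y' + star y' = 0 := by
    intro y' hy'c
    by_contra hT0
    have hy2 : (y' + star y') + y' = star y' := by
      calc (y' + star y') + y' = star y' + (y' + y') := by abel
        _ = star y' + 0 := by rw [addself]
        _ = star y' := add_zero _
    have hcalc1 : star (v * y') = ((y' + star y') + y') * (k + v) := by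
      rw [hy2, hk2, star_mul]
    have hTv : (y' + star y') * v
        = (v * y' + star (v * y')) - (v * y' + y' * v) - y' * k - (y' + star y') * k := by
      rw [hcalc1]; noncomm_ring
    have cE : c * (v * y' + star (v * y')) = (v * y' + star (v * y')) * c :=
      f14 _ (fun z => hT z (v * y'))
    have cT' : c * (y' + star y') = (y' + star y') * c := f14 _ (fun z => hT z y')
    have cP1 : c * (v * y' + y' * v) = (v * y' + y' * v) * c := by
      have e : c * (v * y' + y' * v) - (v * y' + y' * v) * c
          = (c * v - v * c) * y' + v * (c * y' - y' * c)
            + (c * y' - y' * c) * v + y' * (c * v - v * c) := by noncomm_ring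
      rw [f18, sub_eq_zero.mpr hy'c, one_mul, mul_zero, zero_mul, mul_one,
        add_zero, add_zero] at e
      rw [addself y'] at e
      exact sub_eq_zero.mp e
    have cP2 : c * (y' * k) = (y' * k) * c := by
      calc c * (y' * k) = (c * y') * k := (mul_assoc _ _ _).symm
        _ = (y' * c) * k := by rw [hy'c]
        _ = y' * (c * k) := mul_assoc _ _ _
        _ = y' * (k * c) := by rw [czk]
        _ = (y' * k) * c := (mul_assoc _ _ _).symm
    have cP3 : c * ((y' + star y') * k) = ((y' + star y') * k) * c := by
      calc c * ((y' + star y') * k) = (c * (y' + star y')) * k := (mul_assoc _ _ _).symm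
        _ = ((y' + star y') * c) * k := by rw [cT']
        _ = (y' + star y') * (c * k) := mul_assoc _ _ _
        _ = (y' + star y') * (k * c) := by rw [czk]
        _ = ((y' + star y') * k) * c := (mul_assoc _ _ _).symm
    have cTv : c * ((y' + star y') * v) = ((y' + star y') * v) * c := by
      rw [hTv, mul_sub, mul_sub, mul_sub, sub_mul, sub_mul, sub_mul, cE, cP1, cP2, cP3]
    have hcv : c * v = v * c := by
      have hTne : (y' + star y') ≠ 0 := hT0
      have h1 : c * (y' + star y')⁻¹ = (y' + star y')⁻¹ * c := inv_comm cT'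
      calc c * v = c * ((y' + star y')⁻¹ * ((y' + star y') * v)) := by
            rw [inv_mul_cancel_left₀ hTne]
        _ = (c * (y' + star y')⁻¹) * ((y' + star y') * v) := (mul_assoc _ _ _).symm
        _ = ((y' + star y')⁻¹ * c) * ((y' + star y') * v) := by rw [h1]
        _ = (y' + star y')⁻¹ * (c * ((y' + star y') * v)) := mul_assoc _ _ _
        _ = (y' + star y')⁻¹ * (((y' + star y') * v) * c) := by rw [cTv]
        _ = (y' + star y')⁻¹ * ((y' + star y') * (v * c)) := by rw [mul_assoc]
        _ = v * c := by rw [inv_mul_cancel_left₀ hTne]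
    have hone : (1 : R) = 0 := by rw [← f18, sub_eq_zero.mpr hcv]
    exact one_ne_zero hone
  have f24 : ∀ y' y'' : R, c * y' = y' * c → c * y'' = y'' * c → y' * y'' = y'' * y' := by
    intro y' y'' h1 h1'
    have h3 : c * (y' * y'') = (y' * y'') * c := by
      calc c * (y' * y'') = (c * y') * y'' := (mul_assoc _ _ _).symm
        _ = (y' * c) * y'' := by rw [h1]
        _ = y' * (c * y'') := mul_assoc _ _ _
        _ = y' * (y'' * c) := by rw [h1']
        _ = (y' * y'') * c := (mul_assoc _ _ _).symm
    have hs1 : star y' = y' := by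
      have h5 := f23 y' h1
      have h6 := neg_eq_of_add_eq_zero_right h5
      rw [negid y'] at h6; exact h6.symm
    have hs2 : star y'' = y'' := by
      have h5 := f23 y'' h1'
      have h6 := neg_eq_of_add_eq_zero_right h5
      rw [negid y''] at h6; exact h6.symm
    have h6 : star (y' * y'') = y' * y'' := by
      have h5 := f23 _ h3
      have h7 := neg_eq_of_add_eq_zero_right h5
      rw [negid (y' * y'')] at h7; exact h7.symm
    calc y' * y'' = star (y' * y'') := h6.symm
      _ = star y'' * star y' := star_mul _ _
      _ = y'' * y' := by rw [hs1, hs2]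
  have hv2 : c * (v * v) = (v * v) * c := by
    have e : c * (v * v) - (v * v) * c = (c * v - v * c) * v + v * (c * v - v * c) := by
      noncomm_ring
    rw [f18, one_mul, mul_one] at e
    rw [addself v] at e
    exact sub_eq_zero.mp e
  have f26 : v * k + k * v = k * k := by
    have h1 := f23 (v * v) hv2
    have h1' : star (v * v) = (k + v) * (k + v) := by rw [hk2]; exact star_mul v v
    rw [h1'] at h1
    have key : v * k + k * v - k * k = (v * v + (k + v) * (k + v)) - 2 * (k * k + v * v) := by
      noncomm_ring
    rw [h1, h2, zero_mul, sub_zero] at key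
    exact sub_eq_zero.mp key
  have f27 : ∀ x₀ : R, (x₀ + star x₀) * v + v * (x₀ + star x₀) = k * (x₀ + star x₀) := by
    intro x₀
    set yy := c * x₀ - x₀ * c with hyyd
    have hyyC : ∀ z : R, (z + star z) * yy = yy * (z + star z) := by
      intro z; rw [hyyd]; exact f16 x₀ z
    have hyc : c * yy = yy * c := f14 yy hyyC
    have hy'c : c * (x₀ + v * yy) = (x₀ + v * yy) * c := by
      have e : c * (x₀ + v * yy) - (x₀ + v * yy) * c
          = (c * x₀ - x₀ * c) + ((c * v - v * c) * yy + v * (c * yy - yy * c)) := by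
        noncomm_ring
      rw [f18, sub_eq_zero.mpr hyc, one_mul, mul_zero, add_zero, ← hyyd] at e
      rw [addself yy] at e
      exact sub_eq_zero.mp e
    have h23 := f23 _ hy'c
    have hyyk := f23 yy hyc
    have hsyy : star yy = yy := by
      have h6 := neg_eq_of_add_eq_zero_right hyyk
      rw [negid yy] at h6; exact h6.symm
    have h24 : (x₀ + star x₀) + (v * yy + star (v * yy)) = 0 := by
      rw [star_add] at h23
      calc (x₀ + star x₀) + (v * yy + star (v * yy))
          = (x₀ + v * yy) + (star x₀ + star (v * yy)) := by abel
        _ = 0 := h23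
    have hexp : x₀ + star x₀ = v * yy + star (v * yy) := by
      have h25 := eq_neg_of_add_eq_zero_left h24
      rw [negid] at h25; exact h25
    have hstarvyy : star (v * yy) = yy * (k + v) := by
      rw [hk2, star_mul, hsyy]
    have hu : x₀ + star x₀ = v * yy + (yy * k + yy * v) := by
      rw [hexp, hstarvyy, mul_add]
    have hyv2 : yy * (v * v) = (v * v) * yy := f24 yy (v * v) hyc hv2
    have hyk : yy * k = k * yy := by
      have h6 := hyyC v
      rw [← hkd] at h6
      exact h6.symm
    have hq1 : (yy * v + v * yy) * k = k * (yy * v + v * yy) := by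
      have e : yy * v + v * yy = (x₀ + star x₀) - yy * k := by rw [hu]; abel
      rw [e, sub_mul, mul_sub]
      have c1 : (x₀ + star x₀) * k = k * (x₀ + star x₀) := by
        rw [hkd]; exact hT x₀ v
      have c2 : (yy * k) * k = k * (yy * k) := by
        calc (yy * k) * k = (k * yy) * k := by rw [hyk]
          _ = k * (yy * k) := mul_assoc _ _ _
      rw [c1, c2]
    have key : (x₀ + star x₀) * v + v * (x₀ + star x₀) - k * (x₀ + star x₀)
        = (yy * (v * v) - (v * v) * yy)
          + yy * (v * k + k * v - k * k)
          + ((yy * v + v * yy) * k - k * (yy * v + v * yy))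
          + (yy * k - k * yy) * k
          + 2 * (v * yy * v + v * (v * yy) - yy * v * k) := by
      rw [hu]; noncomm_ring
    rw [sub_eq_zero.mpr hyv2, sub_eq_zero.mpr f26, sub_eq_zero.mpr hq1,
      sub_eq_zero.mpr hyk, h2] at key
    simp only [mul_zero, zero_mul, add_zero, zero_add] at key
    exact sub_eq_zero.mp key
  have h27t : t * v + v * t = k * t := by rw [htd]; exact f27 y
  have h27s : s * v + v * s = k * s := by rw [hsd]; exact f27 x
  have hsk : s * (k * t) = k * s * t := by
    have cks : s * k = k * s := by rw [hsd, hkd]; exact hT x v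
    rw [← mul_assoc, cks]
  have efin : c * v - v * c
      = s * (t * v + v * t) + (s * v + v * s) * t - 2 * (s * (v * t)) - 2 * (v * (s * t)) := by
    rw [hcd]; noncomm_ring
  rw [h27t, h27s, hsk, h2, zero_mul, zero_mul, sub_zero, sub_zero] at efin
  rw [addself (k * s * t)] at efin
  rw [f18] at efin
  exact one_ne_zero efin

end Stmt12Aux

/-- Theorem (division ring, trace commutativity): Let `R` be a division ring with
involution `*` and `M` a noncentral `*`-subring of `R` invariant under all inner
automorphisms of `R`. If `[T(M), T(M)] = 0`, then `T(R)² ⊆ Z(R)`. -/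
theorem stmt_12 {R : Type*} [DivisionRing R] [StarRing R]
    (M : Subring R)
    (hMstar : ∀ x ∈ M, star x ∈ M)
    (hMnoncentral : ∃ m ∈ M, ∃ r : R, m * r ≠ r * m)
    (hMinv : ∀ u : R, u ≠ 0 → ∀ m ∈ M, u * m * u⁻¹ ∈ M)
    (h : ∀ x ∈ M, ∀ y ∈ M,
      (x + star x) * (y + star y) = (y + star y) * (x + star x)) :
    ∀ x y r : R, ((x + star x) * (y + star y)) * r = r * ((x + star x) * (y + star y)) := by
  by_cases h2 : (2 : R) = 0
  · exact Stmt12Aux.char2_main h2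
      (Stmt12Aux.trace_comm2 M hMstar hMnoncentral hMinv h h2)
  · intro x y r
    have hc := Stmt12Aux.trace_central_ne2 M hMstar hMnoncentral hMinv h h2
    exact Stmt12Aux.cen_mul (hc x) (hc y) r
end

section
/- Let R be a division ring with involution *, and let M be a subring of R with M* = M, M not contained in the center Z(R), and u·M·u⁻¹ ⊆ M for every nonzero u ∈ R. If there exists b ∈ R with b ∉ Z(R) such that b·(x + x*) = (x + x*)·b for all x ∈ M, then s·t ∈ Z(R) for all s, t ∈ T(R) (i.e., T(R)² ⊆ Z(R)). -/
set_option linter.unusedSectionVars false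
set_option maxHeartbeats 2000000

namespace Stmt14

variable {R : Type*} [DivisionRing R] [StarRing R]

/-- x commutes with everything -/
private def Cen (z : R) : Prop := ∀ x : R, z * x = x * z

private lemma cen_sub {z z' : R} (h : Cen z) (h' : Cen z') : Cen (z - z') := by
  intro x; rw [sub_mul, mul_sub, h x, h' x]

private lemma cen_add {z z' : R} (h : Cen z) (h' : Cen z') : Cen (z + z') := by
  intro x; rw [add_mul, mul_add, h x, h' x]

private lemma cen_mul {z z' : R} (h : Cen z) (h' : Cen z') : Cen (z * z') := by
  intro x; rw [mul_assoc, h' x, ← mul_assoc, h x, mul_assoc]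

private lemma cen_inv {z : R} (h : Cen z) : Cen z⁻¹ := by
  rcases eq_or_ne z 0 with rfl | hz
  · simpa using h
  · intro x
    have h1 : z * (z⁻¹ * x * z) = x * z := by
      rw [← mul_assoc, ← mul_assoc, mul_inv_cancel₀ hz, one_mul]
    have h2 : z * (x * z⁻¹ * z) = z * x := by
      rw [mul_assoc, inv_mul_cancel₀ hz, mul_one]
    have h3 : z * (z⁻¹ * x * z) = z * (x * z⁻¹ * z) := by
      rw [h1, h2, h x]
    have h4 := mul_left_cancel₀ hz h3
    have h5 := congrArg (fun y => y * z⁻¹) h4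
    simpa [mul_assoc, mul_inv_cancel₀ hz] using h5

private lemma cen_zero : Cen (0 : R) := fun x => by simp

private lemma cen_one : Cen (1 : R) := fun x => by simp

private lemma cen_neg {z : R} (h : Cen z) : Cen (-z) := fun x => by
  rw [neg_mul, mul_neg, h x]

private lemma comm_inv {a c : R} (h : a * c = c * a) : a * c⁻¹ = c⁻¹ * a := by
  rcases eq_or_ne c 0 with rfl | hc
  · simp
  · have h1 : c⁻¹ * (a * c) * c⁻¹ = c⁻¹ * (c * a) * c⁻¹ := by rw [h]
    simp only [mul_assoc] at h1
    rw [mul_inv_cancel₀ hc, mul_one, ← mul_assoc c⁻¹ c, inv_mul_cancel₀ hc, one_mul] at h1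
    exact h1.symm

private lemma quad_mul {m z z' w w' : R} (hw : Cen w) (hw' : Cen w') :
    (z + z' * m) * (w + w' * m) = z * w + (z * w' + z' * w) * m + z' * w' * (m * m) := by
  have e1 : z' * m * w = z' * w * m := by rw [mul_assoc, ← hw m, ← mul_assoc]
  have e2 : z' * m * (w' * m) = z' * w' * (m * m) := by
    rw [← mul_assoc, mul_assoc z' m w', ← hw' m, ← mul_assoc, mul_assoc]
  calc (z + z' * m) * (w + w' * m)
      = z * w + z * w' * m + (z' * m * w + z' * m * (w' * m)) := by noncomm_ring
    _ = z * w + z * w' * m + (z' * w * m + z' * w' * (m * m)) := by rw [e1, e2]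
    _ = z * w + (z * w' + z' * w) * m + z' * w' * (m * m) := by noncomm_ring

private lemma key_step {n₀ B0 B1 B2 m₀ m' : R} (hn₀ne : n₀ ≠ 0) (hβ₀ : B0 ≠ 0)
    (hb0 : Cen B0) (hb1 : Cen B1) (hb2 : Cen B2)
    (h0 : n₀ * m₀ - m₀ * n₀ = B0 * n₀)
    (h1 : n₀ * m' - m' * n₀ = B1 * n₀)
    (h2 : n₀ * (m₀ * m') - (m₀ * m') * n₀ = B2 * n₀) :
    ∃ z z' : R, Cen z ∧ Cen z' ∧ m' = z + z' * m₀ := by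
  have hrw : n₀ * m' = B1 * n₀ + m' * n₀ := sub_eq_iff_eq_add.mp h1
  have chain : B2 * n₀ = (B0 * m' + B0 * B1 + B1 * m₀) * n₀ := by
    have c1 : B2 * n₀ = n₀ * (m₀ * m') - (m₀ * m') * n₀ := h2.symm
    have c2 : n₀ * (m₀ * m') - (m₀ * m') * n₀
        = (n₀ * m₀ - m₀ * n₀) * m' + m₀ * (n₀ * m' - m' * n₀) := by noncomm_ring
    have c3 : (n₀ * m₀ - m₀ * n₀) * m' + m₀ * (n₀ * m' - m' * n₀)
        = (B0 * n₀) * m' + m₀ * (B1 * n₀) := by rw [h0, h1]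
    have c4 : m₀ * (B1 * n₀) = B1 * m₀ * n₀ := by
      rw [← mul_assoc, ← hb1 m₀]
    have c5 : (B0 * n₀) * m' = B0 * (B1 * n₀) + B0 * (m' * n₀) := by
      rw [mul_assoc, hrw, mul_add]
    rw [c1, c2, c3, c4, c5]
    noncomm_ring
  have heps : B2 = B0 * m' + B0 * B1 + B1 * m₀ := mul_right_cancel₀ hn₀ne chain
  refine ⟨B0⁻¹ * B2 - B0 * B1 * B0⁻¹ - 0, -(B0⁻¹ * B1), ?_, ?_, ?_⟩
  · exact cen_sub (cen_sub (cen_mul (cen_inv hb0) hb2)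
      (cen_mul (cen_mul hb0 hb1) (cen_inv hb0))) cen_zero
  · exact cen_neg (cen_mul (cen_inv hb0) hb1)
  · have i1 : B0 * (B0⁻¹ * B2) = B2 := by
      rw [← mul_assoc, mul_inv_cancel₀ hβ₀, one_mul]
    have i2 : B0 * (B0⁻¹ * B1) = B1 := by
      rw [← mul_assoc, mul_inv_cancel₀ hβ₀, one_mul]
    have i3 : B0 * (B0 * B1 * B0⁻¹) = B0 * B1 := by
      rw [hb0 (B0 * B1 * B0⁻¹), mul_assoc, inv_mul_cancel₀ hβ₀, mul_one]
    have final : B0 * ((B0⁻¹ * B2 - B0 * B1 * B0⁻¹ - 0) + -(B0⁻¹ * B1) * m₀)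
        = B0 * m' := by
      have expand : B0 * ((B0⁻¹ * B2 - B0 * B1 * B0⁻¹ - 0) + -(B0⁻¹ * B1) * m₀)
          = B0 * (B0⁻¹ * B2) - B0 * (B0 * B1 * B0⁻¹) - B0 * (B0⁻¹ * B1) * m₀ := by
        noncomm_ring
      rw [expand, i1, i3, i2, heps]
      noncomm_ring
    exact (mul_left_cancel₀ hβ₀ final).symm

/-- Cartan–Brauer–Hua style lemma. -/
private theorem cbh (W : Set R)
    (hsub : ∀ a ∈ W, ∀ c ∈ W, a - c ∈ W)
    (hmul : ∀ a ∈ W, ∀ c ∈ W, a * c ∈ W)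
    (hinv : ∀ a ∈ W, a⁻¹ ∈ W)
    (hconj : ∀ u : R, u ≠ 0 → ∀ a ∈ W, u * a * u⁻¹ ∈ W)
    (p : R) (hp : p ∉ W) :
    ∀ a ∈ W, ∀ y : R, a * y = y * a := by
  have step1 : ∀ a ∈ W, ∀ x : R, x ∉ W → a * x = x * a := by
    intro a ha x hx
    rcases eq_or_ne a 0 with rfl | ha0
    · simp
    rcases eq_or_ne x 0 with rfl | hx0
    · simp
    have h1W : (1 : R) ∈ W := by
      have := hmul a ha a⁻¹ (hinv a ha)
      rwa [mul_inv_cancel₀ ha0] at this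
    have h0W : (0 : R) ∈ W := by simpa using hsub a ha a ha
    have h1x : (1 : R) + x ≠ 0 := by
      intro h
      have hx1 : x = 0 - (1:R) := by
        rw [zero_sub, eq_neg_of_add_eq_zero_right h]
      exact hx (hx1 ▸ hsub 0 h0W 1 h1W)
    have ha1 : x * a * x⁻¹ ∈ W := hconj x hx0 a ha
    have ha2 : (1 + x) * a * (1 + x)⁻¹ ∈ W := hconj _ h1x a ha
    set a1 := x * a * x⁻¹ with ha1def
    set a2 := (1 + x) * a * (1 + x)⁻¹ with ha2def
    have k1 : x * a = a1 * x := by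
      rw [ha1def, mul_assoc, inv_mul_cancel₀ hx0, mul_one]
    have k2 : (1 + x) * a = a2 * (1 + x) := by
      rw [ha2def, mul_assoc, inv_mul_cancel₀ h1x, mul_one]
    have k3 : a - a2 = (a2 - a1) * x := by
      rw [add_mul, one_mul, mul_add, mul_one] at k2
      rw [k1] at k2
      rw [sub_mul]
      calc a - a2 = (a + a1 * x) - a2 - a1 * x := by abel
        _ = (a2 + a2 * x) - a2 - a1 * x := by rw [k2]
        _ = a2 * x - a1 * x := by abel
    by_cases hd : a2 - a1 = 0
    · have ha2a : a = a2 := by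
        have := k3; rw [hd, zero_mul] at this
        exact sub_eq_zero.mp this
      have ha12 : a2 = a1 := sub_eq_zero.mp hd
      have hh : a1 = a := by rw [← ha12]; exact ha2a.symm
      rw [k1, hh]
    · exfalso
      have : (a2 - a1)⁻¹ * ((a2 - a1) * x) = x := by
        rw [← mul_assoc, inv_mul_cancel₀ hd, one_mul]
      rw [← k3] at this
      exact hx (this ▸ hmul _ (hinv _ (hsub _ ha2 _ ha1)) _ (hsub _ ha _ ha2))
  intro a ha y
  by_cases hy : y ∈ W
  · have hpy : p + y ∉ W := fun h => hp (by simpa using hsub _ h _ hy)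
    have h1 := step1 a ha p hp
    have h2 := step1 a ha (p + y) hpy
    rw [mul_add, add_mul, h1] at h2
    exact add_left_cancel h2
  · exact step1 a ha y hy

/-- Elements centralizing a noncentral invariant subring are central. -/
private theorem cenM {M : Subring R}
    (hMnc : ∃ m ∈ M, ∃ r : R, m * r ≠ r * m)
    (hMinv : ∀ u : R, u ≠ 0 → ∀ m ∈ M, u * m * u⁻¹ ∈ M)
    (x : R) (hx : ∀ m ∈ M, x * m = m * x) : Cen x := by
  set W : Set R := {z | ∀ m ∈ M, z * m = m * z} with hW
  have hsub : ∀ a ∈ W, ∀ c ∈ W, a - c ∈ W := by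
    intro a ha c hc m hm
    rw [sub_mul, mul_sub, ha m hm, hc m hm]
  have hmul : ∀ a ∈ W, ∀ c ∈ W, a * c ∈ W := by
    intro a ha c hc m hm
    rw [mul_assoc, hc m hm, ← mul_assoc, ha m hm, mul_assoc]
  have hinv : ∀ a ∈ W, a⁻¹ ∈ W := by
    intro a ha m hm
    exact (comm_inv (c := a) (ha m hm).symm).symm
  have hconj : ∀ u : R, u ≠ 0 → ∀ a ∈ W, u * a * u⁻¹ ∈ W := by
    intro u hu a ha m hm
    have hmem : u⁻¹ * m * u ∈ M := by
      have := hMinv u⁻¹ (inv_ne_zero hu) m hm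
      rwa [inv_inv] at this
    have key : a * (u⁻¹ * m * u) = (u⁻¹ * m * u) * a := ha _ hmem
    have e := congrArg (fun z => u * z * u⁻¹) key
    simp only [mul_assoc, mul_inv_cancel₀ hu, inv_mul_cancel₀ hu, mul_one, one_mul,
      mul_inv_cancel_left₀ hu, inv_mul_cancel_left₀ hu] at e ⊢
    exact e
  obtain ⟨m, hm, r, hr⟩ := hMnc
  have hpW : r ∉ W := fun h => hr (h m hm).symm
  intro y
  exact cbh W hsub hmul hinv hconj r hpW x hx y

end Stmt14

/-- Theorem (division ring, centralizer of `T(M)`): Let `R` be a division ring with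
involution `*` and `M` a noncentral `*`-subring of `R` invariant under all inner
automorphisms of `R`. If some noncentral `b ∈ R` centralizes `T(M)`, then
`T(R)² ⊆ Z(R)`. -/
theorem stmt_14 {R : Type*} [DivisionRing R] [StarRing R]
    (M : Subring R)
    (hMstar : ∀ x ∈ M, star x ∈ M)
    (hMnoncentral : ∃ m ∈ M, ∃ r : R, m * r ≠ r * m)
    (hMinv : ∀ u : R, u ≠ 0 → ∀ m ∈ M, u * m * u⁻¹ ∈ M)
    (b : R) (hb : ∃ r : R, b * r ≠ r * b)
    (hcomm : ∀ x ∈ M, b * (x + star x) = (x + star x) * b) :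
    ∀ x y r : R, ((x + star x) * (y + star y)) * r = r * ((x + star x) * (y + star y)) := by
  classical
  open Stmt14 in
  have hcen : ∀ x : R, (∀ m ∈ M, x * m = m * x) → Stmt14.Cen x :=
    fun x hx => Stmt14.cenM hMnoncentral hMinv x hx
  have htrM : ∀ m ∈ M, m + star m ∈ M := fun m hm => M.add_mem hm (hMstar m hm)
  have htrs : ∀ m : R, star (m + star m) = m + star m := by
    intro m; rw [star_add, star_star, add_comm]
  -- L3 : M is not centralized by b
  have hbM : ∃ m₀ ∈ M, b * m₀ ≠ m₀ * b := by
    by_contra h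
    push_neg at h
    obtain ⟨r, hr⟩ := hb
    exact hr (hcen b h r)
  -- L4b : brackets [m, trace m'] commute with b
  have hbrC : ∀ m ∈ M, ∀ m' ∈ M,
      b * (m * (m' + star m') - (m' + star m') * m)
      = (m * (m' + star m') - (m' + star m') * m) * b := by
    intro m hm m' hm'
    have h1 : b * (m * (m' + star m') + star (m * (m' + star m')))
        = (m * (m' + star m') + star (m * (m' + star m'))) * b :=
      hcomm _ (M.mul_mem hm (htrM m' hm'))
    have h2 : star (m * (m' + star m')) = (m' + star m') * star m := by
      rw [star_mul, htrs]
    rw [h2] at h1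
    have h3 : m * (m' + star m') + (m' + star m') * star m
        = (m * (m' + star m') - (m' + star m') * m) + (m' + star m') * (m + star m) := by
      noncomm_ring
    rw [h3] at h1
    have h4 : b * ((m' + star m') * (m + star m)) = ((m' + star m') * (m + star m)) * b := by
      rw [← mul_assoc, hcomm m' hm', mul_assoc, hcomm m hm, ← mul_assoc]
    have h5 : b * (m * (m' + star m') - (m' + star m') * m)
        = b * ((m * (m' + star m') - (m' + star m') * m) + (m' + star m') * (m + star m))
          - b * ((m' + star m') * (m + star m)) := by noncomm_ring
    rw [h5, h1, h4]; noncomm_ring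
  -- L4c : b-commuting members of M commute with all traces
  have hL4c : ∀ k ∈ M, b * k = k * b → ∀ m' ∈ M,
      k * (m' + star m') = (m' + star m') * k := by
    intro k hk hkb m' hm'
    obtain ⟨m₀, hm₀, hbm₀⟩ := hbM
    have hcC : b * (k * (m' + star m') - (m' + star m') * k)
        = (k * (m' + star m') - (m' + star m') * k) * b := hbrC k hk m' hm'
    have h1 : b * (k * m₀ * (m' + star m') - (m' + star m') * (k * m₀))
        = (k * m₀ * (m' + star m') - (m' + star m') * (k * m₀)) * b :=
      hbrC _ (M.mul_mem hk hm₀) m' hm'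
    have h2 : k * m₀ * (m' + star m') - (m' + star m') * (k * m₀)
        = k * (m₀ * (m' + star m') - (m' + star m') * m₀)
          + (k * (m' + star m') - (m' + star m') * k) * m₀ := by noncomm_ring
    rw [h2] at h1
    have h3 : b * (k * (m₀ * (m' + star m') - (m' + star m') * m₀))
        = (k * (m₀ * (m' + star m') - (m' + star m') * m₀)) * b := by
      rw [← mul_assoc, hkb, mul_assoc, hbrC m₀ hm₀ m' hm', ← mul_assoc]
    have h4 : b * ((k * (m' + star m') - (m' + star m') * k) * m₀)
        = ((k * (m' + star m') - (m' + star m') * k) * m₀) * b := by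
      have e1 : b * ((k * (m' + star m') - (m' + star m') * k) * m₀)
          = b * (k * (m₀ * (m' + star m') - (m' + star m') * m₀)
            + (k * (m' + star m') - (m' + star m') * k) * m₀)
            - b * (k * (m₀ * (m' + star m') - (m' + star m') * m₀)) := by noncomm_ring
      rw [e1, h1, h3]; noncomm_ring
    set c := k * (m' + star m') - (m' + star m') * k with hcdef
    have hc0 : c = 0 := by
      by_contra hc
      apply hbm₀
      have h5 : b * c⁻¹ = c⁻¹ * b := Stmt14.comm_inv hcC
      have hmeq : c⁻¹ * (c * m₀) = m₀ := by
        rw [← mul_assoc, inv_mul_cancel₀ hc, one_mul]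
      have h6 : b * (c⁻¹ * (c * m₀)) = (c⁻¹ * (c * m₀)) * b := by
        calc b * (c⁻¹ * (c * m₀)) = (b * c⁻¹) * (c * m₀) := by rw [mul_assoc]
          _ = (c⁻¹ * b) * (c * m₀) := by rw [h5]
          _ = c⁻¹ * (b * (c * m₀)) := by rw [mul_assoc]
          _ = c⁻¹ * ((c * m₀) * b) := by rw [h4]
          _ = (c⁻¹ * (c * m₀)) * b := by rw [← mul_assoc]
      rwa [hmeq] at h6
    exact sub_eq_zero.mp hc0
  -- L5 : traces commute with each other
  have hL5 : ∀ m ∈ M, ∀ m' ∈ M,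
      (m + star m) * (m' + star m') = (m' + star m') * (m + star m) :=
    fun m hm m' hm' => hL4c _ (htrM m hm) (hcomm m hm) m' hm'
  -- MAIN CASE SPLIT
  by_cases hTZ : ∀ m ∈ M, Stmt14.Cen (m + star m)
  · -- T(M) central: prove all traces of R are central
    have hstarmc : ∀ m ∈ M, ∀ u : R, u ≠ 0 →
        Stmt14.Cen (u * m * u⁻¹ - (star u)⁻¹ * m * star u) := by
      intro m hm u hu
      have hsU : (star u : R) ≠ 0 := star_ne_zero.mpr hu
      have h1 : Stmt14.Cen (u * m * u⁻¹ + star (u * m * u⁻¹)) := hTZ _ (hMinv u hu m hm)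
      have h2 : Stmt14.Cen (m + star m) := hTZ m hm
      have h3 : star (u * m * u⁻¹) = (star u)⁻¹ * star m * star u := by
        rw [star_mul, star_mul, star_inv₀, mul_assoc]
      have h4 : (star u)⁻¹ * (m + star m) * star u = m + star m := by
        rw [← h2 (star u)⁻¹, mul_assoc, inv_mul_cancel₀ hsU, mul_one]
      have h5 : u * m * u⁻¹ - (star u)⁻¹ * m * star u
          = (u * m * u⁻¹ + star (u * m * u⁻¹)) - (m + star m) := by
        rw [h3]
        have h6 : (star u)⁻¹ * star m * star u
            = (star u)⁻¹ * (m + star m) * star u - (star u)⁻¹ * m * star u := by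
          noncomm_ring
        rw [h6, h4]; noncomm_ring
      rw [h5]
      exact Stmt14.cen_sub h1 h2
    have hw : ∀ m ∈ M, ∀ u : R, u ≠ 0 →
        (star u * u) * m - m * (star u * u)
        = (u * m * u⁻¹ - (star u)⁻¹ * m * star u) * (star u * u) := by
      intro m hm u hu
      have hsU : (star u : R) ≠ 0 := star_ne_zero.mpr hu
      have key : star u * (u * m * u⁻¹ - (star u)⁻¹ * m * star u) * u
          = (star u * u) * m - m * (star u * u) := by
        rw [mul_sub, sub_mul]
        congr 1
        · simp only [mul_assoc, inv_mul_cancel₀ hu, mul_one]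
        · simp only [mul_assoc, mul_inv_cancel_left₀ hsU]
      rw [← key, ← mul_assoc, ← hstarmc m hm u hu (star u), mul_assoc]
    by_cases hall : ∀ u : R, u ≠ 0 → ∀ m ∈ M, (star u * u) * m = m * (star u * u)
    · -- all norms are central, hence all traces are central
      have hnorm : ∀ u : R, Stmt14.Cen (star u * u) := by
        intro u
        rcases eq_or_ne u 0 with rfl | hu
        · intro x; simp
        · exact hcen _ (hall u hu)
      have hTD : ∀ y : R, Stmt14.Cen (y + star y) := by
        intro y
        have key : y + star y = star (1 + y) * (1 + y) - star y * y - 1 := by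
          rw [star_add, star_one]; noncomm_ring
        rw [key]
        exact Stmt14.cen_sub (Stmt14.cen_sub (hnorm (1+y)) (hnorm y)) Stmt14.cen_one
      intro x y r
      calc ((x + star x) * (y + star y)) * r
          = (x + star x) * ((y + star y) * r) := by rw [mul_assoc]
        _ = (x + star x) * (r * (y + star y)) := by rw [hTD y r]
        _ = ((x + star x) * r) * (y + star y) := by rw [mul_assoc]
        _ = (r * (x + star x)) * (y + star y) := by rw [hTD x r]
        _ = r * ((x + star x) * (y + star y)) := by rw [mul_assoc]
    · -- impossible: leads to M ⊆ Z + Z m₀ and commutativity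
      exfalso
      push_neg at hall
      obtain ⟨u₀, hu₀, m₀, hm₀, hnc⟩ := hall
      have hn₀ne : (star u₀ * u₀ : R) ≠ 0 := mul_ne_zero (star_ne_zero.mpr hu₀) hu₀
      have hβc : ∀ m ∈ M, Stmt14.Cen (u₀ * m * u₀⁻¹ - (star u₀)⁻¹ * m * star u₀) :=
        fun m hm => hstarmc m hm u₀ hu₀
      have hwn : ∀ m ∈ M, (star u₀ * u₀) * m - m * (star u₀ * u₀)
          = (u₀ * m * u₀⁻¹ - (star u₀)⁻¹ * m * star u₀) * (star u₀ * u₀) :=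
        fun m hm => hw m hm u₀ hu₀
      set n₀ : R := star u₀ * u₀ with hn₀def
      have hβ₀ : u₀ * m₀ * u₀⁻¹ - (star u₀)⁻¹ * m₀ * star u₀ ≠ 0 := by
        intro h
        apply hnc
        have h1 := hwn m₀ hm₀
        rw [h, zero_mul] at h1
        exact sub_eq_zero.mp h1
      -- every element of M lies in Z + Z m₀
      have hkey : ∀ m' ∈ M, ∃ z z' : R, Stmt14.Cen z ∧ Stmt14.Cen z' ∧ m' = z + z' * m₀ := by
        intro m' hm'
        exact Stmt14.key_step hn₀ne hβ₀ (hβc m₀ hm₀) (hβc m' hm') (hβc _ (M.mul_mem hm₀ hm'))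
          (hwn m₀ hm₀) (hwn m' hm') (hwn (m₀ * m') (M.mul_mem hm₀ hm'))
      obtain ⟨ζ₁, ζ₂, hζ₁, hζ₂, hm₀sq⟩ := hkey (m₀ * m₀) (M.mul_mem hm₀ hm₀)
      set F : Set R := {x | ∃ z z' : R, Stmt14.Cen z ∧ Stmt14.Cen z' ∧ x = z + z' * m₀} with hF
      have hm₀F : m₀ ∈ F := ⟨0, 1, Stmt14.cen_zero, Stmt14.cen_one, by simp⟩
      have hFsub : ∀ a ∈ F, ∀ c ∈ F, a - c ∈ F := by
        rintro a ⟨z, z', hz, hz', rfl⟩ c ⟨w, w', hw, hw', rfl⟩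
        exact ⟨z - w, z' - w', Stmt14.cen_sub hz hw, Stmt14.cen_sub hz' hw', by noncomm_ring⟩
      have hFmul : ∀ a ∈ F, ∀ c ∈ F, a * c ∈ F := by
        rintro a ⟨z, z', hz, hz', rfl⟩ c ⟨w, w', hw, hw', rfl⟩
        refine ⟨z * w + z' * w' * ζ₁, z * w' + z' * w + z' * w' * ζ₂,
          Stmt14.cen_add (Stmt14.cen_mul hz hw) (Stmt14.cen_mul (Stmt14.cen_mul hz' hw') hζ₁),
          Stmt14.cen_add (Stmt14.cen_add (Stmt14.cen_mul hz hw') (Stmt14.cen_mul hz' hw))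
            (Stmt14.cen_mul (Stmt14.cen_mul hz' hw') hζ₂), ?_⟩
        rw [Stmt14.quad_mul hw hw', hm₀sq]
        noncomm_ring
      have hFinv : ∀ a ∈ F, a⁻¹ ∈ F := by
        rintro a ⟨z, z', hz, hz', rfl⟩
        rcases eq_or_ne (z + z' * m₀) 0 with hp0 | hp0
        · rw [hp0, inv_zero]
          exact ⟨0, 0, Stmt14.cen_zero, Stmt14.cen_zero, by simp⟩
        · have hnnc : Stmt14.Cen (z * z + z * z' * ζ₂ - z' * z' * ζ₁) :=
            Stmt14.cen_sub (Stmt14.cen_add (Stmt14.cen_mul hz hz)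
              (Stmt14.cen_mul (Stmt14.cen_mul hz hz') hζ₂))
              (Stmt14.cen_mul (Stmt14.cen_mul hz' hz') hζ₁)
          have hpp : (z + z' * m₀) * ((z + z' * ζ₂) - z' * m₀)
              = z * z + z * z' * ζ₂ - z' * z' * ζ₁ := by
            have h := Stmt14.quad_mul (m := m₀) (z := z) (z' := z')
              (Stmt14.cen_add hz (Stmt14.cen_mul hz' hζ₂)) (Stmt14.cen_neg hz')
            rw [hm₀sq] at h
            have e0 : (z + z' * m₀) * ((z + z' * ζ₂) - z' * m₀)
                = (z + z' * m₀) * ((z + z' * ζ₂) + (-z') * m₀) := by noncomm_ring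
            rw [e0, h]
            have e2 : z * (-z') = -(z' * z) := by rw [mul_neg, hz z']
            rw [e2]
            noncomm_ring
          by_cases hnn : z * z + z * z' * ζ₂ - z' * z' * ζ₁ = 0
          · exfalso
            have hzero : (z + z' * m₀) * ((z + z' * ζ₂) - z' * m₀) = 0 := by rw [hpp, hnn]
            have hpbar : (z + z' * ζ₂) - z' * m₀ = 0 :=
              (mul_eq_zero.mp hzero).resolve_left hp0
            rcases eq_or_ne z' 0 with hz'0 | hz'0
            · apply hp0
              rw [hz'0] at hpbar ⊢
              simp only [zero_mul, sub_zero, add_zero] at hpbar ⊢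
              simpa using hpbar
            · apply hnc
              have h7 : z + z' * ζ₂ = z' * m₀ := sub_eq_zero.mp hpbar
              have hm₀c : Stmt14.Cen m₀ := by
                have e8 : m₀ = z'⁻¹ * (z + z' * ζ₂) := by
                  rw [h7, ← mul_assoc, inv_mul_cancel₀ hz'0, one_mul]
                rw [e8]
                exact Stmt14.cen_mul (Stmt14.cen_inv hz')
                  (Stmt14.cen_add hz (Stmt14.cen_mul hz' hζ₂))
              exact (hm₀c n₀).symm
          · have hinv_eq : (z + z' * m₀)⁻¹
                = ((z + z' * ζ₂) - z' * m₀) * (z * z + z * z' * ζ₂ - z' * z' * ζ₁)⁻¹ := by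
              apply inv_eq_of_mul_eq_one_right
              rw [← mul_assoc, hpp, mul_inv_cancel₀ hnn]
            rw [hinv_eq]
            refine ⟨(z + z' * ζ₂) * (z * z + z * z' * ζ₂ - z' * z' * ζ₁)⁻¹,
              -(z' * (z * z + z * z' * ζ₂ - z' * z' * ζ₁)⁻¹),
              Stmt14.cen_mul (Stmt14.cen_add hz (Stmt14.cen_mul hz' hζ₂)) (Stmt14.cen_inv hnnc),
              Stmt14.cen_neg (Stmt14.cen_mul hz' (Stmt14.cen_inv hnnc)), ?_⟩
            have e3 : z' * m₀ * (z * z + z * z' * ζ₂ - z' * z' * ζ₁)⁻¹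
                = z' * (z * z + z * z' * ζ₂ - z' * z' * ζ₁)⁻¹ * m₀ := by
              rw [mul_assoc, ← (Stmt14.cen_inv hnnc) m₀, ← mul_assoc]
            calc ((z + z' * ζ₂) - z' * m₀) * (z * z + z * z' * ζ₂ - z' * z' * ζ₁)⁻¹
                = (z + z' * ζ₂) * (z * z + z * z' * ζ₂ - z' * z' * ζ₁)⁻¹
                  - z' * m₀ * (z * z + z * z' * ζ₂ - z' * z' * ζ₁)⁻¹ := by noncomm_ring
              _ = (z + z' * ζ₂) * (z * z + z * z' * ζ₂ - z' * z' * ζ₁)⁻¹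
                  + (-(z' * (z * z + z * z' * ζ₂ - z' * z' * ζ₁)⁻¹)) * m₀ := by
                  rw [e3]; noncomm_ring
      have hFconj : ∀ u : R, u ≠ 0 → ∀ a ∈ F, u * a * u⁻¹ ∈ F := by
        intro u hu a ha
        obtain ⟨z, z', hz, hz', rfl⟩ := ha
        obtain ⟨ζ₃, ζ₄, hζ₃, hζ₄, hcm⟩ := hkey (u * m₀ * u⁻¹) (hMinv u hu m₀ hm₀)
        refine ⟨z + z' * ζ₃, z' * ζ₄, Stmt14.cen_add hz (Stmt14.cen_mul hz' hζ₃),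
          Stmt14.cen_mul hz' hζ₄, ?_⟩
        have a1 : u * z = z * u := (hz u).symm
        have a2 : u * z' = z' * u := (hz' u).symm
        have e1 : u * (z + z' * m₀) * u⁻¹ = z * (u * u⁻¹) + z' * (u * m₀ * u⁻¹) := by
          calc u * (z + z' * m₀) * u⁻¹
              = (u * z) * u⁻¹ + ((u * z') * m₀) * u⁻¹ := by noncomm_ring
            _ = (z * u) * u⁻¹ + ((z' * u) * m₀) * u⁻¹ := by rw [a1, a2]
            _ = z * (u * u⁻¹) + z' * (u * m₀ * u⁻¹) := by noncomm_ring
        rw [e1, mul_inv_cancel₀ hu, mul_one, hcm]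
        noncomm_ring
      by_cases hFuniv : ∀ x : R, x ∈ F
      · obtain ⟨m, hm, r, hr⟩ := hMnoncentral
        apply hr
        obtain ⟨z, z', hz, hz', hmE⟩ := hFuniv m
        obtain ⟨w, w', hw, hw', hrE⟩ := hFuniv r
        rw [hmE, hrE, Stmt14.quad_mul hw hw', Stmt14.quad_mul hz hz',
          hz w, hz w', hz' w, hz' w']
        noncomm_ring
      · obtain ⟨p, hp⟩ := not_forall.mp hFuniv
        have hall2 := Stmt14.cbh F hFsub hFmul hFinv hFconj p hp m₀ hm₀F n₀
        exact hnc hall2.symm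
  · push_neg at hTZ
    obtain ⟨m₁, hm₁, hm₁nc⟩ := hTZ
    by_cases h2 : (2 : R) = 0
    · -- char 2 case
      -- basic char-2 facts
      have hadd : ∀ x : R, x + x = 0 := by
        intro x
        have : (2 : R) * x = 0 := by rw [h2, zero_mul]
        rwa [two_mul] at this
      have hneg : ∀ x : R, -x = x := fun x => neg_eq_of_add_eq_zero_left (hadd x)
      have hsub : ∀ a c : R, a - c = a + c := fun a c => by rw [sub_eq_add_neg, hneg c]
      have heq_of_add : ∀ a c : R, a + c = 0 → a = c := by
        intro a c h
        have := eq_neg_of_add_eq_zero_left h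
        rwa [hneg c] at this
      have hzero_of_eq : ∀ a c : R, a = c → a + c = 0 := by
        intro a c h; rw [h]; exact hadd c
      -- the noncentral trace t
      obtain ⟨t, htdef⟩ : ∃ t : R, t = m₁ + star m₁ := ⟨_, rfl⟩
      have ht_mem : t ∈ M := by rw [htdef]; exact htrM m₁ hm₁
      have hts : star t = t := by rw [htdef]; exact htrs m₁
      have htnc : ¬ Stmt14.Cen t := by rw [htdef]; exact hm₁nc
      have hbrt : ∀ m ∈ M, b * (m * t - t * m) = (m * t - t * m) * b := by
        intro m hm; rw [htdef]; exact hbrC m hm m₁ hm₁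
      have hL4t : ∀ k ∈ M, b * k = k * b → k * t = t * k := by
        intro k hk hkb; rw [htdef]; exact hL4c k hk hkb m₁ hm₁
      have htrt : ∀ m ∈ M, (m + star m) * t = t * (m + star m) := by
        intro m hm; rw [htdef]; exact hL5 m hm m₁ hm₁
      -- t² is central
      have hμ : Stmt14.Cen (t * t) := by
        apply hcen
        intro m hm
        have hcM : m * t - t * m ∈ M := M.sub_mem (M.mul_mem hm ht_mem) (M.mul_mem ht_mem hm)
        have hct : (m * t - t * m) * t = t * (m * t - t * m) := hL4t _ hcM (hbrt m hm)
        have e : m * (t * t) - (t * t) * m = (m * t - t * m) * t + t * (m * t - t * m) := by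
          noncomm_ring
        have e2 : (m * t - t * m) * t + t * (m * t - t * m) = 0 := by
          rw [hct]; exact hadd _
        rw [e2] at e
        exact (sub_eq_zero.mp e).symm
      -- K-membership helpers  (x ∈ K ↔ x * t = t * x)
      have hKmul : ∀ k k' : R, k * t = t * k → k' * t = t * k' → (k * k') * t = t * (k * k') := by
        intro k k' h h'; rw [mul_assoc, h', ← mul_assoc, h, mul_assoc]
      have hKadd : ∀ k k' : R, k * t = t * k → k' * t = t * k' → (k + k') * t = t * (k + k') := by
        intro k k' h h'; rw [add_mul, mul_add, h, h']
      have hKinv : ∀ k : R, k * t = t * k → k⁻¹ * t = t * k⁻¹ := by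
        intro k h
        exact (Stmt14.comm_inv (a := t) (c := k) h.symm).symm
      have hKstar : ∀ k : R, k * t = t * k → (star k) * t = t * (star k) := by
        intro k h
        have := congrArg star h
        rw [star_mul, star_mul, hts] at this
        exact this.symm
      have htK : t * t = t * t := rfl
      -- delta values are in K
      have hδK : ∀ x : R, (x * t + t * x) * t = t * (x * t + t * x) := by
        intro x
        have e : (x * t + t * x) * t - t * (x * t + t * x) = x * (t * t) - (t * t) * x := by
          noncomm_ring
        have e2 : x * (t * t) - (t * t) * x = 0 := sub_eq_zero_of_eq (hμ x).symm
        rw [e2] at e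
        exact sub_eq_zero.mp e
      -- choose x₀ with nonzero delta, and build w
      have hx₀ : ∃ x₀ : R, t * x₀ ≠ x₀ * t := by
        by_contra hcon
        push_neg at hcon
        exact htnc (fun x => hcon x)
      obtain ⟨x₀, hx₀ne⟩ := hx₀
      have hδ0 : x₀ * t + t * x₀ ≠ 0 := by
        intro h
        exact hx₀ne (heq_of_add _ _ h).symm
      obtain ⟨w, hwdef⟩ : ∃ w : R, w = (x₀ * t + t * x₀)⁻¹ * x₀ := ⟨_, rfl⟩
      have hinvK : (x₀ * t + t * x₀)⁻¹ * t = t * (x₀ * t + t * x₀)⁻¹ :=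
        hKinv _ (hδK x₀)
      have hδw : w * t + t * w = 1 := by
        rw [hwdef]
        calc (x₀ * t + t * x₀)⁻¹ * x₀ * t + t * ((x₀ * t + t * x₀)⁻¹ * x₀)
            = (x₀ * t + t * x₀)⁻¹ * (x₀ * t) + (t * (x₀ * t + t * x₀)⁻¹) * x₀ := by
              noncomm_ring
          _ = (x₀ * t + t * x₀)⁻¹ * (x₀ * t) + ((x₀ * t + t * x₀)⁻¹ * t) * x₀ := by
              rw [hinvK]
          _ = (x₀ * t + t * x₀)⁻¹ * (x₀ * t + t * x₀) := by noncomm_ring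
          _ = 1 := inv_mul_cancel₀ hδ0
      have hwtsub : w * t - t * w = 1 := by rw [hsub]; exact hδw
      -- products with w and K elements
      have hδwk : ∀ k : R, k * t = t * k → (w * k) * t + t * (w * k) = k := by
        intro k h
        calc (w * k) * t + t * (w * k) = w * (k * t) + (t * w) * k := by noncomm_ring
          _ = w * (t * k) + (t * w) * k := by rw [h]
          _ = (w * t + t * w) * k := by noncomm_ring
          _ = k := by rw [hδw, one_mul]
      have hwcancel : ∀ k : R, k * t = t * k → (w * k) * t = t * (w * k) → k = 0 := by
        intro k hk hwk
        have h9 := hδwk k hk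
        rw [hwk, hadd] at h9
        exact h9.symm
      -- ∂ preserves K
      have hpdK : ∀ k : R, k * t = t * k → (w * k + k * w) * t = t * (w * k + k * w) := by
        intro k h
        have hks : k * t - t * k = 0 := sub_eq_zero_of_eq h
        have e : (w * k + k * w) * t - t * (w * k + k * w)
            = w * (k * t - t * k) + (k * t - t * k) * w
              + ((w * t - t * w) * k + k * (w * t - t * w)) := by noncomm_ring
        rw [hks, hwtsub] at e
        simp only [mul_zero, zero_mul, mul_one, one_mul, add_zero, zero_add] at e
        rw [hadd k] at e
        exact sub_eq_zero.mp e
      -- γ = w*w is in K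
      have hγK : (w * w) * t = t * (w * w) := by
        have e : (w * w) * t - t * (w * w) = w * (w * t - t * w) + (w * t - t * w) * w := by
          noncomm_ring
        rw [hwtsub] at e
        simp only [mul_one, one_mul] at e
        rw [hadd w] at e
        exact sub_eq_zero.mp e
      -- star w and κ
      have hδsw : (star w) * t + t * (star w) = 1 := by
        have := congrArg star hδw
        rw [star_add, star_mul, star_mul, hts, star_one] at this
        rw [← this]
        exact add_comm _ _
      obtain ⟨κ, hκdef⟩ : ∃ κ : R, κ = w + star w := ⟨_, rfl⟩
      have hκs : star κ = κ := by rw [hκdef, star_add, star_star, add_comm]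
      have hκK : κ * t = t * κ := by
        have e : κ * t + t * κ = (w * t + t * w) + ((star w) * t + t * (star w)) := by
          rw [hκdef]; noncomm_ring
        rw [hδw, hδsw] at e
        rw [hadd 1] at e
        exact heq_of_add _ _ e
      have hsw : star w = w + κ := by
        rw [hκdef, ← add_assoc, hadd w, zero_add]
      -- delta of w + c is 1
      have hδc1 : ∀ c : R, c * t = t * c → (w + c) * t - t * (w + c) = 1 := by
        intro c hc
        have e : (w + c) * t - t * (w + c) = (w * t - t * w) + (c * t - t * c) := by
          noncomm_ring
        rw [hwtsub, sub_eq_zero_of_eq hc, add_zero] at e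
        exact e
      have hu_ne : ∀ c : R, c * t = t * c → w + c ≠ 0 := by
        intro c hc h
        have e := hδc1 c hc
        rw [h] at e
        simp at e
      have hδc1s : ∀ c : R, c * t = t * c →
          (star (w + c)) * t - t * (star (w + c)) = 1 := by
        intro c hc
        have hst : star (w + c) = w + (κ + star c) := by
          rw [star_add, hsw]; abel
        rw [hst]
        exact hδc1 _ (hKadd _ _ hκK (hKstar c hc))
      -- the key family: (w+c)⁻¹ + (star (w+c))⁻¹ commutes with t
      have heK : ∀ c : R, c * t = t * c →
          ((w + c)⁻¹ + (star (w + c))⁻¹) * t = t * ((w + c)⁻¹ + (star (w + c))⁻¹) := by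
        intro c hc
        have hu := hu_ne c hc
        have hsu : star (w + c) ≠ 0 := star_ne_zero.mpr hu
        have hmem : (w + c) * t * (w + c)⁻¹ ∈ M := hMinv _ hu t ht_mem
        have htr := htrt _ hmem
        have s1 : (w + c) * t * (w + c)⁻¹ = t + (w + c)⁻¹ := by
          have e := sub_eq_iff_eq_add.mp (hδc1 c hc)
          calc (w + c) * t * (w + c)⁻¹ = (1 + t * (w + c)) * (w + c)⁻¹ := by rw [e]
            _ = (w + c)⁻¹ + t * ((w + c) * (w + c)⁻¹) := by noncomm_ring
            _ = t + (w + c)⁻¹ := by rw [mul_inv_cancel₀ hu, mul_one, add_comm]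
        have e2 : t * star (w + c) = star (w + c) * t + 1 := by
          apply heq_of_add
          have h9 : (star (w + c)) * t + t * (star (w + c)) = 1 := by
            rw [← hsub]; exact hδc1s c hc
          calc t * star (w + c) + (star (w + c) * t + 1)
              = (star (w + c) * t + t * star (w + c)) + 1 := by abel
            _ = 0 := by rw [h9]; exact hadd 1
        have s2 : star ((w + c) * t * (w + c)⁻¹) = t + (star (w + c))⁻¹ := by
          rw [star_mul, star_mul, hts, star_inv₀, e2, mul_add, ← mul_assoc,
            inv_mul_cancel₀ hsu, one_mul, mul_one, add_comm]
        have s3 : (w + c) * t * (w + c)⁻¹ + star ((w + c) * t * (w + c)⁻¹)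
            = (w + c)⁻¹ + (star (w + c))⁻¹ := by
          rw [s2, s1]
          calc (t + (w + c)⁻¹) + (t + (star (w + c))⁻¹)
              = (t + t) + ((w + c)⁻¹ + (star (w + c))⁻¹) := by abel
            _ = (w + c)⁻¹ + (star (w + c))⁻¹ := by rw [hadd t, zero_add]
        rw [s3] at htr
        exact htr
      -- squares (w+c)² commute with t, and the inverse formula
      have hsqK : ∀ c : R, c * t = t * c →
          ((w + c) * (w + c)) * t = t * ((w + c) * (w + c)) := by
        intro c hc
        have e : (w + c) * (w + c) = w * w + (w * c + c * w) + c * c := by noncomm_ring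
        rw [e]
        exact hKadd _ _ (hKadd _ _ hγK (hpdK c hc)) (hKmul c c hc hc)
      have hinvf : ∀ c : R, c * t = t * c →
          (w + c)⁻¹ = (w + c) * ((w + c) * (w + c))⁻¹ := by
        intro c hc
        apply inv_eq_of_mul_eq_one_right
        rw [← mul_assoc, mul_inv_cancel₀ (mul_ne_zero (hu_ne c hc) (hu_ne c hc))]
      -- THE fundamental identity : (w+c)² = (w + (κ + star c))²
      have hRR : ∀ c : R, c * t = t * c →
          (w + c) * (w + c) = (w + (κ + star c)) * (w + (κ + star c)) := by
        intro c hc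
        have hcK2 : (κ + star c) * t = t * (κ + star c) := hKadd _ _ hκK (hKstar c hc)
        have hstar : star (w + c) = w + (κ + star c) := by rw [star_add, hsw]; abel
        have key : ∀ X Y : R, X * t = t * X → Y * t = t * Y →
            (w + c)⁻¹ + (star (w + c))⁻¹ = w * X + Y → X = 0 := by
          intro X Y hX hY hXY
          apply hwcancel X hX
          have hek := heK c hc
          rw [hXY] at hek
          have e1 : (w * X) * t = (w * X + Y) * t - Y * t := by noncomm_ring
          rw [e1, hek, hY]
          noncomm_ring
        have heval : (w + c)⁻¹ + (star (w + c))⁻¹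
            = w * (((w + c) * (w + c))⁻¹ + ((w + (κ + star c)) * (w + (κ + star c)))⁻¹)
              + (c * ((w + c) * (w + c))⁻¹
                 + (κ + star c) * ((w + (κ + star c)) * (w + (κ + star c)))⁻¹) := by
          rw [hstar, hinvf c hc, hinvf _ hcK2]
          noncomm_ring
        have hX0 := key _ _
          (hKadd _ _ (hKinv _ (hsqK c hc)) (hKinv _ (hsqK _ hcK2)))
          (hKadd _ _ (hKmul _ _ hc (hKinv _ (hsqK c hc)))
            (hKmul _ _ hcK2 (hKinv _ (hsqK _ hcK2)))) heval
        have hinveq : ((w + c) * (w + c))⁻¹ = ((w + (κ + star c)) * (w + (κ + star c)))⁻¹ :=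
          heq_of_add _ _ hX0
        exact inv_injective hinveq
      -- expansion of the fundamental identity
      have hEQbig : ∀ c : R, c * t = t * c →
          w * c + c * w + c * c
          = (w * κ + κ * w) + (w * star c + star c * w) + κ * κ
            + (κ * star c + star c * κ) + star c * star c := by
        intro c hc
        have e := hRR c hc
        have e1 : (w + c) * (w + c) = w * w + (w * c + c * w + c * c) := by noncomm_ring
        have e2 : (w + (κ + star c)) * (w + (κ + star c))
            = w * w + ((w * κ + κ * w) + (w * star c + star c * w) + κ * κ
              + (κ * star c + star c * κ) + star c * star c) := by noncomm_ring
        rw [e1, e2] at e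
        exact add_left_cancel e
      -- ∂κ = κ²
      have hpdκ : w * κ + κ * w = κ * κ := by
        have e := hEQbig 0 (by simp)
        simp only [star_zero, mul_zero, zero_mul, add_zero, zero_add] at e
        exact heq_of_add _ _ e.symm
      -- canonical zero-form of the fundamental identity
      have hEQ2 : ∀ c : R, c * t = t * c →
          (w * c + c * w) + c * c + ((w * star c + star c * w) + star c * star c)
            + (κ * star c + star c * κ) = 0 := by
        intro c hc
        have e := hEQbig c hc
        calc (w * c + c * w) + c * c + ((w * star c + star c * w) + star c * star c)
              + (κ * star c + star c * κ)
            = (w * c + c * w + c * c)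
              + ((w * star c + star c * w) + star c * star c + (κ * star c + star c * κ)) := by
              abel
          _ = ((w * κ + κ * w) + (w * star c + star c * w) + κ * κ
                + (κ * star c + star c * κ) + star c * star c)
              + ((w * star c + star c * w) + star c * star c + (κ * star c + star c * κ)) := by
              rw [e]
          _ = ((w * κ + κ * w) + κ * κ)
              + (((w * star c + star c * w) + (w * star c + star c * w))
                + ((κ * star c + star c * κ) + (κ * star c + star c * κ))
                + ((star c * star c) + (star c * star c))) := by abel
          _ = 0 := by
              rw [hpdκ, hadd (κ * κ), hadd (w * star c + star c * w),
                hadd (κ * star c + star c * κ), hadd (star c * star c)]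
              simp
      -- κ commutes with symmetric elements of K
      have hκsymm0 : ∀ s : R, s * t = t * s → star s = s → κ * s + s * κ = 0 := by
        intro s hs hss
        have e := hEQ2 s hs
        rw [hss] at e
        have i : (w * s + s * w) + s * s + ((w * s + s * w) + s * s) + (κ * s + s * κ)
            = (((w * s + s * w) + s * s) + ((w * s + s * w) + s * s)) + (κ * s + s * κ) := by
          abel
        rw [i, hadd ((w * s + s * w) + s * s), zero_add] at e
        exact e
      have hκsymm : ∀ s : R, s * t = t * s → star s = s → κ * s = s * κ :=
        fun s hs hss => heq_of_add _ _ (hκsymm0 s hs hss)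
      -- symmetric elements of K commute with traces of K-elements
      have hsymτ0 : ∀ c s : R, c * t = t * c → s * t = t * s → star s = s →
          (c * s + s * c) + (star c * s + s * star c) = 0 := by
        intro c s hc hs hss
        have e1 := hEQ2 (c + s) (hKadd c s hc hs)
        rw [star_add, hss] at e1
        have e2 := hEQ2 c hc
        have e3 := hEQ2 s hs
        rw [hss] at e3
        have i : (w * (c + s) + (c + s) * w) + (c + s) * (c + s)
              + ((w * (star c + s) + (star c + s) * w) + (star c + s) * (star c + s))
              + (κ * (star c + s) + (star c + s) * κ)
            = ((w * c + c * w) + c * c + ((w * star c + star c * w) + star c * star c)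
                + (κ * star c + star c * κ))
              + ((w * s + s * w) + s * s + ((w * s + s * w) + s * s) + (κ * s + s * κ))
              + ((c * s + s * c) + (star c * s + s * star c)) := by noncomm_ring
        rw [i, e2, e3, zero_add, zero_add] at e1
        exact e1
      have hsymτ : ∀ c s : R, c * t = t * c → s * t = t * s → star s = s →
          s * (c + star c) = (c + star c) * s := by
        intro c s hc hs hss
        apply heq_of_add
        have i : s * (c + star c) + (c + star c) * s
            = (c * s + s * c) + (star c * s + s * star c) := by noncomm_ring
        rw [i]
        exact hsymτ0 c s hc hs hss
      -- the master identity ID2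
      have hID2 : ∀ c : R, c * t = t * c →
          (w * (c + star c) + (c + star c) * w) + (c + star c) * (c + star c)
            + (c * (c + star c) + (c + star c) * c) + (κ * c + c * κ) = 0 := by
        intro c hc
        obtain ⟨τc, hτ⟩ : ∃ z : R, z = c + star c := ⟨_, rfl⟩
        rw [← hτ]
        have hsc : star c = c + τc := by rw [hτ, ← add_assoc, hadd, zero_add]
        have hτK : τc * t = t * τc := by rw [hτ]; exact hKadd _ _ hc (hKstar c hc)
        have hτs : star τc = τc := by rw [hτ, star_add, star_star, add_comm]
        have hκτ0 : κ * τc + τc * κ = 0 := hκsymm0 τc hτK hτs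
        have e := hEQ2 c hc
        rw [hsc] at e
        have i : (w * c + c * w) + c * c
              + ((w * (c + τc) + (c + τc) * w) + (c + τc) * (c + τc))
              + (κ * (c + τc) + (c + τc) * κ)
            = ((w * τc + τc * w) + τc * τc + (c * τc + τc * c) + (κ * c + c * κ))
              + (κ * τc + τc * κ)
              + (((w * c + c * w) + (w * c + c * w)) + (c * c + c * c)) := by noncomm_ring
        rw [i, hκτ0, hadd (w * c + c * w), hadd (c * c)] at e
        simpa using e
      -- K is closed under subtraction
      have hKsub : ∀ k k' : R, k * t = t * k → k' * t = t * k' → (k - k') * t = t * (k - k') := by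
        intro k k' h h'; rw [sub_mul, mul_sub, h, h']
      -- ======================  MAIN CLAIM : every element of K is symmetric =====================
      have hτK0 : ∀ k : R, k * t = t * k → k + star k = 0 := by
        by_contra hS2
        push_neg at hS2
        obtain ⟨k₀, hk₀K, hk₀ψ⟩ := hS2
        by_cases hτL : ∀ c : R, c * t = t * c → ∀ k : R, k * t = t * k →
            (c + star c) * k = k * (c + star c)
        · by_cases hκL : ∀ k : R, k * t = t * k → κ * k = k * κ
          · -- CASE I : τ(K) ⊆ Z(K) and κ ∈ Z(K)
            have hψK : (k₀ + star k₀) * t = t * (k₀ + star k₀) :=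
              hKadd _ _ hk₀K (hKstar _ hk₀K)
            have hψinv_s : star (k₀ + star k₀)⁻¹ = (k₀ + star k₀)⁻¹ := by
              rw [star_inv₀, htrs]
            have hτc₁ : (k₀ + star k₀)⁻¹ * k₀ + star ((k₀ + star k₀)⁻¹ * k₀) = 1 := by
              rw [star_mul, hψinv_s]
              have hcomm1 : (k₀ + star k₀) * star k₀ = star k₀ * (k₀ + star k₀) :=
                hτL k₀ hk₀K (star k₀) (hKstar _ hk₀K)
              have hcomm2 : star k₀ * (k₀ + star k₀)⁻¹ = (k₀ + star k₀)⁻¹ * star k₀ :=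
                Stmt14.comm_inv hcomm1.symm
              rw [hcomm2, ← mul_add, inv_mul_cancel₀ hk₀ψ]
            have hc₁K : ((k₀ + star k₀)⁻¹ * k₀) * t = t * ((k₀ + star k₀)⁻¹ * k₀) :=
              hKmul _ _ (hKinv _ hψK) hk₀K
            have hid := hID2 _ hc₁K
            rw [hτc₁] at hid
            simp only [mul_one, one_mul] at hid
            have hκc₁ : κ * ((k₀ + star k₀)⁻¹ * k₀) + ((k₀ + star k₀)⁻¹ * k₀) * κ = 0 := by
              rw [hκL _ hc₁K]; exact hadd _
            rw [hadd w, hadd ((k₀ + star k₀)⁻¹ * k₀), hκc₁] at hid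
            simp at hid
          · -- CASE I' : τ(K) ⊆ Z(K) but κ ∉ Z(K)
            push_neg at hκL
            obtain ⟨k₁, hk₁K, hk₁κ⟩ := hκL
            have he₁ne : κ * k₁ + k₁ * κ ≠ 0 := fun h => hk₁κ (heq_of_add _ _ h)
            have hτ₁s : star (k₁ + star k₁) = k₁ + star k₁ := htrs k₁
            have hτ₁K : (k₁ + star k₁) * t = t * (k₁ + star k₁) :=
              hKadd _ _ hk₁K (hKstar _ hk₁K)
            have he₁s : star (κ * k₁ + k₁ * κ) = κ * k₁ + k₁ * κ := by
              rw [star_add, star_mul, star_mul, hκs]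
              obtain ⟨τ₁, hτ₁⟩ : ∃ z : R, z = k₁ + star k₁ := ⟨_, rfl⟩
              have hsk₁ : star k₁ = k₁ + τ₁ := by rw [hτ₁, ← add_assoc, hadd, zero_add]
              have hκτ₁ : κ * τ₁ = τ₁ * κ := by
                rw [hτ₁]; exact hκsymm _ hτ₁K hτ₁s
              rw [hsk₁]
              calc (k₁ + τ₁) * κ + κ * (k₁ + τ₁)
                  = (κ * k₁ + k₁ * κ) + (κ * τ₁ + τ₁ * κ) := by noncomm_ring
                _ = (κ * k₁ + k₁ * κ) + (τ₁ * κ + τ₁ * κ) := by rw [hκτ₁]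
                _ = κ * k₁ + k₁ * κ := by rw [hadd (τ₁ * κ), add_zero]
            have he₁K : (κ * k₁ + k₁ * κ) * t = t * (κ * k₁ + k₁ * κ) :=
              hKadd _ _ (hKmul _ _ hκK hk₁K) (hKmul _ _ hk₁K hκK)
            have hκe₁ : κ * (κ * k₁ + k₁ * κ) = (κ * k₁ + k₁ * κ) * κ :=
              hκsymm _ he₁K he₁s
            obtain ⟨y, hydef⟩ : ∃ y : R, y = k₁ * (κ * k₁ + k₁ * κ)⁻¹ := ⟨_, rfl⟩
            have hyK : y * t = t * y := by
              rw [hydef]; exact hKmul _ _ hk₁K (hKinv _ he₁K)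
            have hκy : κ * y + y * κ = 1 := by
              rw [hydef]
              have hci : κ * (κ * k₁ + k₁ * κ)⁻¹ = (κ * k₁ + k₁ * κ)⁻¹ * κ :=
                Stmt14.comm_inv hκe₁
              calc κ * (k₁ * (κ * k₁ + k₁ * κ)⁻¹) + k₁ * (κ * k₁ + k₁ * κ)⁻¹ * κ
                  = (κ * k₁) * (κ * k₁ + k₁ * κ)⁻¹
                    + k₁ * ((κ * k₁ + k₁ * κ)⁻¹ * κ) := by noncomm_ring
                _ = (κ * k₁) * (κ * k₁ + k₁ * κ)⁻¹
                    + k₁ * (κ * (κ * k₁ + k₁ * κ)⁻¹) := by rw [hci]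
                _ = (κ * k₁ + k₁ * κ) * (κ * k₁ + k₁ * κ)⁻¹ := by noncomm_ring
                _ = 1 := mul_inv_cancel₀ he₁ne
            have hytK : (y * t) * t = t * (y * t) := hKmul _ _ hyK rfl
            obtain ⟨h0, hh0⟩ : ∃ z : R, z = (y * t) + star (y * t) := ⟨_, rfl⟩
            have hh0K : h0 * t = t * h0 := by
              rw [hh0]; exact hKadd _ _ hytK (hKstar _ hytK)
            have hh0L : ∀ k : R, k * t = t * k → h0 * k = k * h0 := by
              intro k hk; rw [hh0]; exact hτL (y * t) hytK k hk
            -- ID2 instance at c = y*t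
            have hid := hID2 (y * t) hytK
            rw [← hh0] at hid
            have hthird : (y * t) * h0 + h0 * (y * t) = 0 := by
              rw [hh0L (y * t) hytK]
              exact hadd _
            have hfourth : κ * (y * t) + (y * t) * κ = t := by
              calc κ * (y * t) + (y * t) * κ = (κ * y) * t + y * (t * κ) := by noncomm_ring
                _ = (κ * y) * t + y * (κ * t) := by rw [← hκK]
                _ = (κ * y + y * κ) * t := by noncomm_ring
                _ = t := by rw [hκy, one_mul]
            rw [hthird, hfourth, add_zero] at hid
            -- hid : (w*h0 + h0*w) + h0*h0 + t = 0
            have teq : t = (w * h0 + h0 * w) + h0 * h0 := by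
              have hid2 : ((w * h0 + h0 * w) + h0 * h0) + t = 0 := by
                calc ((w * h0 + h0 * w) + h0 * h0) + t
                    = (w * h0 + h0 * w) + h0 * h0 + t := by abel
                  _ = 0 := hid
              exact (heq_of_add _ _ hid2).symm
            have e0 : w * ((w * h0 + h0 * w) + h0 * h0) + ((w * h0 + h0 * w) + h0 * h0) * w
                = 1 := by
              rw [← teq]; exact hδw
            have hpart1 : w * (w * h0 + h0 * w) + (w * h0 + h0 * w) * w = 0 := by
              have i : w * (w * h0 + h0 * w) + (w * h0 + h0 * w) * w
                  = ((w * w) * h0 + h0 * (w * w)) + ((w * h0) * w + (w * h0) * w) := by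
                noncomm_ring
              rw [i, hadd ((w * h0) * w), add_zero, ← hh0L (w * w) hγK, hadd]
            have hpart2 : w * (h0 * h0) + (h0 * h0) * w = 0 := by
              have i : w * (h0 * h0) + (h0 * h0) * w + ((h0 * (w * h0)) + (h0 * (w * h0)))
                  = (w * h0 + h0 * w) * h0 + h0 * (w * h0 + h0 * w) := by noncomm_ring
              rw [hadd (h0 * (w * h0)), add_zero] at i
              rw [i, ← hh0L _ (hpdK h0 hh0K)]
              exact hadd _
            have esplit : w * ((w * h0 + h0 * w) + h0 * h0) + ((w * h0 + h0 * w) + h0 * h0) * w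
                = (w * (w * h0 + h0 * w) + (w * h0 + h0 * w) * w)
                  + (w * (h0 * h0) + (h0 * h0) * w) := by noncomm_ring
            rw [esplit, hpart1, hpart2, add_zero] at e0
            exact one_ne_zero e0.symm
        · -- CASE II : some trace of K is not central in K
          push_neg at hτL
          obtain ⟨c₂, hc₂K, k₂, hk₂K, hneq⟩ := hτL
          obtain ⟨ψ, hψdef⟩ : ∃ z : R, z = c₂ + star c₂ := ⟨_, rfl⟩
          have hψK : ψ * t = t * ψ := by
            rw [hψdef]; exact hKadd _ _ hc₂K (hKstar _ hc₂K)
          have hψs : star ψ = ψ := by rw [hψdef]; exact htrs c₂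
          have hψsym : ∀ s : R, s * t = t * s → star s = s → ψ * s = s * ψ := by
            intro s hs hss
            rw [hψdef]
            exact (hsymτ c₂ s hc₂K hs hss).symm
          have hdne : ψ * k₂ ≠ k₂ * ψ := by rw [hψdef]; exact hneq
          -- the symmetric commutator d and the Weyl partner y
          have hd0 : ψ * k₂ - k₂ * ψ ≠ 0 := sub_ne_zero.mpr hdne
          have hχs : ∀ x : R, x * t = t * x → star (ψ * x - x * ψ) = ψ * x - x * ψ := by
            intro x hx
            obtain ⟨τx, hτx⟩ : ∃ z : R, z = x + star x := ⟨_, rfl⟩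
            have hsx : star x = x + τx := by rw [hτx, ← add_assoc, hadd, zero_add]
            have hτxK : τx * t = t * τx := by rw [hτx]; exact hKadd _ _ hx (hKstar _ hx)
            have hτxs : star τx = τx := by rw [hτx]; exact htrs x
            have hψτx : ψ * τx = τx * ψ := hψsym τx hτxK hτxs
            calc star (ψ * x - x * ψ) = star x * ψ - ψ * star x := by
                  rw [star_sub, star_mul, star_mul, hψs]
              _ = (x + τx) * ψ - ψ * (x + τx) := by rw [hsx]
              _ = (x * ψ - ψ * x) + (τx * ψ - ψ * τx) := by noncomm_ring
              _ = x * ψ - ψ * x := by rw [sub_eq_zero_of_eq hψτx.symm, add_zero]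
              _ = -(ψ * x - x * ψ) := by noncomm_ring
              _ = ψ * x - x * ψ := hneg _
          have hχK : ∀ x : R, x * t = t * x → (ψ * x - x * ψ) * t = t * (ψ * x - x * ψ) := by
            intro x hx
            exact hKsub _ _ (hKmul _ _ hψK hx) (hKmul _ _ hx hψK)
          have hψχ : ∀ x : R, x * t = t * x → ψ * (ψ * x - x * ψ) = (ψ * x - x * ψ) * ψ := by
            intro x hx
            exact hψsym _ (hχK x hx) (hχs x hx)
          have hdK : (ψ * k₂ - k₂ * ψ) * t = t * (ψ * k₂ - k₂ * ψ) := hχK k₂ hk₂K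
          have hψd : ψ * (ψ * k₂ - k₂ * ψ) = (ψ * k₂ - k₂ * ψ) * ψ := hψχ k₂ hk₂K
          obtain ⟨y, hydef⟩ : ∃ z : R, z = k₂ * (ψ * k₂ - k₂ * ψ)⁻¹ := ⟨_, rfl⟩
          have hyK : y * t = t * y := by
            rw [hydef]; exact hKmul _ _ hk₂K (hKinv _ hdK)
          have hψy : ψ * y - y * ψ = 1 := by
            rw [hydef]
            have hci : ψ * (ψ * k₂ - k₂ * ψ)⁻¹ = (ψ * k₂ - k₂ * ψ)⁻¹ * ψ :=
              Stmt14.comm_inv hψd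
            calc ψ * (k₂ * (ψ * k₂ - k₂ * ψ)⁻¹) - k₂ * (ψ * k₂ - k₂ * ψ)⁻¹ * ψ
                = (ψ * k₂) * (ψ * k₂ - k₂ * ψ)⁻¹
                  - k₂ * ((ψ * k₂ - k₂ * ψ)⁻¹ * ψ) := by noncomm_ring
              _ = (ψ * k₂) * (ψ * k₂ - k₂ * ψ)⁻¹
                  - k₂ * (ψ * (ψ * k₂ - k₂ * ψ)⁻¹) := by rw [hci]
              _ = (ψ * k₂ - k₂ * ψ) * (ψ * k₂ - k₂ * ψ)⁻¹ := by noncomm_ring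
              _ = 1 := mul_inv_cancel₀ hd0
          -- ρ := trace of y
          obtain ⟨ρ, hρdef⟩ : ∃ z : R, z = y + star y := ⟨_, rfl⟩
          have hρK : ρ * t = t * ρ := by
            rw [hρdef]; exact hKadd _ _ hyK (hKstar _ hyK)
          have hρs : star ρ = ρ := by rw [hρdef]; exact htrs y
          have hψρ : ψ * ρ = ρ * ψ := hψsym ρ hρK hρs
          have hsy : star y = y + ρ := by rw [hρdef, ← add_assoc, hadd, zero_add]
          have hρne : ρ ≠ 0 := by
            intro h
            have hsy' : star y = y := by rw [hsy, h, add_zero]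
            have : ψ * y = y * ψ := hψsym y hyK hsy'
            rw [sub_eq_zero_of_eq this] at hψy
            exact one_ne_zero hψy.symm
          -- every ψ-commuting K-element is symmetric
          have hτK₂ : ∀ a : R, a * t = t * a → ψ * a = a * ψ → a + star a = 0 := by
            intro a haK haψ
            obtain ⟨α, hα⟩ : ∃ z : R, z = a + star a := ⟨_, rfl⟩
            have hsa : star a = a + α := by rw [hα, ← add_assoc, hadd, zero_add]
            have hαs : star α = α := by rw [hα]; exact htrs a
            have hαK : α * t = t * α := by rw [hα]; exact hKadd _ _ haK (hKstar _ haK)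
            have hψα : ψ * α = α * ψ := hψsym α hαK hαs
            have hyaK : (y * a) * t = t * (y * a) := hKmul _ _ hyK haK
            have hσψ : ψ * ((y * a) + star (y * a)) = ((y * a) + star (y * a)) * ψ :=
              hψsym _ (hKadd _ _ hyaK (hKstar _ hyaK)) (htrs (y * a))
            have hstar_ya : star (y * a) = (a + α) * (y + ρ) := by
              rw [star_mul, hsa, hsy]
            rw [hstar_ya] at hσψ
            have lei : ψ * ((y * a) + (a + α) * (y + ρ)) - ((y * a) + (a + α) * (y + ρ)) * ψ
                = (ψ * y - y * ψ) * a + y * (ψ * a - a * ψ)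
                  + ((ψ * (a + α) - (a + α) * ψ) * (y + ρ)
                    + (a + α) * (ψ * (y + ρ) - (y + ρ) * ψ)) := by noncomm_ring
            have z1 : ψ * a - a * ψ = 0 := sub_eq_zero_of_eq haψ
            have z2 : ψ * (a + α) - (a + α) * ψ = 0 := by
              have : ψ * (a + α) = (a + α) * ψ := by
                rw [mul_add, add_mul, haψ, hψα]
              exact sub_eq_zero_of_eq this
            have z3 : ψ * (y + ρ) - (y + ρ) * ψ = 1 := by
              have e : ψ * (y + ρ) - (y + ρ) * ψ = (ψ * y - y * ψ) + (ψ * ρ - ρ * ψ) := by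
                noncomm_ring
              rw [hψy, sub_eq_zero_of_eq hψρ, add_zero] at e
              exact e
            rw [hψy, z1, z2, z3, sub_eq_zero_of_eq hσψ] at lei
            simp only [one_mul, mul_one, mul_zero, zero_mul, add_zero, zero_add] at lei
            have e5 : a + (a + α) = α := by rw [← add_assoc, hadd, zero_add]
            rw [e5] at lei
            rw [hα] at lei
            exact lei.symm
          have hK₂s : ∀ a : R, a * t = t * a → ψ * a = a * ψ → star a = a := by
            intro a haK haψ
            exact (heq_of_add _ _ (hτK₂ a haK haψ)).symm
          have hK₂mulψ : ∀ a a' : R, ψ * a = a * ψ → ψ * a' = a' * ψ →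
              ψ * (a * a') = (a * a') * ψ := by
            intro a a' h h'
            calc ψ * (a * a') = (ψ * a) * a' := by rw [mul_assoc]
              _ = (a * ψ) * a' := by rw [h]
              _ = a * (ψ * a') := by rw [mul_assoc]
              _ = a * (a' * ψ) := by rw [h']
              _ = (a * a') * ψ := by rw [mul_assoc]
          have hK₂comm : ∀ a a' : R, a * t = t * a → ψ * a = a * ψ →
              a' * t = t * a' → ψ * a' = a' * ψ → a * a' = a' * a := by
            intro a a' haK haψ ha'K ha'ψ
            have h1 : star (a * a') = a' * a := by
              rw [star_mul, hK₂s a haK haψ, hK₂s a' ha'K ha'ψ]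
            have h2 : star (a * a') = a * a' :=
              hK₂s (a * a') (hKmul _ _ haK ha'K) (hK₂mulψ a a' haψ ha'ψ)
            rw [h2] at h1
            exact h1
          have hK₂addψ : ∀ a a' : R, ψ * a = a * ψ → ψ * a' = a' * ψ →
              ψ * (a + a') = (a + a') * ψ := by
            intro a a' h h'; rw [mul_add, add_mul, h, h']
          -- ψ commutes with D' images
          have hD'ψ : ∀ x : R, x * t = t * x → ψ * x = x * ψ →
              ψ * (y * x - x * y) = (y * x - x * y) * ψ := by
            intro x hxK hxψ
            have lei : ψ * (y * x - x * y) - (y * x - x * y) * ψ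
                = (ψ * y - y * ψ) * x + y * (ψ * x - x * ψ)
                  - ((ψ * x - x * ψ) * y + x * (ψ * y - y * ψ)) := by noncomm_ring
            rw [hψy, sub_eq_zero_of_eq hxψ] at lei
            simp only [one_mul, mul_one, mul_zero, zero_mul, add_zero, zero_add] at lei
            rw [sub_self] at lei
            exact sub_eq_zero.mp lei
          -- decomposition into K₂-part
          have hdecomp : ∀ x : R, x * t = t * x →
              ψ * (x + y * (ψ * x - x * ψ)) = (x + y * (ψ * x - x * ψ)) * ψ := by
            intro x hx
            have lei : ψ * (x + y * (ψ * x - x * ψ)) - (x + y * (ψ * x - x * ψ)) * ψ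
                = (ψ * x - x * ψ)
                  + ((ψ * y - y * ψ) * (ψ * x - x * ψ)
                    + y * (ψ * (ψ * x - x * ψ) - (ψ * x - x * ψ) * ψ)) := by noncomm_ring
            rw [hψy, sub_eq_zero_of_eq (hψχ x hx)] at lei
            simp only [one_mul, mul_zero, add_zero] at lei
            rw [hadd (ψ * x - x * ψ)] at lei
            exact sub_eq_zero.mp lei
          -- trace formula on y * a for a in K₂
          have hT : ∀ a : R, a * t = t * a → ψ * a = a * ψ →
              (y * a) + star (y * a) = (y * a - a * y) + ρ * a := by
            intro a haK haψ
            calc (y * a) + star (y * a) = y * a + a * (y + ρ) := by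
                  rw [star_mul, hK₂s a haK haψ, hsy]
              _ = (y * a + a * y) + a * ρ := by rw [mul_add]; abel
              _ = (y * a - a * y) + a * ρ := by rw [hsub (y * a) (a * y)]
              _ = (y * a - a * y) + ρ * a := by
                  rw [hK₂comm a ρ haK haψ hρK hψρ]
          -- τ(c) in terms of the decomposition
          have hτT : ∀ c : R, c * t = t * c →
              c + star c = (y * (ψ * c - c * ψ) - (ψ * c - c * ψ) * y)
                + ρ * (ψ * c - c * ψ) := by
            intro c hc
            have h1 : (c + y * (ψ * c - c * ψ)) + star (c + y * (ψ * c - c * ψ)) = 0 :=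
              hτK₂ _ (hKadd _ _ hc (hKmul _ _ hyK (hχK c hc))) (hdecomp c hc)
            have h2 : (y * (ψ * c - c * ψ)) + star (y * (ψ * c - c * ψ))
                = (y * (ψ * c - c * ψ) - (ψ * c - c * ψ) * y) + ρ * (ψ * c - c * ψ) :=
              hT _ (hχK c hc) (hψχ c hc)
            have e : c + star c = ((c + y * (ψ * c - c * ψ)) + star (c + y * (ψ * c - c * ψ)))
                + ((y * (ψ * c - c * ψ)) + star (y * (ψ * c - c * ψ))) := by
              rw [star_add]
              calc c + star c
                  = (c + star c) + ((y * (ψ * c - c * ψ) + y * (ψ * c - c * ψ))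
                    + (star (y * (ψ * c - c * ψ)) + star (y * (ψ * c - c * ψ)))) := by
                    rw [hadd (y * (ψ * c - c * ψ)), hadd (star (y * (ψ * c - c * ψ)))]
                    simp
                _ = ((c + y * (ψ * c - c * ψ)) + (star c + star (y * (ψ * c - c * ψ))))
                    + ((y * (ψ * c - c * ψ)) + star (y * (ψ * c - c * ψ))) := by abel
            rw [h1, zero_add, h2] at e
            exact e
          -- bracket formula
          have hya_br : ∀ x a : R, x * t = t * x → ψ * x = x * ψ →
              a * t = t * a → ψ * a = a * ψ →
              (y * a) * x - x * (y * a) = (y * x - x * y) * a := by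
            intro x a hxK hxψ haK haψ
            have i : (y * a) * x - x * (y * a) = (y * x - x * y) * a + y * (a * x - x * a) := by
              noncomm_ring
            rw [sub_eq_zero_of_eq (hK₂comm a x haK haψ hxK hxψ), mul_zero, add_zero] at i
            exact i
          -- ψ commutes with κ
          have hψκ : ψ * κ = κ * ψ := hψsym κ hκK hκs
          -- membership of T a in K₂
          have hTaK : ∀ a : R, a * t = t * a →
              ((y * a - a * y) + ρ * a) * t = t * ((y * a - a * y) + ρ * a) := by
            intro a haK
            exact hKadd _ _ (hKsub _ _ (hKmul _ _ hyK haK) (hKmul _ _ haK hyK))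
              (hKmul _ _ hρK haK)
          have hTaψ : ∀ a : R, a * t = t * a → ψ * a = a * ψ →
              ψ * ((y * a - a * y) + ρ * a) = ((y * a - a * y) + ρ * a) * ψ := by
            intro a haK haψ
            exact hK₂addψ _ _ (hD'ψ a haK haψ) (hK₂mulψ ρ a hψρ haψ)
          -- the Ω-identity
          have hIDΩ : ∀ a : R, a * t = t * a → ψ * a = a * ψ →
              (w * ((y * a - a * y) + ρ * a) + ((y * a - a * y) + ρ * a) * w)
                + ((y * a - a * y) + ρ * a) * ((y * a - a * y) + ρ * a)
                + (y * ((y * a - a * y) + ρ * a) - ((y * a - a * y) + ρ * a) * y) * a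
                + (y * κ - κ * y) * a = 0 := by
            intro a haK haψ
            have hyaK : (y * a) * t = t * (y * a) := hKmul _ _ hyK haK
            have hid := hID2 (y * a) hyaK
            rw [hT a haK haψ] at hid
            have heq3 : (y * a) * ((y * a - a * y) + ρ * a)
                  + ((y * a - a * y) + ρ * a) * (y * a)
                = (y * ((y * a - a * y) + ρ * a) - ((y * a - a * y) + ρ * a) * y) * a := by
              rw [← hsub ((y * a) * ((y * a - a * y) + ρ * a))
                (((y * a - a * y) + ρ * a) * (y * a))]
              exact hya_br _ a (hTaK a haK) (hTaψ a haK haψ) haK haψ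
            have heq4 : κ * (y * a) + (y * a) * κ = (y * κ - κ * y) * a := by
              rw [add_comm (κ * (y * a)) ((y * a) * κ), ← hsub ((y * a) * κ) (κ * (y * a))]
              exact hya_br κ a hκK hψκ haK haψ
            rw [heq3, heq4] at hid
            exact hid
          have h1K : (1 : R) * t = t * 1 := by rw [one_mul, mul_one]
          have h1ψ : ψ * (1 : R) = 1 * ψ := by rw [one_mul, mul_one]
          have hT1 : (y * (1:R) - 1 * y) + ρ * 1 = ρ := by simp
          -- polarization of the Ω-identity
          have hcross : ∀ a a' : R, a * t = t * a → ψ * a = a * ψ →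
              a' * t = t * a' → ψ * a' = a' * ψ →
              (y * ((y * a - a * y) + ρ * a) - ((y * a - a * y) + ρ * a) * y) * a' + (y * ((y * a' - a' * y) + ρ * a') - ((y * a' - a' * y) + ρ * a') * y) * a = 0 := by
            intro a a' haK haψ ha'K ha'ψ
            have e := hIDΩ (a + a') (hKadd _ _ haK ha'K) (hK₂addψ _ _ haψ ha'ψ)
            have ibig : (w * ((y * (a + a') - (a + a') * y) + ρ * (a + a')) + ((y * (a + a') - (a + a') * y) + ρ * (a + a')) * w) + ((y * (a + a') - (a + a') * y) + ρ * (a + a')) * ((y * (a + a') - (a + a') * y) + ρ * (a + a')) + (y * ((y * (a + a') - (a + a') * y) + ρ * (a + a')) - ((y * (a + a') - (a + a') * y) + ρ * (a + a')) * y) * (a + a') + (y * κ - κ * y) * (a + a')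
                = ((w * ((y * a - a * y) + ρ * a) + ((y * a - a * y) + ρ * a) * w) + ((y * a - a * y) + ρ * a) * ((y * a - a * y) + ρ * a) + (y * ((y * a - a * y) + ρ * a) - ((y * a - a * y) + ρ * a) * y) * a + (y * κ - κ * y) * a) + ((w * ((y * a' - a' * y) + ρ * a') + ((y * a' - a' * y) + ρ * a') * w) + ((y * a' - a' * y) + ρ * a') * ((y * a' - a' * y) + ρ * a') + (y * ((y * a' - a' * y) + ρ * a') - ((y * a' - a' * y) + ρ * a') * y) * a' + (y * κ - κ * y) * a')
                  + ((((y * a - a * y) + ρ * a) * ((y * a' - a' * y) + ρ * a') + ((y * a' - a' * y) + ρ * a') * ((y * a - a * y) + ρ * a))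
                    + ((y * ((y * a - a * y) + ρ * a) - ((y * a - a * y) + ρ * a) * y) * a' + (y * ((y * a' - a' * y) + ρ * a') - ((y * a' - a' * y) + ρ * a') * y) * a)) := by
              noncomm_ring
            rw [ibig, hIDΩ a haK haψ, hIDΩ a' ha'K ha'ψ, zero_add, zero_add] at e
            have hTT : ((y * a - a * y) + ρ * a) * ((y * a' - a' * y) + ρ * a') + ((y * a' - a' * y) + ρ * a') * ((y * a - a * y) + ρ * a) = 0 := by
              rw [hK₂comm _ _ (hTaK a haK) (hTaψ a haK haψ) (hTaK a' ha'K) (hTaψ a' ha'K ha'ψ)]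
              exact hadd _
            rw [hTT, zero_add] at e
            exact e
          -- D' of T a
          have hDT : ∀ a : R, a * t = t * a → ψ * a = a * ψ →
              y * ((y * a - a * y) + ρ * a) - ((y * a - a * y) + ρ * a) * y = (y * ρ - ρ * y) * a := by
            intro a haK haψ
            have e := hcross a 1 haK haψ h1K h1ψ
            rw [hT1, mul_one] at e
            exact heq_of_add _ _ e
          -- D'² = ρ D'
          have hD'2 : ∀ a : R, a * t = t * a → ψ * a = a * ψ →
              y * (y * a - a * y) - (y * a - a * y) * y = ρ * (y * a - a * y) := by
            intro a haK haψ
            have eT : y * ((y * a - a * y) + ρ * a) - ((y * a - a * y) + ρ * a) * y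
                = (y * (y * a - a * y) - (y * a - a * y) * y)
                  + ((y * ρ - ρ * y) * a + ρ * (y * a - a * y)) := by noncomm_ring
            rw [hDT a haK haψ] at eT
            have e4 : ((y * (y * a - a * y) - (y * a - a * y) * y) + ρ * (y * a - a * y))
                  + (y * ρ - ρ * y) * a
                = 0 + (y * ρ - ρ * y) * a := by
              rw [zero_add]
              conv_rhs => rw [eT]
              abel
            exact heq_of_add _ _ (add_right_cancel e4)
          -- D' ρ is nonzero
          have hψrep : ψ = (y * (ψ * c₂ - c₂ * ψ) - (ψ * c₂ - c₂ * ψ) * y)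
              + ρ * (ψ * c₂ - c₂ * ψ) := by
            conv_lhs => rw [hψdef]
            exact hτT c₂ hc₂K
          have hyψ1 : y * ψ - ψ * y = 1 := by
            have e : y * ψ - ψ * y = -(ψ * y - y * ψ) := by noncomm_ring
            rw [e, hψy, hneg]
          have hD'ρ0 : y * ρ - ρ * y ≠ 0 := by
            have e := hDT (ψ * c₂ - c₂ * ψ) (hχK c₂ hc₂K) (hψχ c₂ hc₂K)
            rw [← hψrep, hyψ1] at e
            exact left_ne_zero_of_mul_eq_one e.symm
          -- the ω₁ relation
          have hω1 : (w * ρ + ρ * w) + ρ * ρ + (y * ρ - ρ * y) + (y * κ - κ * y) = 0 := by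
            have e := hIDΩ 1 h1K h1ψ
            rw [hT1, mul_one, mul_one] at e
            exact e
          -- D' kills squares of K₂ elements
          have hD'sq0 : ∀ z : R, z * t = t * z → ψ * z = z * ψ →
              y * (z * z) - (z * z) * y = 0 := by
            intro z hzK hzψ
            have hDzK : (y * z - z * y) * t = t * (y * z - z * y) :=
              hKsub _ _ (hKmul _ _ hyK hzK) (hKmul _ _ hzK hyK)
            have i : y * (z * z) - (z * z) * y
                = (y * z - z * y) * z + z * (y * z - z * y) := by noncomm_ring
            rw [i, hK₂comm z (y * z - z * y) hzK hzψ hDzK (hD'ψ z hzK hzψ)]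
            exact hadd _
          -- the twist element f and the interchange rule
          obtain ⟨f, hfdef⟩ : ∃ z : R, z = ψ * (w * y - y * w) - (w * y - y * w) * ψ := ⟨_, rfl⟩
          have hdyK : (w * y - y * w) * t = t * (w * y - y * w) := by
            rw [hsub]; exact hpdK y hyK
          have hfK : f * t = t * f := by rw [hfdef]; exact hχK _ hdyK
          have hfs : star f = f := by rw [hfdef]; exact hχs _ hdyK
          have hψf : ψ * f = f * ψ := hψsym f hfK hfs
          have heeψ : ψ * ((w * y - y * w) + y * f) = ((w * y - y * w) + y * f) * ψ := by
            rw [hfdef]; exact hdecomp _ hdyK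
          have heeK : ((w * y - y * w) + y * f) * t = t * ((w * y - y * w) + y * f) :=
            hKadd _ _ hdyK (hKmul _ _ hyK hfK)
          have hinter : ∀ x : R, x * t = t * x → ψ * x = x * ψ →
              w * (y * x - x * y) - (y * x - x * y) * w
              = (y * (w * x - x * w) - (w * x - x * w) * y) + (y * x - x * y) * f := by
            intro x hxK hxψ
            have hJ : w * (y * x - x * y) - (y * x - x * y) * w
                = (y * (w * x - x * w) - (w * x - x * w) * y)
                  + ((w * y - y * w) * x - x * (w * y - y * w)) := by noncomm_ring
            have hfx : f * x = x * f := hK₂comm f x hfK hψf hxK hxψ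
            have heex : ((w * y - y * w) + y * f) * x = x * ((w * y - y * w) + y * f) :=
              hK₂comm _ x heeK heeψ hxK hxψ
            have hbr : (w * y - y * w) * x - x * (w * y - y * w) = (y * x - x * y) * f := by
              have i : (w * y - y * w) * x - x * (w * y - y * w)
                  = (((w * y - y * w) + y * f) * x - x * ((w * y - y * w) + y * f))
                    - ((y * x - x * y) * f + y * (f * x - x * f)) := by noncomm_ring
              rw [i, sub_eq_zero_of_eq heex, sub_eq_zero_of_eq hfx]
              simp only [mul_zero, add_zero, zero_sub]
              rw [hneg]
            rw [hJ, hbr]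
          -- ∂ preserves K₂
          have hpdψ : ∀ x : R, x * t = t * x → ψ * x = x * ψ →
              ψ * (w * x - x * w) = (w * x - x * w) * ψ := by
            intro x hxK hxψ
            have hdxK : (w * x - x * w) * t = t * (w * x - x * w) := by
              rw [hsub]; exact hpdK x hxK
            apply hψsym _ hdxK
            have hxs : star x = x := hK₂s x hxK hxψ
            have hκx : κ * x = x * κ := hκsymm x hxK hxs
            calc star (w * x - x * w) = star x * star w - star w * star x := by
                  rw [star_sub, star_mul, star_mul]
              _ = x * (w + κ) - (w + κ) * x := by rw [hxs, hsw]
              _ = (x * w - w * x) + (x * κ - κ * x) := by noncomm_ring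
              _ = (x * w - w * x) := by rw [sub_eq_zero_of_eq hκx.symm, add_zero]
              _ = -(w * x - x * w) := by noncomm_ring
              _ = w * x - x * w := hneg _
          -- value of ∂ρ
          have hdρval : w * ρ - ρ * w = ρ * ρ + ((y * ρ - ρ * y) + (y * κ - κ * y)) := by
            rw [hsub]
            apply heq_of_add
            calc (w * ρ + ρ * w) + (ρ * ρ + ((y * ρ - ρ * y) + (y * κ - κ * y)))
                = (w * ρ + ρ * w) + ρ * ρ + (y * ρ - ρ * y) + (y * κ - κ * y) := by abel
              _ = 0 := hω1
          -- D' of ∂ρ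
          have hDρK₂ : (y * ρ - ρ * y) * t = t * (y * ρ - ρ * y) :=
            hKsub _ _ (hKmul _ _ hyK hρK) (hKmul _ _ hρK hyK)
          have hDρψ : ψ * (y * ρ - ρ * y) = (y * ρ - ρ * y) * ψ := hD'ψ ρ hρK hψρ
          have hDκK₂ : (y * κ - κ * y) * t = t * (y * κ - κ * y) :=
            hKsub _ _ (hKmul _ _ hyK hκK) (hKmul _ _ hκK hyK)
          have hDκψ : ψ * (y * κ - κ * y) = (y * κ - κ * y) * ψ := hD'ψ κ hκK hψκ
          have hD'dρ : y * (w * ρ - ρ * w) - (w * ρ - ρ * w) * y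
              = ρ * (y * ρ - ρ * y) + ρ * (y * κ - κ * y) := by
            rw [hdρval]
            have i : y * (ρ * ρ + ((y * ρ - ρ * y) + (y * κ - κ * y)))
                  - (ρ * ρ + ((y * ρ - ρ * y) + (y * κ - κ * y))) * y
                = (y * (ρ * ρ) - (ρ * ρ) * y)
                  + ((y * (y * ρ - ρ * y) - (y * ρ - ρ * y) * y)
                    + (y * (y * κ - κ * y) - (y * κ - κ * y) * y)) := by noncomm_ring
            rw [i, hD'sq0 ρ hρK hψρ, hD'2 ρ hρK hψρ, hD'2 κ hκK hψκ, zero_add]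
          -- value of ∂(T a) from the Ω identity
          have hdTa : ∀ a : R, a * t = t * a → ψ * a = a * ψ →
              w * ((y * a - a * y) + ρ * a) - ((y * a - a * y) + ρ * a) * w
              = ((y * a - a * y) + ρ * a) * ((y * a - a * y) + ρ * a) + ((y * ((y * a - a * y) + ρ * a) - ((y * a - a * y) + ρ * a) * y) * a + (y * κ - κ * y) * a) := by
            intro a haK haψ
            rw [hsub]
            apply heq_of_add
            calc (w * ((y * a - a * y) + ρ * a) + ((y * a - a * y) + ρ * a) * w)
                  + (((y * a - a * y) + ρ * a) * ((y * a - a * y) + ρ * a) + ((y * ((y * a - a * y) + ρ * a) - ((y * a - a * y) + ρ * a) * y) * a + (y * κ - κ * y) * a))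
                = (w * ((y * a - a * y) + ρ * a) + ((y * a - a * y) + ρ * a) * w) + ((y * a - a * y) + ρ * a) * ((y * a - a * y) + ρ * a)
                  + (y * ((y * a - a * y) + ρ * a) - ((y * a - a * y) + ρ * a) * y) * a + (y * κ - κ * y) * a := by abel
              _ = 0 := hIDΩ a haK haψ
          -- ===== MASTER identity =====
          have hMASTER : ∀ a : R, a * t = t * a → ψ * a = a * ψ →
              ρ * (y * ρ - ρ * y) * (a * a) + (y * κ - κ * y) * (y * a - a * y)
              = ρ * (y * ρ - ρ * y) * a + (y * ρ - ρ * y) * (w * a - a * w) := by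
            intro a haK haψ
            have s1 := hinter ((y * a - a * y) + ρ * a) (hTaK a haK) (hTaψ a haK haψ)
            have s2 : w * (y * ((y * a - a * y) + ρ * a) - ((y * a - a * y) + ρ * a) * y) - (y * ((y * a - a * y) + ρ * a) - ((y * a - a * y) + ρ * a) * y) * w
                = (w * (y * ρ - ρ * y) - (y * ρ - ρ * y) * w) * a + (y * ρ - ρ * y) * (w * a - a * w) := by
              rw [hDT a haK haψ]; noncomm_ring
            have s3 : w * (y * ρ - ρ * y) - (y * ρ - ρ * y) * w
                = (ρ * (y * ρ - ρ * y) + ρ * (y * κ - κ * y)) + (y * ρ - ρ * y) * f := by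
              rw [hinter ρ hρK hψρ, hD'dρ]
            have s4 : y * (w * ((y * a - a * y) + ρ * a) - ((y * a - a * y) + ρ * a) * w) - (w * ((y * a - a * y) + ρ * a) - ((y * a - a * y) + ρ * a) * w) * y
                = ρ * (y * ρ - ρ * y) * (a * a) + (ρ * (y * κ - κ * y) * a + (y * κ - κ * y) * (y * a - a * y)) := by
              rw [hdTa a haK haψ]
              have i3 : y * (((y * a - a * y) + ρ * a) * ((y * a - a * y) + ρ * a) + ((y * ((y * a - a * y) + ρ * a) - ((y * a - a * y) + ρ * a) * y) * a + (y * κ - κ * y) * a))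
                    - (((y * a - a * y) + ρ * a) * ((y * a - a * y) + ρ * a) + ((y * ((y * a - a * y) + ρ * a) - ((y * a - a * y) + ρ * a) * y) * a + (y * κ - κ * y) * a)) * y
                  = (y * (((y * a - a * y) + ρ * a) * ((y * a - a * y) + ρ * a)) - (((y * a - a * y) + ρ * a) * ((y * a - a * y) + ρ * a)) * y)
                    + ((y * ((y * ((y * a - a * y) + ρ * a) - ((y * a - a * y) + ρ * a) * y) * a) - ((y * ((y * a - a * y) + ρ * a) - ((y * a - a * y) + ρ * a) * y) * a) * y)
                      + (y * ((y * κ - κ * y) * a) - ((y * κ - κ * y) * a) * y)) := by noncomm_ring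
              rw [i3, hD'sq0 ((y * a - a * y) + ρ * a) (hTaK a haK) (hTaψ a haK haψ), zero_add,
                hDT a haK haψ, mul_assoc]
              have i4 : y * ((y * ρ - ρ * y) * (a * a)) - ((y * ρ - ρ * y) * (a * a)) * y
                  = (y * (y * ρ - ρ * y) - (y * ρ - ρ * y) * y) * (a * a) + (y * ρ - ρ * y) * (y * (a * a) - (a * a) * y) := by
                noncomm_ring
              have i5 : y * ((y * κ - κ * y) * a) - ((y * κ - κ * y) * a) * y
                  = (y * (y * κ - κ * y) - (y * κ - κ * y) * y) * a + (y * κ - κ * y) * (y * a - a * y) := by noncomm_ring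
              rw [i4, i5, hD'sq0 a haK haψ, mul_zero, add_zero,
                hD'2 ρ hρK hψρ, hD'2 κ hκK hψκ]
            have s5 : (y * ((y * a - a * y) + ρ * a) - ((y * a - a * y) + ρ * a) * y) * f = ((y * ρ - ρ * y) * f) * a := by
              rw [hDT a haK haψ, mul_assoc, hK₂comm a f haK haψ hfK hψf, ← mul_assoc]
            have main : ρ * (y * ρ - ρ * y) * (a * a) + (ρ * (y * κ - κ * y) * a + (y * κ - κ * y) * (y * a - a * y))
                  + ((y * ρ - ρ * y) * f) * a
                = ((ρ * (y * ρ - ρ * y) + ρ * (y * κ - κ * y)) + (y * ρ - ρ * y) * f) * a + (y * ρ - ρ * y) * (w * a - a * w) := by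
              calc ρ * (y * ρ - ρ * y) * (a * a) + (ρ * (y * κ - κ * y) * a + (y * κ - κ * y) * (y * a - a * y))
                    + ((y * ρ - ρ * y) * f) * a
                  = (y * (w * ((y * a - a * y) + ρ * a) - ((y * a - a * y) + ρ * a) * w) - (w * ((y * a - a * y) + ρ * a) - ((y * a - a * y) + ρ * a) * w) * y)
                    + (y * ((y * a - a * y) + ρ * a) - ((y * a - a * y) + ρ * a) * y) * f := by rw [s4, s5]
                _ = w * (y * ((y * a - a * y) + ρ * a) - ((y * a - a * y) + ρ * a) * y) - (y * ((y * a - a * y) + ρ * a) - ((y * a - a * y) + ρ * a) * y) * w := s1.symm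
                _ = (w * (y * ρ - ρ * y) - (y * ρ - ρ * y) * w) * a + (y * ρ - ρ * y) * (w * a - a * w) := s2
                _ = ((ρ * (y * ρ - ρ * y) + ρ * (y * κ - κ * y)) + (y * ρ - ρ * y) * f) * a + (y * ρ - ρ * y) * (w * a - a * w) := by
                    rw [s3]
            have e9 : (ρ * (y * ρ - ρ * y) * (a * a) + (y * κ - κ * y) * (y * a - a * y))
                  + (ρ * (y * κ - κ * y) * a + ((y * ρ - ρ * y) * f) * a)
                = (ρ * (y * ρ - ρ * y) * a + (y * ρ - ρ * y) * (w * a - a * w))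
                  + (ρ * (y * κ - κ * y) * a + ((y * ρ - ρ * y) * f) * a) := by
              calc (ρ * (y * ρ - ρ * y) * (a * a) + (y * κ - κ * y) * (y * a - a * y))
                    + (ρ * (y * κ - κ * y) * a + ((y * ρ - ρ * y) * f) * a)
                  = ρ * (y * ρ - ρ * y) * (a * a) + (ρ * (y * κ - κ * y) * a + (y * κ - κ * y) * (y * a - a * y))
                    + ((y * ρ - ρ * y) * f) * a := by abel
                _ = ((ρ * (y * ρ - ρ * y) + ρ * (y * κ - κ * y)) + (y * ρ - ρ * y) * f) * a + (y * ρ - ρ * y) * (w * a - a * w) := main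
                _ = (ρ * (y * ρ - ρ * y) * a + (y * ρ - ρ * y) * (w * a - a * w))
                    + (ρ * (y * κ - κ * y) * a + ((y * ρ - ρ * y) * f) * a) := by noncomm_ring
            exact add_right_cancel e9
          -- ===== finale =====
          have c1 : ρ * (y * ρ - ρ * y) * ρ + (y * ρ - ρ * y) * (ρ * ρ) = 0 := by
            have hc : ρ * (y * ρ - ρ * y) = (y * ρ - ρ * y) * ρ := hK₂comm ρ _ hρK hψρ hDρK₂ hDρψ
            rw [hc, mul_assoc]
            exact hadd _
          have c2 : (y * κ - κ * y) * (y * ρ - ρ * y) = (y * ρ - ρ * y) * (y * κ - κ * y) := hK₂comm _ _ hDκK₂ hDκψ hDρK₂ hDρψ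
          have e_ρ := hMASTER ρ hρK hψρ
          rw [hdρval, c2] at e_ρ
          have i6 : (y * ρ - ρ * y) * (ρ * ρ + ((y * ρ - ρ * y) + (y * κ - κ * y)))
              = (y * ρ - ρ * y) * (ρ * ρ) + ((y * ρ - ρ * y) * (y * ρ - ρ * y) + (y * ρ - ρ * y) * (y * κ - κ * y)) := by noncomm_ring
          rw [i6] at e_ρ
          have e10 : ρ * (y * ρ - ρ * y) * (ρ * ρ) + (y * ρ - ρ * y) * (y * κ - κ * y)
              = ((ρ * (y * ρ - ρ * y) * ρ + (y * ρ - ρ * y) * (ρ * ρ)) + (y * ρ - ρ * y) * (y * ρ - ρ * y)) + (y * ρ - ρ * y) * (y * κ - κ * y) := by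
            rw [e_ρ]; abel
          have key1 : ρ * (y * ρ - ρ * y) * (ρ * ρ) = (y * ρ - ρ * y) * (y * ρ - ρ * y) := by
            have := add_right_cancel e10
            rwa [c1, zero_add] at this
          -- instance at a = ρ * ρ
          have hρρK : (ρ * ρ) * t = t * (ρ * ρ) := hKmul _ _ hρK hρK
          have hρρψ : ψ * (ρ * ρ) = (ρ * ρ) * ψ := hK₂mulψ ρ ρ hψρ hψρ
          have e_σ := hMASTER (ρ * ρ) hρρK hρρψ
          rw [hD'sq0 ρ hρK hψρ, mul_zero, add_zero] at e_σ
          have hdρρ : w * (ρ * ρ) - (ρ * ρ) * w = 0 := by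
            have i : w * (ρ * ρ) - (ρ * ρ) * w
                = (w * ρ - ρ * w) * ρ + ρ * (w * ρ - ρ * w) := by noncomm_ring
            rw [i, hK₂comm ρ (w * ρ - ρ * w) hρK hψρ
              (by rw [hsub]; exact hpdK ρ hρK) (hpdψ ρ hρK hψρ)]
            exact hadd _
          rw [hdρρ, mul_zero, add_zero] at e_σ
          -- cancel to get ρ² = 1
          have hρDρ : ρ * (y * ρ - ρ * y) ≠ 0 := mul_ne_zero hρne hD'ρ0
          have e11 : (ρ * ρ) * (ρ * ρ) = ρ * ρ := by
            have e12 : (ρ * (y * ρ - ρ * y)) * ((ρ * ρ) * (ρ * ρ)) = (ρ * (y * ρ - ρ * y)) * (ρ * ρ) := e_σ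
            exact mul_left_cancel₀ hρDρ e12
          have hρρne : ρ * ρ ≠ 0 := mul_ne_zero hρne hρne
          have e13 : ρ * ρ = 1 := by
            have e14 : (ρ * ρ) * (ρ * ρ) = (ρ * ρ) * 1 := by rw [mul_one]; exact e11
            exact mul_left_cancel₀ hρρne e14
          have hρ1 : ρ = 1 := by
            have e15 : (ρ + 1) * (ρ + 1) = 0 := by
              calc (ρ + 1) * (ρ + 1) = ρ * ρ + (ρ + ρ) + 1 := by noncomm_ring
                _ = 1 + 0 + 1 := by rw [e13, hadd ρ]
                _ = 0 := by rw [add_zero, hadd]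
            have := mul_self_eq_zero.mp e15
            exact heq_of_add ρ 1 this
          exact hD'ρ0 (by rw [hρ1, mul_one, one_mul, sub_self])
      -- =====================  S1 endgame  =====================
      have hKsym : ∀ k : R, k * t = t * k → star k = k := by
        intro k hk
        exact (heq_of_add _ _ (hτK0 k hk)).symm
      have hKcomm : ∀ k k' : R, k * t = t * k → k' * t = t * k' → k * k' = k' * k := by
        intro k k' hk hk'
        have h1 : star (k * k') = k' * k := by rw [star_mul, hKsym k hk, hKsym k' hk']
        rw [hKsym (k * k') (hKmul _ _ hk hk')] at h1
        exact h1
      -- trace formula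
      have htrace : ∀ x : R, x + star x
          = (w * (x * t + t * x) + (x * t + t * x) * w) + κ * (x * t + t * x) := by
        intro x
        have hk₁K : (x + w * (x * t + t * x)) * t = t * (x + w * (x * t + t * x)) := by
          have e : (x + w * (x * t + t * x)) * t + t * (x + w * (x * t + t * x))
              = (x * t + t * x) + ((w * (x * t + t * x)) * t + t * (w * (x * t + t * x))) := by
            noncomm_ring
          rw [hδwk _ (hδK x), hadd] at e
          exact heq_of_add _ _ e
        have hsk₂ : star (x * t + t * x) = x * t + t * x := hKsym _ (hδK x)
        have hsk₁ : star (x + w * (x * t + t * x)) = x + w * (x * t + t * x) :=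
          hKsym _ hk₁K
        have hxdecomp : x = (x + w * (x * t + t * x)) + w * (x * t + t * x) := by
          rw [add_assoc, hadd, add_zero]
        conv_lhs => rw [hxdecomp]
        rw [star_add, hsk₁, star_mul, hsk₂, hsw]
        calc ((x + w * (x * t + t * x)) + w * (x * t + t * x))
              + ((x + w * (x * t + t * x)) + (x * t + t * x) * (w + κ))
            = ((x + w * (x * t + t * x)) + (x + w * (x * t + t * x)))
              + ((w * (x * t + t * x) + (x * t + t * x) * w) + (x * t + t * x) * κ) := by
              noncomm_ring
          _ = (w * (x * t + t * x) + (x * t + t * x) * w) + κ * (x * t + t * x) := by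
              rw [hadd (x + w * (x * t + t * x)), zero_add,
                hKcomm (x * t + t * x) κ (hδK x) hκK]
      -- λ-elements commute with t
      have hPK : ∀ k : R, k * t = t * k →
          ((w * k + k * w) + κ * k) * t = t * ((w * k + k * w) + κ * k) :=
        fun k hk => hKadd _ _ (hpdK k hk) (hKmul _ _ hκK hk)
      -- ∂λ = κ λ
      have hwκ : w * κ = κ * w + κ * κ := by
        apply heq_of_add
        calc w * κ + (κ * w + κ * κ) = (w * κ + κ * w) + κ * κ := by abel
          _ = κ * κ + κ * κ := by rw [hpdκ]
          _ = 0 := hadd _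
      have hlam : ∀ k : R, k * t = t * k →
          w * ((w * k + k * w) + κ * k) + ((w * k + k * w) + κ * k) * w
          = κ * ((w * k + k * w) + κ * k) := by
        intro k hk
        calc w * ((w * k + k * w) + κ * k) + ((w * k + k * w) + κ * k) * w
            = ((w * w) * k + k * (w * w) + ((w * (k * w)) + w * (k * w)))
              + ((w * κ) * k + κ * (k * w)) := by noncomm_ring
          _ = ((w * w) * k + k * (w * w)) + ((κ * w + κ * κ) * k + κ * (k * w)) := by
              rw [hadd (w * (k * w)), add_zero, hwκ]
          _ = ((w * w) * k + (w * w) * k) + ((κ * w + κ * κ) * k + κ * (k * w)) := by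
              rw [hKcomm k (w * w) hk hγK]
          _ = (κ * w + κ * κ) * k + κ * (k * w) := by
              rw [hadd ((w * w) * k), zero_add]
          _ = κ * ((w * k + k * w) + κ * k) := by noncomm_ring
      -- products of λ-elements commute with w
      have hPw : ∀ k k' : R, k * t = t * k → k' * t = t * k' →
          w * (((w * k + k * w) + κ * k) * ((w * k' + k' * w) + κ * k'))
          = (((w * k + k * w) + κ * k) * ((w * k' + k' * w) + κ * k')) * w := by
        intro k k' hk hk'
        have h1 : w * ((w * k + k * w) + κ * k) - ((w * k + k * w) + κ * k) * w
            = κ * ((w * k + k * w) + κ * k) := by rw [hsub]; exact hlam k hk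
        have h2 : w * ((w * k' + k' * w) + κ * k') - ((w * k' + k' * w) + κ * k') * w
            = κ * ((w * k' + k' * w) + κ * k') := by rw [hsub]; exact hlam k' hk'
        have i : w * (((w * k + k * w) + κ * k) * ((w * k' + k' * w) + κ * k'))
              - (((w * k + k * w) + κ * k) * ((w * k' + k' * w) + κ * k')) * w
            = (w * ((w * k + k * w) + κ * k) - ((w * k + k * w) + κ * k) * w)
                * ((w * k' + k' * w) + κ * k')
              + ((w * k + k * w) + κ * k)
                * (w * ((w * k' + k' * w) + κ * k') - ((w * k' + k' * w) + κ * k') * w) := by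
          noncomm_ring
        rw [h1, h2] at i
        have hmove : ((w * k + k * w) + κ * k) * (κ * ((w * k' + k' * w) + κ * k'))
            = (κ * ((w * k + k * w) + κ * k)) * ((w * k' + k' * w) + κ * k') := by
          rw [← mul_assoc, hKcomm _ κ (hPK k hk) hκK, mul_assoc]
        rw [hmove, hadd ((κ * ((w * k + k * w) + κ * k)) * ((w * k' + k' * w) + κ * k'))] at i
        exact sub_eq_zero.mp i
      -- conclusion of the char-2 case
      intro x y r
      rw [htrace x, htrace y]
      obtain ⟨P, hP⟩ : ∃ z : R, z = ((w * (x * t + t * x) + (x * t + t * x) * w)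
          + κ * (x * t + t * x))
          * ((w * (y * t + t * y) + (y * t + t * y) * w) + κ * (y * t + t * y)) := ⟨_, rfl⟩
      rw [← hP]
      have hQK : P * t = t * P := by
        rw [hP]; exact hKmul _ _ (hPK _ (hδK x)) (hPK _ (hδK y))
      have hQw : w * P = P * w := by rw [hP]; exact hPw _ _ (hδK x) (hδK y)
      -- P commutes with an arbitrary element r
      have hrdecomp : r = (r + w * (r * t + t * r)) + w * (r * t + t * r) := by
        rw [add_assoc, hadd, add_zero]
      have hrK : (r + w * (r * t + t * r)) * t = t * (r + w * (r * t + t * r)) := by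
        have e : (r + w * (r * t + t * r)) * t + t * (r + w * (r * t + t * r))
            = (r * t + t * r) + ((w * (r * t + t * r)) * t + t * (w * (r * t + t * r))) := by
          noncomm_ring
        rw [hδwk _ (hδK r), hadd] at e
        exact heq_of_add _ _ e
      conv_lhs => rw [hrdecomp]
      conv_rhs => rw [hrdecomp]
      rw [mul_add, add_mul]
      congr 1
      · exact (hKcomm _ _ hQK hrK).symm ▸ (hKcomm P (r + w * (r * t + t * r)) hQK hrK)
      · calc P * (w * (r * t + t * r)) = (P * w) * (r * t + t * r) := by rw [mul_assoc]
          _ = (w * P) * (r * t + t * r) := by rw [hQw]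
          _ = w * (P * (r * t + t * r)) := by rw [mul_assoc]
          _ = w * ((r * t + t * r) * P) := by rw [hKcomm P _ hQK (hδK r)]
          _ = (w * (r * t + t * r)) * P := by rw [mul_assoc]

    · -- char ≠ 2 : contradiction
      exfalso
      apply hm₁nc
      apply hcen
      intro m hm
      have hcM : (m * (m₁ + star m₁) - (m₁ + star m₁) * m) ∈ M :=
        M.sub_mem (M.mul_mem hm (htrM m₁ hm₁)) (M.mul_mem (htrM m₁ hm₁) hm)
      have hcb := hbrC m hm m₁ hm₁
      have hct : (m * (m₁ + star m₁) - (m₁ + star m₁) * m) * (m₁ + star m₁)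
          = (m₁ + star m₁) * (m * (m₁ + star m₁) - (m₁ + star m₁) * m) :=
        hL4c _ hcM hcb m₁ hm₁
      have hmm : m * m ∈ M := M.mul_mem hm hm
      set t : R := m₁ + star m₁ with htdef
      set c : R := m * t - t * m with hcdef
      have h1 : (m * m) * t - t * (m * m) = m * c + c * m := by rw [hcdef]; noncomm_ring
      have hX : (m * c + c * m) ∈ M := M.add_mem (M.mul_mem hm hcM) (M.mul_mem hcM hm)
      have hXb : b * (m * c + c * m) = (m * c + c * m) * b := by
        have h5 := hbrC (m * m) hmm m₁ hm₁
        rwa [h1] at h5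
      have h2' : (m * c + c * m) * t = t * (m * c + c * m) := hL4c _ hX hXb m₁ hm₁
      have e : (m * c + c * m) * t - t * (m * c + c * m)
          = c * c + c * c + (m * (c * t - t * c) + (c * t - t * c) * m) := by
        rw [hcdef]; noncomm_ring
      have e2 : c * t - t * c = 0 := sub_eq_zero_of_eq hct
      have e3 : (m * c + c * m) * t - t * (m * c + c * m) = 0 := sub_eq_zero_of_eq h2'
      rw [e2, e3] at e
      have e4 : (2 : R) * (c * c) = 0 := by
        rw [two_mul]
        simpa using e.symm
      have e5 : c * c = 0 := (mul_eq_zero.mp e4).resolve_left h2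
      have e6 : c = 0 := mul_self_eq_zero.mp e5
      rw [hcdef] at e6
      exact (sub_eq_zero.mp e6).symm
end

section
/- Let R be a semiprime ring with involution *. Then x − x* ∈ Z(R) for all x ∈ R if and only if both x + x* ∈ Z(R) for all x ∈ R and 2x ∈ Z(R) for all x ∈ R. -/
/-- Proposition: Let `R` be a semiprime ring with involution `*`. Then `K₀(R) ⊆ Z(R)`
iff `T(R) ⊆ Z(R)` and `2R ⊆ Z(R)`. -/
theorem stmt_15 {R : Type*} [NonUnitalRing R] [StarRing R]
    (hsemiprime : ∀ a : R, (∀ x : R, a * x * a = 0) → a = 0) :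
    (∀ x r : R, (x - star x) * r = r * (x - star x)) ↔
      ((∀ x r : R, (x + star x) * r = r * (x + star x)) ∧
        (∀ x r : R, (x + x) * r = r * (x + x))) := by
  constructor
  · intro h
    -- [x*, r] = [x, r]
    have hst : ∀ x r : R, star x * r - r * star x = x * r - r * x := by
      intro x r
      have e : (star x * r - r * star x) - (x * r - r * x)
          = -((x - star x) * r - r * (x - star x)) := by noncomm_ring
      rw [sub_eq_zero_of_eq (h x r), neg_zero] at e
      exact sub_eq_zero.mp e
    -- commutators are skew
    have hskew : ∀ x y : R, star (x * y - y * x) = -(x * y - y * x) := by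
      intro x y
      have e : star (x * y - y * x) = star y * star x - star x * star y := by
        simp [star_sub, star_mul]
      rw [e, hst y (star x)]
      have e2 : y * star x - star x * y = -(star x * y - y * star x) := by noncomm_ring
      rw [e2, hst x y]
    -- 2[x,y] is central
    have h2c : ∀ x y r : R,
        ((x*y - y*x) + (x*y - y*x)) * r = r * ((x*y - y*x) + (x*y - y*x)) := by
      intro x y r
      have := h (x*y - y*x) r
      rw [hskew x y, sub_neg_eq_add] at this
      exact this
    -- 2(x - x*)y is central
    have hE : ∀ x y r : R, ((x - star x)*y + (x - star x)*y) * r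
        = r * ((x - star x)*y + (x - star x)*y) := by
      intro x y r
      have hP := h (x*y) r
      have hQ := h (star x * y) r
      simp only [star_mul, star_star] at hP hQ
      have hky : (x - star x) * star y - star y * (x - star x) = 0 :=
        sub_eq_zero_of_eq (h x (star y))
      have hF : (x - star x) * (y - star y) * r = r * ((x - star x) * (y - star y)) := by
        calc (x - star x) * (y - star y) * r = (x - star x) * ((y - star y) * r) := by
              rw [mul_assoc]
          _ = (x - star x) * (r * (y - star y)) := by rw [h y r]
          _ = (x - star x) * r * (y - star y) := by rw [mul_assoc]
          _ = r * (x - star x) * (y - star y) := by rw [h x r]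
          _ = r * ((x - star x) * (y - star y)) := by rw [mul_assoc]
      have e : ((x - star x)*y + (x - star x)*y) * r - r * ((x - star x)*y + (x - star x)*y)
          = ((x*y - star y * star x) * r - r * (x*y - star y * star x))
            - ((star x * y - star y * x) * r - r * (star x * y - star y * x))
            + ((x - star x) * (y - star y) * r - r * ((x - star x) * (y - star y)))
            + ((((x - star x) * star y - star y * (x - star x)) * r)
              - r * ((x - star x) * star y - star y * (x - star x))) := by
        noncomm_ring
      rw [sub_eq_zero_of_eq hP, sub_eq_zero_of_eq hQ, sub_eq_zero_of_eq hF, hky] at e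
      simp only [sub_zero, zero_sub, zero_mul, mul_zero, neg_zero, add_zero, sub_self] at e
      exact sub_eq_zero.mp e
    -- 2(x - x*)[y,r] = 0
    have h3 : ∀ x y r : R,
        ((x - star x) + (x - star x)) * (y*r - r*y) = 0 := by
      intro x y r
      have ha : r * ((x - star x) * y) - (x - star x) * (r * y) = 0 := by
        rw [← mul_assoc, ← h x r, mul_assoc, sub_self]
      have e : ((x - star x) + (x - star x)) * (y*r - r*y)
          = (((x - star x)*y + (x - star x)*y) * r - r * ((x - star x)*y + (x - star x)*y))
            + ((r * ((x - star x) * y) - (x - star x) * (r * y))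
              + (r * ((x - star x) * y) - (x - star x) * (r * y))) := by
        noncomm_ring
      rw [sub_eq_zero_of_eq (hE x y r), ha] at e
      simpa using e
    -- 2[x,y] = 0
    have hmain : ∀ x y : R, (x*y - y*x) + (x*y - y*x) = 0 := by
      intro x y
      set c := x*y - y*x with hc
      have h4 : ((c + c) + (c + c)) * c = 0 := by
        have := h3 c x y
        rw [hskew x y, sub_neg_eq_add, ← hc] at this
        exact this
      apply hsemiprime
      intro t
      have e1 : (c + c) * t * (c + c) = t * (((c+c) + (c+c)) * c) := by
        rw [h2c x y t, mul_assoc, ← hc]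
        congr 1
        simp only [mul_add, add_mul]
      rw [e1, h4, mul_zero]
    refine ⟨?_, ?_⟩
    · intro x r
      have e : (x + star x) * r - r * (x + star x)
          = ((star x * r - r * star x) - (x * r - r * x))
            + ((x*r - r*x) + (x*r - r*x)) := by noncomm_ring
      rw [sub_eq_zero_of_eq (hst x r), hmain x r, add_zero] at e
      exact sub_eq_zero.mp e
    · intro x r
      have e : (x + x) * r - r * (x + x) = (x*r - r*x) + (x*r - r*x) := by noncomm_ring
      rw [hmain x r] at e
      exact sub_eq_zero.mp e
  · rintro ⟨h1, h2⟩ x r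
    have e : (x - star x) * r - r * (x - star x)
        = ((x + x) * r - r * (x + x)) - ((x + star x) * r - r * (x + star x)) := by
      noncomm_ring
    rw [sub_eq_zero_of_eq (h1 x r), sub_eq_zero_of_eq (h2 x r), sub_zero] at e
    exact sub_eq_zero.mp e
end

section
/- Let R be a noncommutative prime ring with involution *. Then x − x* ∈ Z(R) for all x ∈ R if and only if both x + x* ∈ Z(R) for all x ∈ R and R has characteristic 2 (i.e., x + x = 0 for all x ∈ R). -/
/-- Corollary: Let `R` be a noncommutative prime ring with involution `*`. Then
`K₀(R) ⊆ Z(R)` iff `T(R) ⊆ Z(R)` and `char R = 2`. -/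
theorem stmt_16 {R : Type*} [NonUnitalRing R] [StarRing R]
    (hprime : ∀ a b : R, (∀ x : R, a * x * b = 0) → a = 0 ∨ b = 0)
    (hnoncomm : ∃ x y : R, x * y ≠ y * x) :
    (∀ x r : R, (x - star x) * r = r * (x - star x)) ↔
      ((∀ x r : R, (x + star x) * r = r * (x + star x)) ∧ (∀ x : R, x + x = 0)) := by
  obtain ⟨y, r, hyr⟩ := hnoncomm
  have hyr' : y * r - r * y ≠ 0 := sub_ne_zero.mpr hyr
  constructor
  · intro h
    -- zero form of the hypothesis that skew elements are central
    have hz : ∀ u t : R, star u * t - t * star u - (u * t - t * u) = 0 := by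
      intro u t
      have e : star u * t - t * star u - (u * t - t * u)
          = -((u - star u) * t - t * (u - star u)) := by noncomm_ring
      rw [sub_eq_zero_of_eq (h u t), neg_zero] at e
      exact e
    have hz1 : ∀ x a t : R,
        (star a * star x) * t - t * (star a * star x) - ((x * a) * t - t * (x * a)) = 0 := by
      intro x a t
      have := hz (x * a) t
      rwa [star_mul] at this
    -- key identity P
    have P : ∀ x a t : R,
        star a * (x * t - t * x) + (a * t - t * a) * star x
          = x * (a * t - t * a) + (x * t - t * x) * a := by
      intro x a t
      have e : (star a * (x * t - t * x) + (a * t - t * a) * star x)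
            - (x * (a * t - t * a) + (x * t - t * x) * a)
          = ((star a * star x) * t - t * (star a * star x) - ((x * a) * t - t * (x * a)))
            - star a * (star x * t - t * star x - (x * t - t * x))
            - (star a * t - t * star a - (a * t - t * a)) * star x := by noncomm_ring
      rw [hz1 x a t, hz x t, hz a t, mul_zero, zero_mul, sub_zero, sub_zero] at e
      exact sub_eq_zero.mp e
    have Pstar : ∀ x a t : R,
        star a * (star x * t - t * star x) + (a * t - t * a) * x
          = star x * (a * t - t * a) + (star x * t - t * star x) * a := by
      intro x a t
      have := P (star x) a t
      rwa [star_star] at this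
    -- step 1 : 2(x - x*) annihilates all commutators
    have step1 : ∀ x a t : R,
        ((x - star x) + (x - star x)) * (a * t - t * a) = 0 := by
      intro x a t
      have e : ((x - star x) + (x - star x)) * (a * t - t * a)
          = ((x - star x) * (a * t - t * a) - (a * t - t * a) * (x - star x))
            - ((star a * (x * t - t * x) + (a * t - t * a) * star x)
                - (x * (a * t - t * a) + (x * t - t * x) * a))
            + ((star a * (star x * t - t * star x) + (a * t - t * a) * x)
                - (star x * (a * t - t * a) + (star x * t - t * star x) * a))
            - star a * (star x * t - t * star x - (x * t - t * x))
            + (star x * t - t * star x - (x * t - t * x)) * a := by noncomm_ring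
      rw [sub_eq_zero_of_eq (h x (a * t - t * a)),
        sub_eq_zero_of_eq (P x a t), sub_eq_zero_of_eq (Pstar x a t),
        hz x t, mul_zero, zero_mul] at e
      simpa using e
    -- 2(x - x*) = 0 by primeness
    have hk : ∀ x : R, (x - star x) + (x - star x) = 0 := by
      intro x
      have hann : ∀ s : R, ((x - star x) + (x - star x)) * s * (y * r - r * y) = 0 := by
        intro s
        have hc : ((x - star x) + (x - star x)) * s = s * ((x - star x) + (x - star x)) := by
          simp only [add_mul, mul_add, h x s]
        rw [hc, mul_assoc, step1 x y r, mul_zero]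
      rcases hprime ((x - star x) + (x - star x)) (y * r - r * y) hann with h0 | h0
      · exact h0
      · exact absurd (sub_eq_zero.mp h0) hyr
    have h2 : ∀ x : R, x + x = star x + star x := by
      intro x
      have e : (x + x) - (star x + star x) = (x - star x) + (x - star x) := by abel
      rw [hk x] at e
      exact sub_eq_zero.mp e
    have h3 : ∀ a b : R, a * b + a * b = b * a + b * a := by
      intro a b
      calc a * b + a * b = star (a * b) + star (a * b) := h2 (a * b)
        _ = star b * star a + star b * star a := by rw [star_mul]
        _ = star b * (star a + star a) := by rw [mul_add]
        _ = star b * (a + a) := by rw [← h2 a]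
        _ = (star b + star b) * a := by rw [mul_add, add_mul]
        _ = (b + b) * a := by rw [← h2 b]
        _ = b * a + b * a := by rw [add_mul]
    -- char 2: (x+x) annihilates the commutator [y,r] and is central
    have h4 : ∀ x : R, (x + x) * (y * r - r * y) = 0 := by
      intro x
      have e : (x + x) * (y * r - r * y)
          = (x * (y * r) + x * (y * r) - ((y * r) * x + (y * r) * x))
            - (x * (r * y) + x * (r * y) - ((r * y) * x + (r * y) * x))
            + (y * r + y * r - (r * y + r * y)) * x := by noncomm_ring
      rw [sub_eq_zero_of_eq (h3 x (y * r)), sub_eq_zero_of_eq (h3 x (r * y)),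
        sub_eq_zero_of_eq (h3 y r), zero_mul] at e
      simpa using e
    have char2 : ∀ x : R, x + x = 0 := by
      intro x
      have hann : ∀ s : R, (x + x) * s * (y * r - r * y) = 0 := by
        intro s
        have hc : (x + x) * s = s * (x + x) := by
          have := h3 x s
          simp only [add_mul, mul_add]
          exact this
        rw [hc, mul_assoc, h4 x, mul_zero]
      rcases hprime (x + x) (y * r - r * y) hann with h0 | h0
      · exact h0
      · exact absurd (sub_eq_zero.mp h0) hyr
    refine ⟨?_, char2⟩
    intro x t
    have e2 : (x + star x) - (x - star x) = star x + star x := by abel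
    rw [char2 (star x)] at e2
    rw [sub_eq_zero.mp e2]
    exact h x t
  · rintro ⟨hT, h2⟩ x t
    have e2 : (x - star x) - (x + star x) = -(star x + star x) := by abel
    rw [h2 (star x), neg_zero] at e2
    rw [sub_eq_zero.mp e2]
    exact hT x t
end

section
/- Let R be a prime ring with involution * of characteristic different from 2 (i.e., there exists x ∈ R with x + x ≠ 0), and let b ∈ R with b ∉ Z(R). If b commutes with [x, y] − ([x, y])* for all x, y ∈ R (i.e., b·([x,y] − ([x,y])*) = ([x,y] − ([x,y])*)·b for all x, y ∈ R, where [x,y] = xy − yx), then s·t ∈ Z(R) for all s, t ∈ K₀(R) (i.e., K₀(R)² ⊆ Z(R)). -/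
/-!
Write `K₀` for the elements `x - x*` and `H₀` for the elements `x + x*`. The element `b` commutes
with `[K₀, K₀]` and `[H₀, H₀]`, and so do `b*`, the symmetric `b + b*` and the skew `b - b*`.
The main tool is Herstein's lemma: `[p, [q, R]] = 0` forces `p` or `q` to be central.
A symmetric `c` with this property satisfies `[c, [c, R]] ⊆ Z`, hence is central by Posner's
argument; so `b + b*` is central and `s = b - b*` is not. For `s`, Herstein's lemma makes `s²`
central, then `s k s = s² k` on `K₀`: either `s² = 0` and `s K₀ s = 0` kills `s`, or `s`
centralizes `K₀`, which gives `[K₀, K₀] ⊆ Z`. Finally `[K₀, K₀] ⊆ Z` implies `K₀² ⊆ Z`: if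
`[K₀, K₀] = 0`, each `k ∈ K₀` anticommutes with `[l, H₀]` because `k h + h k ∈ K₀`; otherwise a
nonzero central `z ∈ [K₀, K₀]` satisfies `z H₀ ⊆ K₀`, so all commutators are central and `R` is
commutative.
-/

def IsPrimeRing (R : Type*) [NonUnitalRing R] : Prop :=
  ∀ a b : R, (∀ x : R, a * x * b = 0) → a = 0 ∨ b = 0

section PrimeRing

variable {R : Type*} [NonUnitalRing R]

theorem mem_center_iff_lie_eq_zero {z : R} : z ∈ Set.center R ↔ ∀ r : R, ⁅z, r⁆ = 0 := by
  simp only [Semigroup.mem_center_iff, Ring.lie_def, sub_eq_zero, eq_comm]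

theorem mem_center_of_add_self_mem_center (h2 : ∀ w : R, w + w = 0 → w = 0) {a : R}
    (h : a + a ∈ Set.center R) : a ∈ Set.center R :=
  mem_center_iff_lie_eq_zero.mpr fun r => h2 _ <| by
    rw [← mem_center_iff_lie_eq_zero.mp h r]; simp only [Ring.lie_def]; noncomm_ring

theorem center_mul_lie {z : R} (hz : z ∈ Set.center R) (a b : R) : ⁅z * a, b⁆ = z * ⁅a, b⁆ := by
  rw [Ring.lie_def, Ring.lie_def, mul_sub, mul_assoc, ← mul_assoc b,
    Semigroup.mem_center_iff.mp hz b, mul_assoc]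

theorem lie_center_mul {z : R} (hz : z ∈ Set.center R) (a b : R) : ⁅a, z * b⁆ = z * ⁅a, b⁆ := by
  rw [Ring.lie_def, Ring.lie_def, mul_sub, mul_assoc, ← mul_assoc a,
    Semigroup.mem_center_iff.mp hz a, mul_assoc]

theorem IsPrimeRing.eq_zero_of_add_self_eq_zero (hR : IsPrimeRing R) (hchar : ∃ x : R, x + x ≠ 0)
    {w : R} (hw : w + w = 0) : w = 0 := by
  obtain ⟨a, ha⟩ := hchar
  refine (hR w (a + a) fun x => ?_).resolve_right ha
  rw [show w * x * (a + a) = (w + w) * (x * a) by noncomm_ring, hw, zero_mul]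

theorem IsPrimeRing.eq_zero_of_mem_center_of_mul_eq_zero (hR : IsPrimeRing R) {z w : R}
    (hz : z ∈ Set.center R) (hz0 : z ≠ 0) (h : z * w = 0) : w = 0 :=
  (hR z w fun x => by
    rw [← Semigroup.mem_center_iff.mp hz x, mul_assoc, h, mul_zero]).resolve_left hz0

theorem IsPrimeRing.eq_zero_of_mem_center_of_mul_self_eq_zero (hR : IsPrimeRing R) {z : R}
    (hz : z ∈ Set.center R) (h : z * z = 0) : z = 0 := by
  by_contra hz0
  exact hz0 (hR.eq_zero_of_mem_center_of_mul_eq_zero hz hz0 h)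

theorem lie_mul_lie_add_lie_mul_lie_eq_zero {p q : R} (h : ∀ r : R, ⁅p, ⁅q, r⁆⁆ = 0) (x z y : R) :
    ⁅q, x⁆ * z * ⁅p, y⁆ + ⁅p, x⁆ * z * ⁅q, y⁆ = 0 := by
  have leibniz (x y : R) : ⁅q, x⁆ * ⁅p, y⁆ + ⁅p, x⁆ * ⁅q, y⁆ = 0 := by
    have e : ⁅p, ⁅q, x * y⁆⁆ =
        ⁅q, x⁆ * ⁅p, y⁆ + ⁅p, x⁆ * ⁅q, y⁆ + ⁅p, ⁅q, x⁆⁆ * y + x * ⁅p, ⁅q, y⁆⁆ := by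
      simp only [Ring.lie_def]; noncomm_ring
    rwa [h, h, h, zero_mul, mul_zero, add_zero, add_zero, eq_comm] at e
  calc ⁅q, x⁆ * z * ⁅p, y⁆ + ⁅p, x⁆ * z * ⁅q, y⁆
      = (⁅q, x * z⁆ * ⁅p, y⁆ + ⁅p, x * z⁆ * ⁅q, y⁆) - x * (⁅q, z⁆ * ⁅p, y⁆ + ⁅p, z⁆ * ⁅q, y⁆) := by
        simp only [Ring.lie_def]; noncomm_ring
    _ = 0 := by rw [leibniz, leibniz, mul_zero, sub_zero]

theorem IsPrimeRing.lie_eq_zero_or_lie_eq_zero_of_lie_lie_eq_zero (hR : IsPrimeRing R)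
    (h2 : ∀ w : R, w + w = 0 → w = 0) {p q : R} (h : ∀ r : R, ⁅p, ⁅q, r⁆⁆ = 0)
    (hp : p ∉ Set.center R) (y : R) : ⁅p, y⁆ = 0 ∨ ⁅q, y⁆ = 0 := by
  have M := lie_mul_lie_add_lie_mul_lie_eq_zero h
  obtain ⟨x₀, hx₀⟩ : ∃ x₀ : R, ⁅p, x₀⁆ ≠ 0 := by
    simpa [mem_center_iff_lie_eq_zero] using hp
  have hswap (w : R) : ⁅p, y⁆ * w * ⁅q, y⁆ - ⁅q, y⁆ * w * ⁅p, y⁆ = 0 := by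
    refine (hR ⁅p, x₀⁆ _ fun z => ?_).resolve_left hx₀
    calc ⁅p, x₀⁆ * z * (⁅p, y⁆ * w * ⁅q, y⁆ - ⁅q, y⁆ * w * ⁅p, y⁆)
        = (⁅q, x₀⁆ * (z * ⁅p, y⁆ * w) * ⁅p, y⁆ + ⁅p, x₀⁆ * (z * ⁅p, y⁆ * w) * ⁅q, y⁆)
          - (⁅q, x₀⁆ * z * ⁅p, y⁆ + ⁅p, x₀⁆ * z * ⁅q, y⁆) * (w * ⁅p, y⁆) := by noncomm_ring
      _ = 0 := by rw [M, M, zero_mul, sub_zero]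
  refine hR _ _ fun w => h2 _ ?_
  calc ⁅p, y⁆ * w * ⁅q, y⁆ + ⁅p, y⁆ * w * ⁅q, y⁆
      = (⁅q, y⁆ * w * ⁅p, y⁆ + ⁅p, y⁆ * w * ⁅q, y⁆)
        + (⁅p, y⁆ * w * ⁅q, y⁆ - ⁅q, y⁆ * w * ⁅p, y⁆) := by noncomm_ring
    _ = 0 := by rw [M, hswap, add_zero]

/-- Herstein's lemma. For each `y`, one of `[p, y]`, `[q, y]` vanishes, and an additive group is
not the union of two proper subgroups. -/
theorem IsPrimeRing.mem_center_or_mem_center_of_lie_lie_eq_zero (hR : IsPrimeRing R)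
    (h2 : ∀ w : R, w + w = 0 → w = 0) {p q : R} (h : ∀ r : R, ⁅p, ⁅q, r⁆⁆ = 0) :
    p ∈ Set.center R ∨ q ∈ Set.center R := by
  by_cases hp : p ∈ Set.center R
  · exact .inl hp
  have hcover : ((⊤ : NonUnitalSubring R) : Set R) ⊆
      NonUnitalSubring.centralizer {p} ∪ NonUnitalSubring.centralizer {q} := fun y _ => by
    simpa [NonUnitalSubring.mem_centralizer_iff, Set.mem_centralizer_iff, Ring.lie_def,
      sub_eq_zero, eq_comm] using hR.lie_eq_zero_or_lie_eq_zero_of_lie_lie_eq_zero h2 h hp y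
  refine (AddSubgroupClass.subset_union.mp hcover).imp (fun hle => ?_) (fun hle => ?_) <;>
  · exact Semigroup.mem_center_iff.mpr fun y => by
      simpa [NonUnitalSubring.mem_centralizer_iff, eq_comm] using hle (Set.mem_univ y)

theorem IsPrimeRing.mem_center_of_mul_mem_center (hR : IsPrimeRing R) {z a : R}
    (hz : z ∈ Set.center R) (hz0 : z ≠ 0) (h : z * a ∈ Set.center R) : a ∈ Set.center R :=
  mem_center_iff_lie_eq_zero.mpr fun r => hR.eq_zero_of_mem_center_of_mul_eq_zero hz hz0 <| by
    rw [← center_mul_lie hz]; exact mem_center_iff_lie_eq_zero.mp h r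

theorem IsPrimeRing.lie_eq_zero_of_lie_mem_center (hR : IsPrimeRing R)
    (h : ∀ u v : R, ⁅u, v⁆ ∈ Set.center R) (u v : R) : ⁅u, v⁆ = 0 := by
  have hc := Semigroup.mem_center_iff.mp (h u v)
  have huc := Semigroup.mem_center_iff.mp (h u (u * v))
  refine hR.eq_zero_of_mem_center_of_mul_self_eq_zero (h u v) ?_
  have e : ⁅u, u * v⁆ = u * ⁅u, v⁆ := by simp only [Ring.lie_def]; noncomm_ring
  calc ⁅u, v⁆ * ⁅u, v⁆ = u * (v * ⁅u, v⁆) - v * (u * ⁅u, v⁆) := by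
        simp only [Ring.lie_def]; noncomm_ring
    _ = 0 := by rw [hc v, ← mul_assoc, ← e, huc v, sub_self]

theorem IsPrimeRing.mem_center_of_lie_lie_eq_zero (hR : IsPrimeRing R)
    (h2 : ∀ w : R, w + w = 0 → w = 0) {c : R} (h : ∀ u : R, ⁅c, ⁅c, u⁆⁆ = 0) :
    c ∈ Set.center R := by
  have hmul (u v : R) : ⁅c, u⁆ * ⁅c, v⁆ = 0 := h2 _ <| by
    have e : ⁅c, ⁅c, u * v⁆⁆ = ⁅c, ⁅c, u⁆⁆ * v + (⁅c, u⁆ * ⁅c, v⁆ + ⁅c, u⁆ * ⁅c, v⁆)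
        + u * ⁅c, ⁅c, v⁆⁆ := by
      simp only [Ring.lie_def]; noncomm_ring
    rwa [h, h, h, zero_mul, mul_zero, add_zero, zero_add, eq_comm] at e
  refine mem_center_iff_lie_eq_zero.mpr fun w => (hR ⁅c, w⁆ ⁅c, w⁆ fun z => ?_).elim id id
  calc ⁅c, w⁆ * z * ⁅c, w⁆ = ⁅c, w⁆ * ⁅c, z * w⁆ - ⁅c, w⁆ * ⁅c, z⁆ * w := by
        simp only [Ring.lie_def]; noncomm_ring
    _ = 0 := by rw [hmul, hmul, zero_mul, sub_zero]

theorem IsPrimeRing.lie_lie_eq_zero_of_lie_lie_mem_center (hR : IsPrimeRing R) {c : R}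
    (h : ∀ u : R, ⁅c, ⁅c, u⁆⁆ ∈ Set.center R) (hc : c ∉ Set.center R) (u : R) :
    ⁅c, ⁅c, u⁆⁆ = 0 := by
  obtain ⟨w, hw⟩ : ∃ w : R, ⁅c, w⁆ ≠ 0 := by simpa [mem_center_iff_lie_eq_zero] using hc
  by_contra hD
  refine hw (hR.eq_zero_of_mem_center_of_mul_eq_zero (h u) hD ?_)
  have e : ⁅c, ⁅c, u * c⁆⁆ = ⁅c, ⁅c, u⁆⁆ * c := by simp only [Ring.lie_def]; noncomm_ring
  have hDc := Semigroup.mem_center_iff.mp (e ▸ h (u * c)) w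
  calc ⁅c, ⁅c, u⁆⁆ * ⁅c, w⁆ = ⁅c, ⁅c, u⁆⁆ * c * w - ⁅c, ⁅c, u⁆⁆ * w * c := by
        simp only [Ring.lie_def]; noncomm_ring
    _ = 0 := by
        rw [← hDc, ← Semigroup.mem_center_iff.mp (h u) w, mul_assoc, sub_self]

end PrimeRing

section Involution

variable {R : Type*} [NonUnitalRing R] [StarRing R]

def skew (x : R) : R := x - star x

def sym (x : R) : R := x + star x

theorem star_skew (x : R) : star (skew x) = -skew x := by
  simp only [skew, star_sub, star_star, neg_sub]

theorem star_sym (x : R) : star (sym x) = sym x := by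
  simp only [sym, star_add, star_star, add_comm]

theorem add_self_eq_sym_add_skew (x : R) : x + x = sym x + skew x := by
  simp only [sym, skew]; noncomm_ring

theorem lie_sub_star_lie_skew (x y : R) : ⁅x, skew y⁆ - star ⁅x, skew y⁆ = ⁅skew x, skew y⁆ := by
  simp only [Ring.lie_def, skew, star_sub, star_mul, star_star]; noncomm_ring

theorem lie_sub_star_lie_sym (x y : R) : ⁅x, sym y⁆ - star ⁅x, sym y⁆ = ⁅sym x, sym y⁆ := by
  simp only [Ring.lie_def, sym, star_sub, star_add, star_mul, star_star]; noncomm_ring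

theorem skew_mul_skew_mem_center_of_lie_skew_eq_zero (h2 : ∀ w : R, w + w = 0 → w = 0)
    (hK : ∀ u v : R, ⁅skew u, skew v⁆ = 0) (x y : R) :
    skew x * skew y ∈ Set.center R := by
  -- `skew (k * h) = k * h + h * k` for `k` skew and `h` symmetric
  have anti (u v r : R) : skew u * ⁅skew v, sym r⁆ + ⁅skew v, sym r⁆ * skew u = 0 := by
    have e : ⁅skew v, skew (skew u * sym r)⁆ = skew u * ⁅skew v, sym r⁆ + ⁅skew v, sym r⁆ * skew u
        + ⁅skew v, skew u⁆ * sym r + sym r * ⁅skew v, skew u⁆ := by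
      simp only [Ring.lie_def, skew, sym, star_mul, star_sub, star_add, star_star]; noncomm_ring
    rwa [hK, hK, zero_mul, mul_zero, add_zero, add_zero, eq_comm] at e
  have hsym (r : R) : ⁅skew x * skew y, sym r⁆ = 0 := h2 _ <| by
    calc ⁅skew x * skew y, sym r⁆ + ⁅skew x * skew y, sym r⁆
        = ⁅skew x * skew y, sym r⁆ + ⁅skew y * skew x, sym r⁆ := by
          rw [← sub_eq_zero.mp (hK y x)]
      _ = (skew x * ⁅skew y, sym r⁆ + ⁅skew y, sym r⁆ * skew x)
          + (skew y * ⁅skew x, sym r⁆ + ⁅skew x, sym r⁆ * skew y) := by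
          simp only [Ring.lie_def]; noncomm_ring
      _ = 0 := by rw [anti, anti, add_zero]
  have hskew (r : R) : ⁅skew x * skew y, skew r⁆ = 0 := by
    have e : ⁅skew x * skew y, skew r⁆ = skew x * ⁅skew y, skew r⁆ + ⁅skew x, skew r⁆ * skew y := by
      simp only [Ring.lie_def]; noncomm_ring
    rw [e, hK, hK, mul_zero, zero_mul, add_zero]
  refine mem_center_iff_lie_eq_zero.mpr fun r => h2 _ ?_
  have e : ⁅skew x * skew y, r⁆ + ⁅skew x * skew y, r⁆
      = ⁅skew x * skew y, sym r⁆ + ⁅skew x * skew y, skew r⁆ := by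
    simp only [Ring.lie_def, sym, skew]; noncomm_ring
  rw [e, hsym, hskew, add_zero]

theorem IsPrimeRing.lie_mem_center_of_lie_skew_mem_center (hR : IsPrimeRing R)
    (h2 : ∀ w : R, w + w = 0 → w = 0) (hK : ∀ u v : R, ⁅skew u, skew v⁆ ∈ Set.center R)
    {x y : R} (hne : ⁅skew x, skew y⁆ ≠ 0) (u v : R) : ⁅u, v⁆ ∈ Set.center R := by
  set z := ⁅skew x, skew y⁆
  have hz : z ∈ Set.center R := hK x y
  have hzz : z * z ≠ 0 := fun h => hne (hR.eq_zero_of_mem_center_of_mul_self_eq_zero hz h)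
  have skew_mul (w : R) : skew (z * w) = z * sym w := by
    have hstar : star z = -z := by
      simp only [z, Ring.lie_def, star_sub, star_mul, star_skew]; noncomm_ring
    rw [skew, sym, star_mul, hstar, mul_add, ← Semigroup.mem_center_iff.mp hz (star w)]
    noncomm_ring
  have hHK (w v : R) : ⁅sym w, skew v⁆ ∈ Set.center R := by
    refine hR.mem_center_of_mul_mem_center hz hne ?_
    rw [← center_mul_lie hz, ← skew_mul]
    exact hK _ _
  have hHH (w v : R) : ⁅sym w, sym v⁆ ∈ Set.center R := by
    refine hR.mem_center_of_mul_mem_center (Set.mul_mem_center hz hz) hzz ?_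
    rw [mul_assoc, ← center_mul_lie hz, ← lie_center_mul hz, ← skew_mul, ← skew_mul]
    exact hK _ _
  refine mem_center_of_add_self_mem_center h2 (mem_center_of_add_self_mem_center h2 ?_)
  have e : ⁅u, v⁆ + ⁅u, v⁆ + (⁅u, v⁆ + ⁅u, v⁆)
      = ⁅sym u, sym v⁆ + ⁅sym u, skew v⁆ + (-⁅sym v, skew u⁆ + ⁅skew u, skew v⁆) := by
    simp only [Ring.lie_def, sym, skew]; noncomm_ring
  rw [e]
  exact Set.add_mem_center (Set.add_mem_center (hHH u v) (hHK u v))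
    (Set.add_mem_center (Set.neg_mem_center (hHK v u)) (hK u v))

theorem IsPrimeRing.skew_mul_skew_mem_center_of_lie_skew_mem_center (hR : IsPrimeRing R)
    (h2 : ∀ w : R, w + w = 0 → w = 0) (hK : ∀ u v : R, ⁅skew u, skew v⁆ ∈ Set.center R)
    (x y : R) : skew x * skew y ∈ Set.center R := by
  by_cases h0 : ∀ u v : R, ⁅skew u, skew v⁆ = 0
  · exact skew_mul_skew_mem_center_of_lie_skew_eq_zero h2 h0 x y
  push Not at h0
  obtain ⟨u, v, huv⟩ := h0
  have hcomm :=
    hR.lie_eq_zero_of_lie_mem_center (hR.lie_mem_center_of_lie_skew_mem_center h2 hK huv)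
  exact mem_center_iff_lie_eq_zero.mpr (hcomm _)

def CommutesWithSkewCommutators (c : R) : Prop :=
  ∀ x y : R, Commute c (⁅x, y⁆ - star ⁅x, y⁆)

namespace CommutesWithSkewCommutators

variable {c d : R}

theorem star (hc : CommutesWithSkewCommutators c) : CommutesWithSkewCommutators (star c) :=
  fun x y => by
    have h := (hc x y).star_star
    rwa [star_sub, star_star, ← neg_sub, Commute.neg_right_iff] at h

theorem add (hc : CommutesWithSkewCommutators c) (hd : CommutesWithSkewCommutators d) :
    CommutesWithSkewCommutators (c + d) :=
  fun x y => (hc x y).add_left (hd x y)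

theorem sub (hc : CommutesWithSkewCommutators c) (hd : CommutesWithSkewCommutators d) :
    CommutesWithSkewCommutators (c - d) :=
  fun x y => (hc x y).sub_left (hd x y)

theorem lie_lie_skew (hc : CommutesWithSkewCommutators c) (x y : R) :
    ⁅c, ⁅skew x, skew y⁆⁆ = 0 := by
  rw [← lie_sub_star_lie_skew]; exact (hc _ _).lie_eq

theorem lie_lie_sym (hc : CommutesWithSkewCommutators c) (x y : R) :
    ⁅c, ⁅sym x, sym y⁆⁆ = 0 := by
  rw [← lie_sub_star_lie_sym]; exact (hc _ _).lie_eq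

theorem lie_lie_sym_eq_zero_of_isSelfAdjoint (h2 : ∀ w : R, w + w = 0 → w = 0)
    (hc : CommutesWithSkewCommutators c) (hself : IsSelfAdjoint c) (w : R) :
    ⁅c, ⁅c, sym w⁆⁆ = 0 := h2 _ <| by
  have e : ⁅c, ⁅c, sym w⁆⁆ + ⁅c, ⁅c, sym w⁆⁆ = ⁅c, ⁅sym c, sym w⁆⁆ := by
    simp only [sym, hself.star_eq, Ring.lie_def]; noncomm_ring
  rw [e, hc.lie_lie_sym]

theorem lie_lie_lie_lie_skew_eq_zero_of_isSelfAdjoint (h2 : ∀ w : R, w + w = 0 → w = 0)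
    (hc : CommutesWithSkewCommutators c) (hself : IsSelfAdjoint c) (z r : R) :
    ⁅c, ⁅⁅c, ⁅c, skew z⁆⁆, r⁆⁆ = 0 := by
  have hHK (w z : R) : ⁅⁅c, sym w⁆, ⁅c, skew z⁆⁆ = 0 := by
    have h := hc.lie_lie_skew (c * sym w) z
    have e : skew (c * sym w) = ⁅c, sym w⁆ := by
      simp only [skew, sym, Ring.lie_def, star_mul, star_add, star_star, hself.star_eq]
      noncomm_ring
    calc ⁅⁅c, sym w⁆, ⁅c, skew z⁆⁆ = ⁅c, ⁅⁅c, sym w⁆, skew z⁆⁆ - ⁅⁅c, ⁅c, sym w⁆⁆, skew z⁆ := by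
          simp only [Ring.lie_def]; noncomm_ring
      _ = 0 := by
          rw [← e, h, e, hc.lie_lie_sym_eq_zero_of_isSelfAdjoint h2 hself]; simp [Ring.lie_def]
  have hsym (w : R) : ⁅⁅c, ⁅c, skew z⁆⁆, sym w⁆ = 0 := by
    have h := hc.lie_lie_sym (c * skew z) w
    have e : sym (c * skew z) = ⁅c, skew z⁆ := by
      simp only [skew, sym, Ring.lie_def, star_mul, star_sub, star_star, hself.star_eq]
      noncomm_ring
    rw [e] at h
    calc ⁅⁅c, ⁅c, skew z⁆⁆, sym w⁆ = ⁅c, ⁅⁅c, skew z⁆, sym w⁆⁆ + ⁅⁅c, sym w⁆, ⁅c, skew z⁆⁆ := by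
          simp only [Ring.lie_def]; noncomm_ring
      _ = 0 := by rw [h, hHK, add_zero]
  have hskew : ⁅c, ⁅⁅c, ⁅c, skew z⁆⁆, skew r⁆⁆ = 0 := by
    have h := hc.lie_lie_skew (c * ⁅c, skew z⁆) r
    have e : skew (c * ⁅c, skew z⁆) = ⁅c, ⁅c, skew z⁆⁆ := by
      simp only [skew, Ring.lie_def, star_mul, star_sub, star_star, hself.star_eq]; noncomm_ring
    rwa [e] at h
  refine h2 _ ?_
  calc ⁅c, ⁅⁅c, ⁅c, skew z⁆⁆, r⁆⁆ + ⁅c, ⁅⁅c, ⁅c, skew z⁆⁆, r⁆⁆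
      = ⁅c, ⁅⁅c, ⁅c, skew z⁆⁆, sym r⁆⁆ + ⁅c, ⁅⁅c, ⁅c, skew z⁆⁆, skew r⁆⁆ := by
        simp only [Ring.lie_def, sym, skew]; noncomm_ring
    _ = 0 := by
        rw [hsym, hskew]; simp [Ring.lie_def]

end CommutesWithSkewCommutators

theorem IsPrimeRing.mem_center_of_isSelfAdjoint (hR : IsPrimeRing R)
    (h2 : ∀ w : R, w + w = 0 → w = 0) {c : R} (hc : CommutesWithSkewCommutators c)
    (hself : IsSelfAdjoint c) : c ∈ Set.center R := by
  by_contra hnc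
  have hD (u : R) : ⁅c, ⁅c, u⁆⁆ ∈ Set.center R := by
    refine mem_center_of_add_self_mem_center h2 ?_
    have e : ⁅c, ⁅c, u⁆⁆ + ⁅c, ⁅c, u⁆⁆ = ⁅c, ⁅c, sym u⁆⁆ + ⁅c, ⁅c, skew u⁆⁆ := by
      simp only [Ring.lie_def, sym, skew]; noncomm_ring
    rw [e, hc.lie_lie_sym_eq_zero_of_isSelfAdjoint h2 hself, zero_add]
    exact (hR.mem_center_or_mem_center_of_lie_lie_eq_zero h2
      (hc.lie_lie_lie_lie_skew_eq_zero_of_isSelfAdjoint h2 hself u)).resolve_left hnc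
  exact hnc (hR.mem_center_of_lie_lie_eq_zero h2 (hR.lie_lie_eq_zero_of_lie_lie_mem_center hD hnc))

theorem IsPrimeRing.eq_zero_of_mul_skew_mul_eq_zero (hR : IsPrimeRing R)
    (h2 : ∀ w : R, w + w = 0 → w = 0) {s : R} (hs : s ∈ skewAdjoint R)
    (h : ∀ z : R, s * skew z * s = 0) : s = 0 := by
  have hstar : star s = -s := skewAdjoint.mem_iff.mp hs
  have hself (w : R) : s * star w * s = s * w * s := by
    have e := h w
    simp only [skew, mul_sub, sub_mul, sub_eq_zero] at e
    exact e.symm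
  have hanti (a c : R) : s * a * s * c * s + s * c * s * a * s = 0 := by
    have e := h (a * s * c)
    simp only [skew, star_mul, hstar] at e
    linear_combination (norm := noncomm_ring) e - hself c * (star a * s) - (s * c) * hself a
  have hsq (a z : R) : s * a * s * z * (s * a * s) = 0 := h2 _ <| by
    have e (a z c : R) : s * a * s * z * (s * c * s) + s * z * s * c * (s * a * s) = 0 := by
      linear_combination (norm := noncomm_ring) hanti a (z * s * c)
    linear_combination (norm := noncomm_ring) e a z a - e z a a + e a a z
  have hsas (a : R) : s * a * s = 0 := (hR _ _ (hsq a)).elim id id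
  exact (hR s s hsas).elim id id

theorem IsPrimeRing.lie_skew_mem_center_of_lie_skew_eq_zero (hR : IsPrimeRing R)
    (h2 : ∀ w : R, w + w = 0 → w = 0) {s : R} (hs : ∀ z : R, ⁅s, skew z⁆ = 0)
    (hsc : s ∉ Set.center R) (u v : R) : ⁅skew u, skew v⁆ ∈ Set.center R := by
  have anti (w z : R) : ⁅s, w⁆ * skew z + skew z * ⁅s, star w⁆ = 0 := by
    have e := hs (w * skew z)
    have e' := hs z
    simp only [skew, Ring.lie_def, star_mul, star_sub, star_star] at e e' ⊢
    linear_combination (norm := noncomm_ring) e - w * e' - e' * star w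
  have hcomm (a b w : R) : ⁅skew a * skew b, ⁅s, w⁆⁆ = 0 := by
    have e := anti (star w) b
    rw [star_star] at e
    rw [Ring.lie_def (skew a * skew b)]
    linear_combination (norm := noncomm_ring) skew a * e - anti w a * skew b
  refine (hR.mem_center_or_mem_center_of_lie_lie_eq_zero h2 (q := s) fun w => ?_).resolve_right hsc
  have e : ⁅⁅skew u, skew v⁆, ⁅s, w⁆⁆ = ⁅skew u * skew v, ⁅s, w⁆⁆ - ⁅skew v * skew u, ⁅s, w⁆⁆ := by
    simp only [Ring.lie_def]; noncomm_ring
  rw [e, hcomm, hcomm, sub_zero]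

theorem IsPrimeRing.lie_skew_mem_center_of_mem_skewAdjoint (hR : IsPrimeRing R)
    (h2 : ∀ w : R, w + w = 0 → w = 0) {s : R} (hc : CommutesWithSkewCommutators s)
    (hs : s ∈ skewAdjoint R) (hsc : s ∉ Set.center R) (u v : R) :
    ⁅skew u, skew v⁆ ∈ Set.center R := by
  have hstar : star s = -s := skewAdjoint.mem_iff.mp hs
  have hss (z : R) : ⁅s, ⁅s, skew z⁆⁆ = 0 := h2 _ <| by
    have e := hc.lie_lie_skew s z
    rw [skew, hstar, sub_neg_eq_add] at e
    simp only [Ring.lie_def] at e ⊢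
    linear_combination (norm := noncomm_ring) e
  have hsq (y : R) : ⁅s * s, ⁅s, y⁆⁆ = 0 := by
    -- `[s, s y] - [s, s y]* = s [s, y] + [s, y*] s`
    have e := (hc s (s * y)).lie_eq
    have e' := hss y
    simp only [Ring.lie_def, skew, star_sub, star_mul, hstar] at e e' ⊢
    linear_combination (norm := noncomm_ring) e + e' * s
  have hs2 : s * s ∈ Set.center R :=
    (hR.mem_center_or_mem_center_of_lie_lie_eq_zero h2 hsq).resolve_right hsc
  have hsks (z : R) : s * skew z * s = s * s * skew z := by
    have e := hss z
    have e' := mem_center_iff_lie_eq_zero.mp hs2 (skew z)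
    simp only [Ring.lie_def] at e e'
    refine (sub_eq_zero.mp (h2 _ ?_)).symm
    linear_combination (norm := noncomm_ring) e + e'
  by_cases hsq0 : s * s = 0
  · have hs0 : s = 0 := hR.eq_zero_of_mul_skew_mul_eq_zero h2 hs fun z => by
      rw [hsks, hsq0, zero_mul]
    exact absurd (hs0 ▸ Set.zero_mem_center) hsc
  refine hR.lie_skew_mem_center_of_lie_skew_eq_zero h2 (fun z => ?_) hsc u v
  refine hR.eq_zero_of_mem_center_of_mul_eq_zero hs2 hsq0 ?_
  calc s * s * ⁅s, skew z⁆ = s * (s * s * skew z - s * skew z * s) := by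
        simp only [Ring.lie_def]; noncomm_ring
    _ = 0 := by rw [hsks, sub_self, mul_zero]

end Involution

/-- Lemma: Let `R` be a prime ring with involution `*`, `char R ≠ 2`, and `b ∈ R ∖ Z(R)`.
If `[b, [x, y] - [x, y]*] = 0` for all `x, y ∈ R`, then `K₀(R)² ⊆ Z(R)`. -/
theorem stmt_18 {R : Type*} [NonUnitalRing R] [StarRing R]
    (hprime : ∀ a b : R, (∀ x : R, a * x * b = 0) → a = 0 ∨ b = 0)
    (hchar : ∃ x : R, x + x ≠ 0)
    (b : R) (hb : ∃ r : R, b * r ≠ r * b)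
    (hcomm : ∀ x y : R,
      b * ((x * y - y * x) - star (x * y - y * x)) =
        ((x * y - y * x) - star (x * y - y * x)) * b) :
    ∀ x y r : R, ((x - star x) * (y - star y)) * r = r * ((x - star x) * (y - star y)) := by
  have hR : IsPrimeRing R := hprime
  have h2 (w : R) : w + w = 0 → w = 0 := hR.eq_zero_of_add_self_eq_zero hchar
  have hbc : CommutesWithSkewCommutators b := hcomm
  have hbnc : b ∉ Set.center R := fun h =>
    hb.elim fun r hr => hr (Semigroup.mem_center_iff.mp h r).symm
  have hsym : sym b ∈ Set.center R :=
    hR.mem_center_of_isSelfAdjoint h2 (hbc.add hbc.star) (star_sym b)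
  have hskew : skew b ∉ Set.center R := fun h => hbnc <| mem_center_of_add_self_mem_center h2 <|
    add_self_eq_sym_add_skew b ▸ Set.add_mem_center hsym h
  have hK := hR.lie_skew_mem_center_of_mem_skewAdjoint h2 (hbc.sub hbc.star)
    (skewAdjoint.mem_iff.mpr (star_skew b)) hskew
  intro x y r
  exact (Semigroup.mem_center_iff.mp
    (hR.skew_mul_skew_mem_center_of_lie_skew_mem_center h2 hK x y) r).symm
end

section
/- Let R be a noncommutative prime ring with involution *, let I be a nonzero two-sided ideal of R, and let a ∈ R. If a·(x + x*) = 0 for all x ∈ I, then a = 0. -/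
/-- Lemma: Let `R` be a noncommutative prime ring with involution `*`, and `I` a nonzero
two-sided ideal of `R`. If `a · T(I) = 0` where `a ∈ R`, then `a = 0`. -/
theorem stmt_19 {R : Type*} [NonUnitalRing R] [StarRing R]
    (hprime : ∀ a b : R, (∀ x : R, a * x * b = 0) → a = 0 ∨ b = 0)
    (hnoncomm : ∃ x y : R, x * y ≠ y * x)
    (I : AddSubgroup R)
    (hI_left : ∀ r : R, ∀ x ∈ I, r * x ∈ I)
    (hI_right : ∀ r : R, ∀ x ∈ I, x * r ∈ I)
    (hI_ne : ∃ x ∈ I, x ≠ 0)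
    (a : R) (h : ∀ x ∈ I, a * (x + star x) = 0) :
    a = 0 := by
  -- h gives: a * star y = - (a * y) for y ∈ I
  have hneg : ∀ y ∈ I, a * star y = -(a * y) := by
    intro y hy
    have := h y hy
    rw [mul_add] at this
    linear_combination (norm := noncomm_ring) this
  -- Step 1: ∀ r, x ∈ I, a * r * (x + star x) = 0
  have key : ∀ r : R, ∀ x ∈ I, a * r * (x + star x) = 0 := by
    have key' : ∀ r : R, ∀ x ∈ I, a * star r * (x + star x) = 0 := by
      intro r x hx
      -- (1): y = x * r
      have h1 : a * (x * r) = -(a * (star r * star x)) := by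
        have := hneg (x * r) (hI_right r x hx)
        rw [star_mul] at this
        linear_combination (norm := noncomm_ring) this
      -- (2): y = star r * x
      have h2 : a * (star x * r) = -(a * (star r * x)) := by
        have := hneg (star r * x) (hI_left (star r) x hx)
        rw [star_mul, star_star] at this
        linear_combination (norm := noncomm_ring) this
      -- (3): y = x
      have h3 : a * star x = -(a * x) := hneg x hx
      have h4 : a * (star x * r) = -(a * x * r) := by
        rw [← mul_assoc, h3]; noncomm_ring
      -- from (2),(3): a * star r * x = a * x * r
      -- from (1): a * x * r = -(a * star r * star x)
      calc a * star r * (x + star x)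
          = a * (star r * x) + a * (star r * star x) := by noncomm_ring
        _ = 0 := by
            have e1 : a * (star r * x) = a * x * r := by
              have := h2.symm.trans h4
              linear_combination (norm := noncomm_ring) -this
            have e2 : a * (star r * star x) = -(a * x * r) := by
              rw [← mul_assoc] at h1
              linear_combination (norm := noncomm_ring) h1
            rw [e1, e2]; noncomm_ring
    intro r x hx
    have := key' (star r) x hx
    rwa [star_star] at this
  by_contra ha
  -- Then every x ∈ I satisfies x + star x = 0
  have hskew : ∀ x ∈ I, star x = -x := by
    intro x hx
    rcases hprime a (x + star x) (fun r => key r x hx) with h' | h'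
    · exact absurd h' ha
    · linear_combination (norm := noncomm_ring) h'
  -- identity: star t * x = x * t for x ∈ I
  have hid : ∀ t : R, ∀ x ∈ I, star t * x = x * t := by
    intro t x hx
    have := hskew (x * t) (hI_right t x hx)
    rw [star_mul, hskew x hx] at this
    linear_combination (norm := noncomm_ring) -this
  -- x * r * s = x * s * r for x ∈ I
  have hcomm : ∀ x ∈ I, ∀ r s : R, x * r * s = x * s * r := by
    intro x hx r s
    have e1 : star (r * s) * x = x * (r * s) := hid (r * s) x hx
    rw [star_mul] at e1
    have e2 : star s * (star r * x) = x * s * r := by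
      rw [hid r x hx, ← mul_assoc, hid s x hx]
    rw [mul_assoc] at e1
    rw [e2] at e1
    rw [mul_assoc]; exact e1.symm
  obtain ⟨x₀, hx₀, hx₀ne⟩ := hI_ne
  obtain ⟨r, s, hrs⟩ := hnoncomm
  apply hrs
  have : ∀ t : R, x₀ * t * (r * s - s * r) = 0 := by
    intro t
    have := hcomm (x₀ * t) (hI_right t x₀ hx₀) r s
    rw [mul_sub]
    linear_combination (norm := noncomm_ring) this
  rcases hprime x₀ (r * s - s * r) this with h' | h'
  · exact absurd h' hx₀ne
  · linear_combination (norm := noncomm_ring) h'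
end
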